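/- arXiv:2311.11709 — 5 statements merged into one kernel-verified Lean document; each statement's English description precedes it below -/
import Mathlib

section
/- (No-limiter homogenized fluxes.) Suppose A(t) = min(f⁰_max, fʲ_max) for t ∈ Iʲ (j = 1,2), where I¹ ∩ [0,1] and I² ∩ [0,1] are single intervals of lengths θ¹ and θ² = 1 − θ¹, with θ² ≥ λ̄²/λ̄⁰ where λ̄ᵏ = θᵏ min(f⁰_max, fᵏ_max) and λ̄⁰ = λ̄¹ + λ̄². Then the homogenized fluxes satisfy, for all λ ∈ [0, λ̄⁰]: λ̂¹(λ) = max(θ¹λ, λ − λ̄²) and λ̂²(λ) = min(θ²λ, λ̄²), where λ̂ᵏ(λ) = ∫₀¹ F_λ(t) 𝟙_{Iᵏ}(t) dt and F_λ is the junction flux associated with A and λ. -/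
open MeasureTheory intervalIntegral

noncomputable def Af (a b θ1 : ℝ) : ℝ → ℝ := fun t => if Int.fract t < θ1 then a else b

noncomputable def Gf (a b θ1 : ℝ) : ℝ → ℝ := fun t =>
  (θ1 * a + (1 - θ1) * b) * (⌊t⌋ : ℝ) + a * min (Int.fract t) θ1 + b * max (Int.fract t - θ1) 0

lemma measurable_Af (a b θ1 : ℝ) : Measurable (Af a b θ1) := by
  apply Measurable.ite _ measurable_const measurable_const
  exact measurableSet_lt measurable_fract measurable_const

lemma bdd_Af (a b θ1 : ℝ) (t : ℝ) : |Af a b θ1 t| ≤ max |a| |b| := by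
  unfold Af; split
  · exact le_max_left _ _
  · exact le_max_right _ _

lemma intInt_of_bdd {f : ℝ → ℝ} (hm : Measurable f) (C : ℝ) (hC : ∀ x, |f x| ≤ C) (u v : ℝ) :
    IntervalIntegrable f volume u v := by
  rw [intervalIntegrable_iff]
  refine Integrable.mono' (g := fun _ => C) ((integrableOn_const_iff (C := C)).mpr (Or.inr measure_Ioc_lt_top))
    hm.aestronglyMeasurable.restrict (ae_of_all _ fun x => ?_)
  simpa using hC x

lemma intInt_Af (a b θ1 : ℝ) (u v : ℝ) : IntervalIntegrable (Af a b θ1) volume u v :=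
  intInt_of_bdd (measurable_Af a b θ1) _ (bdd_Af a b θ1) u v

lemma periodic_Af (a b θ1 : ℝ) : Function.Periodic (Af a b θ1) 1 := by
  intro t; unfold Af; rw [Int.fract_add_one]

lemma integral_congr_off {f g : ℝ → ℝ} {u v : ℝ} {S : Set ℝ}
    (hS : S.Countable) (h : ∀ x ∈ Set.uIoc u v, x ∉ S → f x = g x) :
    ∫ x in u..v, f x = ∫ x in u..v, g x := by
  apply intervalIntegral.integral_congr_ae
  have h0 : ∀ᵐ x : ℝ, x ∉ S := by
    rw [ae_iff]
    simpa using hS.measure_zero volume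
  filter_upwards [h0] with x hx hmem
  exact h x hmem hx

lemma base_Af {a b θ1 θ2 : ℝ} (hθ1 : 0 < θ1) (hθ2 : 0 < θ2) (hsum : θ1 + θ2 = 1)
    {s : ℝ} (hs0 : 0 ≤ s) (hs1 : s ≤ 1) :
    ∫ x in (0:ℝ)..s, Af a b θ1 x = a * min s θ1 + b * max (s - θ1) 0 := by
  have hθ1lt : θ1 < 1 := by linarith
  have hbase1 : ∀ s' : ℝ, 0 ≤ s' → s' ≤ θ1 →
      ∫ x in (0:ℝ)..s', Af a b θ1 x = a * s' := by
    intro s' h0 h1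
    have : ∫ x in (0:ℝ)..s', Af a b θ1 x = ∫ x in (0:ℝ)..s', a := by
      apply integral_congr_off (S := {θ1}) (Set.countable_singleton _)
      intro x hx hxS
      rw [Set.uIoc_of_le h0] at hx
      have hx1 : x < θ1 := lt_of_le_of_ne (hx.2.trans h1) (by simpa using hxS)
      have : Int.fract x = x := Int.fract_eq_self.mpr ⟨le_of_lt hx.1, lt_trans hx1 hθ1lt⟩
      simp [Af, this, hx1]
    rw [this, intervalIntegral.integral_const, smul_eq_mul, sub_zero, mul_comm]
  rcases le_or_gt s θ1 with h | h
  · rw [hbase1 s hs0 h, min_eq_left h, max_eq_right (by linarith), mul_zero, add_zero]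
  · have hsplit : ∫ x in (0:ℝ)..s, Af a b θ1 x =
        (∫ x in (0:ℝ)..θ1, Af a b θ1 x) + ∫ x in θ1..s, Af a b θ1 x :=
      (intervalIntegral.integral_add_adjacent_intervals (intInt_Af a b θ1 _ _)
        (intInt_Af a b θ1 _ _)).symm
    have h2 : ∫ x in θ1..s, Af a b θ1 x = b * (s - θ1) := by
      have : ∫ x in θ1..s, Af a b θ1 x = ∫ x in θ1..s, b := by
        apply integral_congr_off (S := {1}) (Set.countable_singleton _)
        intro x hx hxS
        rw [Set.uIoc_of_le h.le] at hx
        have hx1 : x < 1 := lt_of_le_of_ne (hx.2.trans hs1) (by simpa using hxS)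
        have : Int.fract x = x := Int.fract_eq_self.mpr ⟨le_of_lt (hθ1.trans hx.1), hx1⟩
        simp [Af, this, not_lt.mpr hx.1.le]
      rw [this, intervalIntegral.integral_const, smul_eq_mul, mul_comm]
    rw [hsplit, hbase1 θ1 hθ1.le le_rfl, h2, min_eq_right h.le,
      max_eq_left (by linarith)]

lemma intA {a b θ1 θ2 : ℝ} (hθ1 : 0 < θ1) (hθ2 : 0 < θ2) (hsum : θ1 + θ2 = 1) (t : ℝ) :
    ∫ x in (0:ℝ)..t, Af a b θ1 x = Gf a b θ1 t := by
  have hθ1lt : θ1 < 1 := by linarith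
  set s := Int.fract t with hsdef
  have hs0 : 0 ≤ s := Int.fract_nonneg t
  have hs1 : s < 1 := Int.fract_lt_one t
  have hts : t = s + (⌊t⌋ : ℤ) • (1:ℝ) := by
    rw [hsdef, Int.fract, zsmul_eq_mul, mul_one]; ring
  have hsplit : ∫ x in (0:ℝ)..t, Af a b θ1 x =
      (∫ x in (0:ℝ)..s, Af a b θ1 x) + ∫ x in s..t, Af a b θ1 x :=
    (intervalIntegral.integral_add_adjacent_intervals (intInt_Af a b θ1 _ _)
      (intInt_Af a b θ1 _ _)).symm
  have hper : ∫ x in s..t, Af a b θ1 x = (⌊t⌋ : ℝ) * ∫ x in (0:ℝ)..1, Af a b θ1 x := by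
    have h1 : ∫ x in s..t, Af a b θ1 x = ∫ x in s..s + (⌊t⌋ : ℤ) • (1:ℝ), Af a b θ1 x := by
      rw [← hts]
    rw [h1, (periodic_Af a b θ1).intervalIntegral_add_zsmul_eq ⌊t⌋ s (intInt_Af a b θ1),
      (periodic_Af a b θ1).intervalIntegral_add_eq s 0, zsmul_eq_mul, zero_add]
  have hone : ∫ x in (0:ℝ)..1, Af a b θ1 x = θ1 * a + (1 - θ1) * b := by
    rw [base_Af hθ1 hθ2 hsum zero_le_one le_rfl, min_eq_right hθ1lt.le,
      max_eq_left (by linarith)]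
    ring
  rw [hsplit, hper, hone, base_Af hθ1 hθ2 hsum hs0 hs1.le, Gf]
  ring

lemma intA2 {a b θ1 θ2 : ℝ} (hθ1 : 0 < θ1) (hθ2 : 0 < θ2) (hsum : θ1 + θ2 = 1) (u v : ℝ) :
    ∫ x in u..v, Af a b θ1 x = Gf a b θ1 v - Gf a b θ1 u := by
  rw [← intervalIntegral.integral_interval_sub_left (intInt_Af a b θ1 0 v)
    (intInt_Af a b θ1 0 u), intA hθ1 hθ2 hsum (θ2 := θ2), intA hθ1 hθ2 hsum (θ2 := θ2)]

/-- Sufficiency, branch `λ ≤ b`. -/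
lemma suff_le {a b θ1 lam : ℝ} (hab : b ≤ a) (hlb : lam ≤ b)
    (t t1 : ℝ) (h : t1 < t) :
    lam * (t - t1) ≤ ∫ x in t1..t, Af a b θ1 x := by
  have h1 : ∫ x in t1..t, (b:ℝ) ≤ ∫ x in t1..t, Af a b θ1 x := by
    apply intervalIntegral.integral_mono_on h.le intervalIntegrable_const
      (intInt_Af a b θ1 _ _)
    intro x _
    unfold Af; split <;> [exact hab; exact le_rfl]
  calc lam * (t - t1) ≤ b * (t - t1) := by nlinarith
    _ ≤ ∫ x in t1..t, Af a b θ1 x := by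
        rwa [intervalIntegral.integral_const, smul_eq_mul, mul_comm] at h1

/-- Sufficiency, branch `b ≤ λ`, using `λ (fract t + θ2) ≤ fract t * a + θ2 * b`. -/
lemma suff_gt {a b θ1 θ2 lam : ℝ} (hθ1 : 0 < θ1) (hθ2 : 0 < θ2) (hsum : θ1 + θ2 = 1)
    (hab : b ≤ a) (hbl : b ≤ lam) (hl0 : lam ≤ θ1 * a + θ2 * b)
    {t : ℝ} (hst : Int.fract t ≤ θ1)
    (hs : lam * (Int.fract t + θ2) ≤ Int.fract t * a + θ2 * b)
    (t1 : ℝ) (h : t1 < t) :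
    lam * (t - t1) ≤ ∫ x in t1..t, Af a b θ1 x := by
  rw [intA2 hθ1 hθ2 hsum]
  set s := Int.fract t with hsdef
  set r := Int.fract t1 with hrdef
  have hla : lam ≤ a := by
    have ha' : (θ1 + θ2) * a = a := by rw [hsum, one_mul]
    nlinarith [mul_le_mul_of_nonneg_left hab hθ2.le]
  have hs0 : 0 ≤ s := Int.fract_nonneg t
  have hr0 : 0 ≤ r := Int.fract_nonneg t1
  have hr1 : r < 1 := Int.fract_lt_one t1
  have hGt : Gf a b θ1 t = (θ1 * a + (1 - θ1) * b) * (⌊t⌋ : ℝ) + a * s := by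
    rw [Gf]
    rw [min_eq_left hst, max_eq_right (by linarith : s - θ1 ≤ 0), mul_zero, add_zero]
  have hGt1 : Gf a b θ1 t1 = (θ1 * a + (1 - θ1) * b) * (⌊t1⌋ : ℝ) + a * min r θ1
      + b * max (r - θ1) 0 := by rw [Gf]
  have hfloor : ⌊t1⌋ ≤ ⌊t⌋ := Int.floor_le_floor h.le
  have ht1r : r + (⌊t1⌋ : ℝ) = t1 := Int.fract_add_floor t1
  have htr : s + (⌊t⌋ : ℝ) = t := Int.fract_add_floor t
  have hθ2' : (1 : ℝ) - θ1 = θ2 := by linarith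
  rw [hGt, hGt1, hθ2']
  have hd : t - t1 = (s - r) + ((⌊t⌋ : ℝ) - (⌊t1⌋ : ℝ)) := by linarith
  rw [hd]
  rcases eq_or_lt_of_le hfloor with heq | hlt
  · -- same block
    have heq' : (⌊t1⌋ : ℝ) = (⌊t⌋ : ℝ) := by exact_mod_cast heq
    have hrs : r < s := by linarith
    rw [min_eq_left (by linarith), max_eq_right (by linarith), mul_zero, add_zero, heq']
    nlinarith [mul_nonneg (by linarith : (0:ℝ) ≤ a - lam) (by linarith : (0:ℝ) ≤ s - r)]
  · -- earlier block
    have hmn : (⌊t1⌋ : ℝ) + 1 ≤ (⌊t⌋ : ℝ) := by exact_mod_cast hlt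
    have key : θ1 * (a - lam) + lam * r ≥ a * min r θ1 + b * max (r - θ1) 0 := by
      rcases le_or_gt r θ1 with hc | hc
      · rw [min_eq_left hc, max_eq_right (by linarith)]; nlinarith
      · rw [min_eq_right hc.le, max_eq_left (by linarith)]; nlinarith
    have hsa : s * (a - lam) ≥ θ2 * (lam - b) := by nlinarith
    nlinarith [mul_nonneg (by linarith : (0:ℝ) ≤ θ1 * a + θ2 * b - lam)
      (by linarith : (0:ℝ) ≤ (⌊t⌋ : ℝ) - (⌊t1⌋ : ℝ) - 1), key, hsa,
      (by rw [hsum, mul_one] : lam * (θ1 + θ2) = lam)]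

lemma nec1 {a b θ1 θ2 lam : ℝ} (hθ1 : 0 < θ1) (hθ2 : 0 < θ2) (hsum : θ1 + θ2 = 1)
    {t : ℝ} (ht0 : 0 < t) (ht1 : t < θ1)
    (hs : t * a + θ2 * b < lam * (t + θ2)) :
    ¬ (∀ t1 < t, lam * (t - t1) ≤ ∫ x in t1..t, Af a b θ1 x) := by
  intro hcon
  have hθ1lt : θ1 < 1 := by linarith
  have hw := hcon (-θ2) (by linarith)
  rw [intA2 hθ1 hθ2 hsum] at hw
  have hfl : ⌊(-θ2 : ℝ)⌋ = -1 := by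
    rw [Int.floor_eq_iff]; push_cast; constructor <;> linarith
  have hfr : Int.fract (-θ2 : ℝ) = θ1 := by
    rw [Int.fract, hfl]; push_cast; linarith
  have hfl2 : ⌊t⌋ = 0 := by
    rw [Int.floor_eq_iff]; push_cast; constructor <;> linarith
  have hfr2 : Int.fract t = t := Int.fract_eq_self.mpr ⟨ht0.le, by linarith⟩
  have hG1 : Gf a b θ1 (-θ2) = -(θ2 * b) := by
    have hh : (1:ℝ) - θ1 = θ2 := by linarith
    rw [Gf, hfl, hfr, min_self, max_eq_right (by linarith), mul_zero, add_zero, hh]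
    push_cast; ring
  have hG2 : Gf a b θ1 t = a * t := by
    rw [Gf, hfl2, hfr2, min_eq_left ht1.le, max_eq_right (by linarith), mul_zero,
      add_zero]
    push_cast; ring
  rw [hG1, hG2] at hw
  nlinarith

lemma nec2 {a b θ1 θ2 lam : ℝ} (hθ1 : 0 < θ1) (hθ2 : 0 < θ2) (hsum : θ1 + θ2 = 1)
    (hbl : b < lam) {t : ℝ} (ht0 : θ1 < t) (ht1 : t < 1) :
    ¬ (∀ t1 < t, lam * (t - t1) ≤ ∫ x in t1..t, Af a b θ1 x) := by
  intro hcon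
  have hw := hcon θ1 ht0
  rw [intA2 hθ1 hθ2 hsum] at hw
  have hfr1 : Int.fract θ1 = θ1 := Int.fract_eq_self.mpr ⟨hθ1.le, by linarith⟩
  have hfr2 : Int.fract t = t := Int.fract_eq_self.mpr ⟨by linarith, ht1⟩
  have hfl1 : ⌊θ1⌋ = 0 := by
    rw [Int.floor_eq_iff]; push_cast; constructor <;> linarith
  have hfl2 : ⌊t⌋ = 0 := by
    rw [Int.floor_eq_iff]; push_cast; constructor <;> linarith
  have hG1 : Gf a b θ1 θ1 = a * θ1 := by
    rw [Gf, hfr1, hfl1, min_self, max_eq_right (by linarith), mul_zero, add_zero]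
    push_cast; ring
  have hG2 : Gf a b θ1 t = a * θ1 + b * (t - θ1) := by
    rw [Gf, hfr2, hfl2, min_eq_right ht0.le, max_eq_left (by linarith)]
    push_cast; ring
  rw [hG1, hG2] at hw
  nlinarith

lemma step_meas (c p q : ℝ) : Measurable (fun x : ℝ => if x < c then p else q) := by
  apply Measurable.ite _ measurable_const measurable_const
  exact measurableSet_lt measurable_id measurable_const

lemma step_int {c d : ℝ} (p q : ℝ) (h0 : 0 ≤ c) (hc : c ≤ d) :
    ∫ x in (0:ℝ)..d, (if x < c then p else q) = p * c + q * (d - c) := by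
  have hii : ∀ u v : ℝ, IntervalIntegrable (fun x : ℝ => if x < c then p else q) volume u v := by
    intro u v
    apply intInt_of_bdd (step_meas c p q) (max |p| |q|)
    intro x; split_ifs
    · exact le_max_left _ _
    · exact le_max_right _ _
  have hsplit := (intervalIntegral.integral_add_adjacent_intervals (hii 0 c) (hii c d)).symm
  have h1 : ∫ x in (0:ℝ)..c, (if x < c then p else q) = p * c := by
    rw [show ∫ x in (0:ℝ)..c, (if x < c then p else q) = ∫ x in (0:ℝ)..c, p from
      integral_congr_off (S := {c}) (Set.countable_singleton _) ?_,
      intervalIntegral.integral_const, smul_eq_mul, sub_zero, mul_comm]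
    intro x hx hxS
    rw [Set.uIoc_of_le h0] at hx
    rw [if_pos (lt_of_le_of_ne hx.2 (by simpa using hxS))]
  have h2 : ∫ x in c..d, (if x < c then p else q) = q * (d - c) := by
    rw [show ∫ x in c..d, (if x < c then p else q) = ∫ x in c..d, q from
      integral_congr_off (S := (∅ : Set ℝ)) Set.countable_empty ?_,
      intervalIntegral.integral_const, smul_eq_mul, mul_comm]
    intro x hx _
    rw [Set.uIoc_of_le hc] at hx
    rw [if_neg (not_lt.mpr hx.1.le)]
  rw [hsplit, h1, h2]

lemma step2_int {c d e : ℝ} (p q r : ℝ) (h0 : 0 ≤ c) (hc : c ≤ d) (hd : d ≤ e) :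
    ∫ x in (0:ℝ)..e, (if x < c then p else if x < d then q else r)
      = p * c + q * (d - c) + r * (e - d) := by
  have hm : Measurable (fun x : ℝ => if x < c then p else if x < d then q else r) := by
    apply Measurable.ite (measurableSet_lt measurable_id measurable_const) measurable_const
    exact step_meas d q r
  have hii : ∀ u v : ℝ, IntervalIntegrable
      (fun x : ℝ => if x < c then p else if x < d then q else r) volume u v := by
    intro u v
    apply intInt_of_bdd hm (max |p| (max |q| |r|))
    intro x; split_ifs
    · exact le_max_left _ _
    · exact le_trans (le_max_left _ _) (le_max_right _ _)
    · exact le_trans (le_max_right _ _) (le_max_right _ _)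
  have hsplit := (intervalIntegral.integral_add_adjacent_intervals (hii 0 d) (hii d e)).symm
  have h1 : ∫ x in (0:ℝ)..d, (if x < c then p else if x < d then q else r)
      = p * c + q * (d - c) := by
    rw [show ∫ x in (0:ℝ)..d, (if x < c then p else if x < d then q else r)
        = ∫ x in (0:ℝ)..d, (if x < c then p else q) from
      integral_congr_off (S := {d}) (Set.countable_singleton _) ?_,
      step_int p q h0 hc]
    intro x hx hxS
    rw [Set.uIoc_of_le (h0.trans hc)] at hx
    have : x < d := lt_of_le_of_ne hx.2 (by simpa using hxS)
    by_cases hxc : x < c <;> simp [hxc, this]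
  have h2 : ∫ x in d..e, (if x < c then p else if x < d then q else r) = r * (e - d) := by
    rw [show ∫ x in d..e, (if x < c then p else if x < d then q else r)
        = ∫ x in d..e, r from
      integral_congr_off (S := (∅ : Set ℝ)) Set.countable_empty ?_,
      intervalIntegral.integral_const, smul_eq_mul, mul_comm]
    intro x hx _
    rw [Set.uIoc_of_le hd] at hx
    rw [if_neg (not_lt.mpr (hc.trans hx.1.le)), if_neg (not_lt.mpr hx.1.le)]
  rw [hsplit, h1, h2]

set_option maxHeartbeats 1600000 in
/-- Homogenized fluxes when the traffic is never limited:
`λ̂¹(λ) = max(θ¹λ, λ − λ̄²)` and `λ̂²(λ) = min(θ²λ, λ̄²)` (case `θ² ≥ θ²_*`). -/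
theorem homogenized_flux_no_limiter
    (f0max f1max f2max θ1 θ2 : ℝ)
    (hf0 : 0 < f0max) (hf1 : 0 < f1max) (hf2 : 0 < f2max)
    (hθ1 : 0 < θ1) (hθ2 : 0 < θ2) (hθsum : θ1 + θ2 = 1)
    (I1 I2 : Set ℝ)
    (hI1 : I1 = {t : ℝ | Int.fract t < θ1})
    (hI2 : I2 = {t : ℝ | θ1 ≤ Int.fract t})
    (A : ℝ → ℝ)
    (hA1 : ∀ t ∈ I1, A t = min f0max f1max)
    (hA2 : ∀ t ∈ I2, A t = min f0max f2max)
    (lam0 lam1 lam2 : ℝ)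
    (hlam1 : lam1 = θ1 * min f0max f1max)
    (hlam2 : lam2 = θ2 * min f0max f2max)
    (hlam0 : lam0 = lam1 + lam2)
    (hθstar : lam2 / lam0 ≤ θ2)
    (F : ℝ → ℝ → ℝ)
    (hF1 : ∀ μ t, (∀ t₁ < t, μ * (t - t₁) ≤ ∫ s in t₁..t, A s) → F μ t = μ)
    (hF2 : ∀ μ t, ¬ (∀ t₁ < t, μ * (t - t₁) ≤ ∫ s in t₁..t, A s) → F μ t = A t)
    (lhat1 lhat2 : ℝ → ℝ)
    (hlh1 : ∀ lam, lhat1 lam = ∫ t in (0:ℝ)..1, Set.indicator I1 (F lam) t)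
    (hlh2 : ∀ lam, lhat2 lam = ∫ t in (0:ℝ)..1, Set.indicator I2 (F lam) t) :
    (∫ t in (0:ℝ)..1, Set.indicator I1 A t) = lam1 ∧
    (∫ t in (0:ℝ)..1, Set.indicator I2 A t) = lam2 ∧
    ∀ lam ∈ Set.Icc 0 lam0,
      lhat1 lam = max (θ1 * lam) (lam - lam2) ∧
      lhat2 lam = min (θ2 * lam) lam2 := by
  set a := min f0max f1max with hadef
  set b := min f0max f2max with hbdef
  have ha : 0 < a := lt_min hf0 hf1
  have hb : 0 < b := lt_min hf0 hf2
  clear_value a b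
  clear hadef hbdef
  have hθ1lt : θ1 < 1 := by linarith
  have hlam0' : lam0 = θ1 * a + θ2 * b := by rw [hlam0, hlam1, hlam2]
  have hlam0pos : 0 < lam0 := by rw [hlam0']; positivity
  have hab : b ≤ a := by
    have h1 : lam2 ≤ θ2 * lam0 := by
      have := (div_le_iff₀ hlam0pos).mp hθstar
      linarith
    rw [hlam2, hlam0'] at h1
    by_contra hcon
    push_neg at hcon
    nlinarith [mul_lt_mul_of_pos_left (mul_lt_mul_of_pos_left hcon hθ1) hθ2,
      (by rw [hθsum, one_mul] : (θ1 + θ2) * (θ2 * b) = θ2 * b)]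
  have hAf : A = Af a b θ1 := by
    funext t
    by_cases h : Int.fract t < θ1
    · rw [hA1 t (by rw [hI1]; exact h), Af, if_pos h]
    · rw [hA2 t (by rw [hI2]; exact not_lt.mp h), Af, if_neg h]
  subst hAf
  -- first two conjuncts
  have hmemI1 : ∀ x : ℝ, 0 < x → x < θ1 → x ∈ I1 := by
    intro x h0 h1; rw [hI1]
    exact Set.mem_setOf.mpr (by rwa [Int.fract_eq_self.mpr ⟨h0.le, by linarith⟩])
  have hmemI2 : ∀ x : ℝ, θ1 ≤ x → x < 1 → x ∈ I2 := by
    intro x h0 h1; rw [hI2]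
    exact Set.mem_setOf.mpr (by rwa [Int.fract_eq_self.mpr ⟨by linarith, h1⟩])
  have hnotI1 : ∀ x : ℝ, θ1 ≤ x → x < 1 → x ∉ I1 := by
    intro x h0 h1; rw [hI1]
    simp only [Set.mem_setOf_eq, not_lt]
    rwa [Int.fract_eq_self.mpr ⟨by linarith, h1⟩]
  have hnotI2 : ∀ x : ℝ, 0 < x → x < θ1 → x ∉ I2 := by
    intro x h0 h1; rw [hI2]
    simp only [Set.mem_setOf_eq, not_le]
    rwa [Int.fract_eq_self.mpr ⟨h0.le, by linarith⟩]
  have hAval : ∀ x : ℝ, 0 < x → x < θ1 → Af a b θ1 x = a := by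
    intro x h0 h1
    rw [Af, if_pos (by rwa [Int.fract_eq_self.mpr ⟨h0.le, by linarith⟩])]
  have hAval2 : ∀ x : ℝ, θ1 ≤ x → x < 1 → Af a b θ1 x = b := by
    intro x h0 h1
    rw [Af, if_neg (by rw [Int.fract_eq_self.mpr ⟨by linarith, h1⟩]; exact not_lt.mpr h0)]
  have hc1 : (∫ t in (0:ℝ)..1, Set.indicator I1 (Af a b θ1) t) = lam1 := by
    rw [show (∫ t in (0:ℝ)..1, Set.indicator I1 (Af a b θ1) t)
        = ∫ x in (0:ℝ)..1, (if x < θ1 then a else 0) from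
      integral_congr_off (S := {θ1, 1}) ((Set.countable_singleton 1).insert θ1) ?_,
      step_int a 0 hθ1.le hθ1lt.le, hlam1]
    · ring
    intro x hx hxS
    rw [Set.uIoc_of_le zero_le_one] at hx
    simp only [Set.mem_insert_iff, Set.mem_singleton_iff, not_or] at hxS
    have hx1 : x < 1 := lt_of_le_of_ne hx.2 hxS.2
    rcases lt_or_gt_of_ne hxS.1 with h | h
    · rw [Set.indicator_of_mem (hmemI1 x hx.1 h), hAval x hx.1 h, if_pos h]
    · rw [Set.indicator_of_notMem (hnotI1 x h.le hx1), if_neg (not_lt.mpr h.le)]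
  have hc2 : (∫ t in (0:ℝ)..1, Set.indicator I2 (Af a b θ1) t) = lam2 := by
    rw [show (∫ t in (0:ℝ)..1, Set.indicator I2 (Af a b θ1) t)
        = ∫ x in (0:ℝ)..1, (if x < θ1 then 0 else b) from
      integral_congr_off (S := {θ1, 1}) ((Set.countable_singleton 1).insert θ1) ?_,
      step_int 0 b hθ1.le hθ1lt.le, hlam2]
    · ring_nf; nlinarith [hθsum]
    intro x hx hxS
    rw [Set.uIoc_of_le zero_le_one] at hx
    simp only [Set.mem_insert_iff, Set.mem_singleton_iff, not_or] at hxS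
    have hx1 : x < 1 := lt_of_le_of_ne hx.2 hxS.2
    rcases lt_or_gt_of_ne hxS.1 with h | h
    · rw [Set.indicator_of_notMem (hnotI2 x hx.1 h), if_pos h]
    · rw [Set.indicator_of_mem (hmemI2 x h.le hx1), hAval2 x h.le hx1, if_neg (not_lt.mpr h.le)]
  refine ⟨hc1, hc2, ?_⟩
  rintro lam ⟨hl0, hl1⟩
  rw [hlam0'] at hl1
  set s0 : ℝ := if lam ≤ b then 0 else θ2 * (lam - b) / (a - lam) with hs0def
  have hla : ¬ lam ≤ b → lam < a := by
    intro h; push_neg at h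
    nlinarith [mul_lt_mul_of_pos_left h hθ2,
      (by rw [hθsum, one_mul] : (θ1 + θ2) * lam = lam)]
  clear hθstar hlam0 hc1 hc2 hlam0pos hlam0'
  have hs0nonneg : 0 ≤ s0 := by
    rw [hs0def]; split_ifs with h
    · exact le_rfl
    · push_neg at h
      have := hla (not_le.mpr h)
      exact div_nonneg (by nlinarith) (by linarith)
  have hs0le : s0 ≤ θ1 := by
    rw [hs0def]; split_ifs with h
    · exact hθ1.le
    · push_neg at h
      have hla' := hla (not_le.mpr h)
      rw [div_le_iff₀ (by linarith : (0:ℝ) < a - lam)]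
      nlinarith [(by rw [hθsum, one_mul] : (θ1 + θ2) * lam = lam)]
  have hs0key : ¬ lam ≤ b → s0 * (a - lam) = θ2 * (lam - b) := by
    intro h
    have hla' := hla h
    rw [hs0def, if_neg h, div_mul_cancel₀ _ (by linarith : a - lam ≠ 0)]
  clear_value s0
  -- values of F lam
  have hFval1 : ∀ x : ℝ, 0 < x → x < θ1 → x ≠ s0 →
      F lam x = if x < s0 then a else lam := by
    intro x h0 h1 hne
    by_cases hx : x < s0
    · have hnb : ¬ lam ≤ b := by
        intro hc; rw [hs0def, if_pos hc] at hx; linarith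
      have hla' := hla hnb
      push_neg at hnb
      rw [if_pos hx, hF2 lam x ?_, hAval x h0 h1]
      apply nec1 hθ1 hθ2 hθsum h0 h1
      have := mul_lt_mul_of_pos_right hx (by linarith : (0:ℝ) < a - lam)
      rw [hs0key (not_le.mpr hnb)] at this
      nlinarith
    · rw [if_neg hx, hF1 lam x ?_]
      push_neg at hx
      by_cases hlb : lam ≤ b
      · exact fun t1 ht1 => suff_le hab hlb x t1 ht1
      · have hla' := hla hlb
        push_neg at hlb
        intro t1 ht1
        apply suff_gt hθ1 hθ2 hθsum hab hlb.le hl1 ?_ ?_ t1 ht1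
        · rw [Int.fract_eq_self.mpr ⟨h0.le, by linarith⟩]; exact h1.le
        · rw [Int.fract_eq_self.mpr ⟨h0.le, by linarith⟩]
          have := mul_le_mul_of_nonneg_right hx (by linarith : (0:ℝ) ≤ a - lam)
          rw [hs0key (not_le.mpr hlb)] at this
          nlinarith
  have hFval2 : ∀ x : ℝ, θ1 < x → x < 1 → F lam x = min lam b := by
    intro x h0 h1
    by_cases hlb : lam ≤ b
    · rw [min_eq_left hlb, hF1 lam x (fun t1 ht1 => suff_le hab hlb x t1 ht1)]
    · push_neg at hlb
      rw [min_eq_right hlb.le, hF2 lam x (nec2 hθ1 hθ2 hθsum hlb h0 h1),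
        hAval2 x h0.le h1]
  constructor
  · -- lhat1
    rw [hlh1 lam,
      show (∫ t in (0:ℝ)..1, Set.indicator I1 (F lam) t)
        = ∫ x in (0:ℝ)..1, (if x < s0 then a else if x < θ1 then lam else 0) from
      integral_congr_off (S := {s0, θ1, 1})
        (((Set.countable_singleton 1).insert θ1).insert s0) ?_,
      step2_int a lam 0 hs0nonneg hs0le hθ1lt.le]
    · rw [hlam2]
      by_cases hlb : lam ≤ b
      · rw [hs0def, if_pos hlb, max_eq_left (by nlinarith)]; ring
      · have hkey := hs0key hlb
        push_neg at hlb
        rw [max_eq_right (by nlinarith)]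
        nlinarith [(by rw [hθsum, one_mul] : (θ1 + θ2) * lam = lam)]
    intro x hx hxS
    rw [Set.uIoc_of_le zero_le_one] at hx
    simp only [Set.mem_insert_iff, Set.mem_singleton_iff, not_or] at hxS
    have hx1 : x < 1 := lt_of_le_of_ne hx.2 hxS.2.2
    rcases lt_or_gt_of_ne hxS.2.1 with h | h
    · rw [Set.indicator_of_mem (hmemI1 x hx.1 h), hFval1 x hx.1 h hxS.1]
      by_cases hxx : x < s0
      · rw [if_pos hxx, if_pos hxx]
      · rw [if_neg hxx, if_neg hxx, if_pos h]
    · rw [Set.indicator_of_notMem (hnotI1 x h.le hx1),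
        if_neg (not_lt.mpr (hs0le.trans h.le)), if_neg (not_lt.mpr h.le)]
  · -- lhat2
    rw [hlh2 lam,
      show (∫ t in (0:ℝ)..1, Set.indicator I2 (F lam) t)
        = ∫ x in (0:ℝ)..1, (if x < θ1 then 0 else min lam b) from
      integral_congr_off (S := {θ1, 1}) ((Set.countable_singleton 1).insert θ1) ?_,
      step_int 0 (min lam b) hθ1.le hθ1lt.le, hlam2]
    · clear hF1 hF2 hFval1 hFval2 hlh1 hlh2 hA1 hA2 hmemI1 hmemI2 hnotI1 hnotI2
        hAval hAval2 hI1 hI2 hs0def hs0key hla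
      rcases le_total lam b with h | h
      · rw [min_eq_left h, min_eq_left (show θ2 * lam ≤ θ2 * b from by nlinarith)]
        nlinarith [(by rw [hθsum, one_mul] : (θ1 + θ2) * lam = lam)]
      · rw [min_eq_right h, min_eq_right (show θ2 * b ≤ θ2 * lam from by nlinarith)]
        nlinarith [(by rw [hθsum, one_mul] : (θ1 + θ2) * b = b)]
    intro x hx hxS
    rw [Set.uIoc_of_le zero_le_one] at hx
    simp only [Set.mem_insert_iff, Set.mem_singleton_iff, not_or] at hxS
    have hx1 : x < 1 := lt_of_le_of_ne hx.2 hxS.2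
    rcases lt_or_gt_of_ne hxS.1 with h | h
    · rw [Set.indicator_of_notMem (hnotI2 x hx.1 h), if_pos h]
    · rw [Set.indicator_of_mem (hmemI2 x h.le hx1), hFval2 x h hx1,
        if_neg (not_lt.mpr h.le)]
end

section
/- (One stop followed by two exits.) Let 0 < θ⁰, θ¹, θ² with θ⁰+θ¹+θ² = 1, A⁰ > 0, and A(t) = 0 on [0,θ⁰), A(t) = A⁰ on [θ⁰, 1), extended 1-periodically; let I¹ = [θ⁰, θ⁰+θ¹) and I² = [θ⁰+θ¹, 1) mod 1. Then λ̄⁰ = A⁰(θ¹+θ²), λ̄¹ = A⁰θ¹, λ̄² = A⁰θ², and for all λ ∈ [0, λ̄⁰]: λ̂¹(λ) = min(λ(θ⁰+θ¹), λ̄¹), λ̂²(λ) = max(λθ², λ − λ̄¹), and λ̂¹(λ) + λ̂²(λ) = λ. Moreover, if θ¹ = θ², then λ̂¹(λ) > λ̂²(λ) for all λ ∈ (0, λ̄⁰), with equality at the endpoints. -/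
open MeasureTheory Set intervalIntegral

private lemma indicator_intInt {s : Set ℝ} (hs : MeasurableSet s) (c a b : ℝ) :
    IntervalIntegrable (s.indicator fun _ => c) volume a b := by
  rw [intervalIntegrable_iff]
  exact (integrableOn_const (by rw [Set.uIoc]; exact measure_Ioc_lt_top.ne)).indicator hs

private lemma step_intInt (c u v a b : ℝ) :
    IntervalIntegrable (fun t => if u ≤ t ∧ t < v then c else 0) volume a b := by
  have h : (fun t : ℝ => if u ≤ t ∧ t < v then c else 0) = (Set.Ico u v).indicator fun _ => c := by
    funext t
    by_cases h : u ≤ t ∧ t < v <;> simp [Set.indicator, Set.mem_Ico, h]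
  rw [h]; exact indicator_intInt measurableSet_Ico c a b

private lemma integral_congr_Ioo {f g : ℝ → ℝ} {a b : ℝ} (hab : a ≤ b)
    (h : ∀ x ∈ Set.Ioo a b, f x = g x) :
    ∫ x in a..b, f x = ∫ x in a..b, g x := by
  apply intervalIntegral.integral_congr_ae
  have hb : ∀ᵐ x : ℝ, x ≠ b := by
    refine MeasureTheory.ae_iff.2 ?_
    simp only [not_not, Set.setOf_eq_eq_singleton]
    exact measure_singleton b
  filter_upwards [hb] with x hx hmem
  rw [Set.uIoc_of_le hab] at hmem
  exact h x ⟨hmem.1, lt_of_le_of_ne hmem.2 hx⟩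

private lemma integral_step {a u v b c : ℝ} (hau : a ≤ u) (huv : u ≤ v) (hvb : v ≤ b) :
    ∫ t in a..b, (if u ≤ t ∧ t < v then c else 0) = c * (v - u) := by
  have hab : a ≤ b := le_trans hau (le_trans huv hvb)
  rw [← intervalIntegral.integral_add_adjacent_intervals (a := a) (b := u) (c := b)
      (step_intInt c u v a u) (step_intInt c u v u b),
    ← intervalIntegral.integral_add_adjacent_intervals (a := u) (b := v) (c := b)
      (step_intInt c u v u v) (step_intInt c u v v b)]
  have h1 : ∫ t in a..u, (if u ≤ t ∧ t < v then c else 0) = ∫ t in a..u, (0:ℝ) := by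
    apply integral_congr_Ioo hau; intro x hx
    rw [if_neg]; rintro ⟨h1, -⟩; exact absurd h1 (not_le.2 hx.2)
  have h2 : ∫ t in u..v, (if u ≤ t ∧ t < v then c else 0) = ∫ t in u..v, c := by
    apply integral_congr_Ioo huv; intro x hx
    rw [if_pos ⟨hx.1.le, hx.2⟩]
  have h3 : ∫ t in v..b, (if u ≤ t ∧ t < v then c else 0) = ∫ t in v..b, (0:ℝ) := by
    apply integral_congr_Ioo hvb; intro x hx
    rw [if_neg]; rintro ⟨-, h2'⟩; exact absurd h2' (not_lt.2 hx.1.le)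
  rw [h1, h2, h3]
  simp [mul_comm]

private lemma W_formula (θ0 A0 : ℝ) (h0 : 0 < θ0) (h1 : θ0 ≤ 1) {a b : ℝ} (hab : a ≤ b) :
    ∫ t in a..b, (if Int.fract t < θ0 then (0:ℝ) else A0)
      = (A0 * (1 - θ0) * (⌊b⌋ : ℝ) + A0 * max (Int.fract b - θ0) 0)
        - (A0 * (1 - θ0) * (⌊a⌋ : ℝ) + A0 * max (Int.fract a - θ0) 0) := by
  set f := fun t : ℝ => if Int.fract t < θ0 then (0:ℝ) else A0 with hf
  set g := fun t : ℝ => A0 * (1 - θ0) * (⌊t⌋ : ℝ) + A0 * max (Int.fract t - θ0) 0 with hg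
  have hgalt : g = fun t : ℝ =>
      A0 * (1 - θ0) * t + (A0 * max (Int.fract t - θ0) 0 - A0 * (1 - θ0) * Int.fract t) := by
    funext t
    have : (⌊t⌋ : ℝ) = t - Int.fract t := by rw [Int.fract]; ring
    simp only [hg, this]; ring
  have hcont : Continuous g := by
    rw [hgalt]
    apply Continuous.add (by continuity)
    have hφ : ContinuousOn (fun x : ℝ => A0 * max (x - θ0) 0 - A0 * (1 - θ0) * x)
        (Set.Icc 0 1) := (by continuity : Continuous fun x : ℝ =>
          A0 * max (x - θ0) 0 - A0 * (1 - θ0) * x).continuousOn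
    have h01 : (fun x : ℝ => A0 * max (x - θ0) 0 - A0 * (1 - θ0) * x) 0
        = (fun x : ℝ => A0 * max (x - θ0) 0 - A0 * (1 - θ0) * x) 1 := by
      simp only
      rw [max_eq_right (by linarith : (0:ℝ) - θ0 ≤ 0), max_eq_left (by linarith : (0:ℝ) ≤ 1 - θ0)]
      ring
    exact hφ.comp_fract'' h01
  have hderiv : ∀ x : ℝ, HasDerivWithinAt g (f x) (Set.Ioi x) x := by
    intro x
    by_cases hx : Int.fract x < θ0
    · have hfx : f x = 0 := if_pos hx
      rw [hfx]
      have hxlt : x < (⌊x⌋ : ℝ) + θ0 := by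
        rw [Int.fract] at hx; linarith
      have hmem : Set.Ioo x ((⌊x⌋ : ℝ) + θ0) ∈ nhdsWithin x (Set.Ioi x) :=
        Ioo_mem_nhdsGT_of_mem ⟨le_refl x, hxlt⟩
      have hconst : ∀ y ∈ Set.Ioo x ((⌊x⌋ : ℝ) + θ0), g y = A0 * (1 - θ0) * (⌊x⌋ : ℝ) := by
        intro y hy
        have hfl : ⌊y⌋ = ⌊x⌋ := by
          apply Int.floor_eq_iff.2
          constructor
          · exact le_trans (Int.floor_le x) hy.1.le
          · push_cast; linarith [hy.2]
        have hfr : Int.fract y = y - (⌊x⌋ : ℝ) := by rw [Int.fract, hfl]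
        have hm : max (Int.fract y - θ0) 0 = 0 := max_eq_right (by rw [hfr]; linarith [hy.2])
        simp only [hg, hfl, hm, mul_zero, add_zero]
      refine (hasDerivWithinAt_const x _ (A0 * (1 - θ0) * (⌊x⌋ : ℝ))).congr_of_eventuallyEq
        (Filter.eventuallyEq_of_mem hmem hconst) ?_
      have hm : max (Int.fract x - θ0) 0 = 0 := max_eq_right (by linarith)
      simp only [hg, hm, mul_zero, add_zero]
    · push_neg at hx
      have hfx : f x = A0 := if_neg (not_lt.2 hx)
      rw [hfx]
      set n : ℝ := (⌊x⌋ : ℝ) with hn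
      have haff : HasDerivAt (fun y : ℝ => A0 * (1 - θ0) * n + A0 * (y - (n + θ0))) A0 x := by
        have h := (((hasDerivAt_id x).sub_const (n + θ0)).const_mul A0).const_add
          (A0 * (1 - θ0) * n)
        simpa using h
      have hxlt : x < n + 1 := by rw [hn]; exact_mod_cast Int.lt_floor_add_one x
      have hmem : Set.Ioo x (n + 1) ∈ nhdsWithin x (Set.Ioi x) :=
        Ioo_mem_nhdsGT_of_mem ⟨le_refl x, hxlt⟩
      have hfrx : Int.fract x = x - n := by rw [hn, Int.fract]
      have heq : ∀ y ∈ Set.Ioo x (n + 1),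
          g y = A0 * (1 - θ0) * n + A0 * (y - (n + θ0)) := by
        intro y hy
        have hfl : ⌊y⌋ = ⌊x⌋ := by
          apply Int.floor_eq_iff.2
          refine ⟨le_trans (Int.floor_le x) hy.1.le, ?_⟩
          push_cast; rw [← hn]; exact hy.2
        have hfr : Int.fract y = y - n := by rw [Int.fract, hfl, hn]
        have hm : max (Int.fract y - θ0) 0 = y - n - θ0 := by
          rw [hfr]
          apply max_eq_left
          have h2 : θ0 ≤ x - n := by rw [← hfrx]; exact hx
          linarith [hy.1.le]
        simp only [hg, hfl, hm, ← hn]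
        ring
      refine haff.hasDerivWithinAt.congr_of_eventuallyEq
        (Filter.eventuallyEq_of_mem hmem heq) ?_
      have hm : max (Int.fract x - θ0) 0 = x - n - θ0 := by
        rw [hfrx]
        apply max_eq_left
        have h2 : θ0 ≤ x - n := by rw [← hfrx]; exact hx
        linarith
      simp only [hg, hm, ← hn]; ring
  have hint : IntervalIntegrable f volume a b := by
    have h : f = ({t : ℝ | θ0 ≤ Int.fract t}).indicator fun _ => A0 := by
      funext t
      by_cases h : Int.fract t < θ0
      · rw [hf]; simp [h, Set.indicator, not_le.2 h]
      · push_neg at h; rw [hf]; simp [Set.indicator, h, not_lt.2 h]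
    rw [h]
    exact indicator_intInt (measurableSet_le measurable_const measurable_fract) A0 a b
  exact integral_eq_sub_of_hasDeriv_right_of_le hab hcont.continuousOn
    (fun x _ => hderiv x) hint

private lemma cond_holds (θ0 A0 lam : ℝ) (hθ0 : 0 < θ0) (hθ1 : θ0 < 1) (hA0 : 0 < A0)
    (hl0 : 0 ≤ lam) (hllb : lam ≤ A0 * (1 - θ0))
    (A : ℝ → ℝ) (hA : A = fun t => if Int.fract t < θ0 then (0:ℝ) else A0)
    {t : ℝ} (ht0 : 0 ≤ t) (ht1 : t < 1) (htg : lam * t ≤ A0 * max (t - θ0) 0) :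
    ∀ t₁ < t, lam * (t - t₁) ≤ ∫ s in t₁..t, A s := by
  intro t₁ ht₁
  rw [hA, W_formula θ0 A0 hθ0 hθ1.le ht₁.le]
  have hfrt : Int.fract t = t := Int.fract_eq_self.2 ⟨ht0, ht1⟩
  have hflt : ⌊t⌋ = 0 := Int.floor_eq_zero_iff.2 ⟨ht0, ht1⟩
  rw [hfrt, hflt]
  simp only [Int.cast_zero, mul_zero, zero_add]
  set x := Int.fract t₁ with hxd
  set n : ℝ := (⌊t₁⌋ : ℝ) with hnd
  have hx0 : 0 ≤ x := Int.fract_nonneg t₁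
  have hx1 : x < 1 := Int.fract_lt_one t₁
  have ht₁eq : t₁ = n + x := by rw [hxd, hnd, Int.fract]; ring
  have hnle : ⌊t₁⌋ ≤ 0 := by
    have := Int.floor_le_floor ht₁.le
    rwa [hflt] at this
  have hAlam : 0 < A0 - lam := by nlinarith [mul_pos hA0 hθ0]
  rcases eq_or_lt_of_le hnle with hn | hn
  · -- ⌊t₁⌋ = 0
    have hneq : n = 0 := by rw [hnd, hn]; norm_num
    rcases le_or_gt θ0 x with hxθ | hxθ
    · have hmx : max (x - θ0) 0 = x - θ0 := max_eq_left (by linarith)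
      have hmt : max (t - θ0) 0 = t - θ0 := max_eq_left (by nlinarith)
      rw [hmx, hmt]
      have hp : 0 ≤ (A0 - lam) * (t - x) := by
        apply mul_nonneg hAlam.le
        nlinarith
      nlinarith [hp]
    · have hmx : max (x - θ0) 0 = 0 := max_eq_right (by linarith)
      rw [hmx]
      nlinarith [mul_nonneg hl0 hx0, htg]
  · -- ⌊t₁⌋ ≤ -1
    have hnm1 : n ≤ -1 := by
      rw [hnd]
      have : ⌊t₁⌋ ≤ -1 := by omega
      exact_mod_cast this
    have hcoeff : 0 ≤ A0 * (1 - θ0) - lam := by linarith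
    have hprod : (A0 * (1 - θ0) - lam) * 1 ≤ (A0 * (1 - θ0) - lam) * (-n) :=
      mul_le_mul_of_nonneg_left (by linarith) hcoeff
    rcases le_or_gt θ0 x with hxθ | hxθ
    · have hmx : max (x - θ0) 0 = x - θ0 := max_eq_left (by linarith)
      rw [hmx]
      have hprod2 : (A0 - lam) * x ≤ (A0 - lam) * 1 :=
        mul_le_mul_of_nonneg_left hx1.le hAlam.le
      nlinarith [hprod, hprod2, htg]
    · have hmx : max (x - θ0) 0 = 0 := max_eq_right (by linarith)
      rw [hmx]
      nlinarith [hprod, mul_nonneg hl0 hx0, htg]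
set_option maxHeartbeats 1000000 in
/-- Flux computation with one stop followed successively by two exits:
`λ̂¹(λ) = min(λ(θ⁰+θ¹), λ̄¹)`, `λ̂²(λ) = max(λθ², λ − λ̄¹)`, their sum is `λ`, and for
`θ¹ = θ²` one has `λ̂¹ > λ̂²` on `(0, λ̄⁰)` with equality at both endpoints. -/
theorem one_stop_two_exits
    (θ0 θ1 θ2 A0 : ℝ)
    (hθ0 : 0 < θ0) (hθ1 : 0 < θ1) (hθ2 : 0 < θ2) (hsum : θ0 + θ1 + θ2 = 1)
    (hA0 : 0 < A0)
    (A : ℝ → ℝ)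
    (hAstop : ∀ t : ℝ, Int.fract t < θ0 → A t = 0)
    (hAon : ∀ t : ℝ, θ0 ≤ Int.fract t → A t = A0)
    (I1 I2 : Set ℝ)
    (hI1 : I1 = {t : ℝ | θ0 ≤ Int.fract t ∧ Int.fract t < θ0 + θ1})
    (hI2 : I2 = {t : ℝ | θ0 + θ1 ≤ Int.fract t})
    (F : ℝ → ℝ → ℝ)
    (hF1 : ∀ μ t, (∀ t₁ < t, μ * (t - t₁) ≤ ∫ s in t₁..t, A s) → F μ t = μ)
    (hF2 : ∀ μ t, ¬ (∀ t₁ < t, μ * (t - t₁) ≤ ∫ s in t₁..t, A s) → F μ t = A t)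
    (lhat1 lhat2 : ℝ → ℝ)
    (hlh1 : ∀ lam, lhat1 lam = ∫ t in (0:ℝ)..1, Set.indicator I1 (F lam) t)
    (hlh2 : ∀ lam, lhat2 lam = ∫ t in (0:ℝ)..1, Set.indicator I2 (F lam) t) :
    (∫ t in (0:ℝ)..1, A t) = A0 * (θ1 + θ2) ∧
    (∫ t in (0:ℝ)..1, Set.indicator I1 A t) = A0 * θ1 ∧
    (∫ t in (0:ℝ)..1, Set.indicator I2 A t) = A0 * θ2 ∧
    (∀ lam ∈ Set.Icc 0 (A0 * (θ1 + θ2)),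
      lhat1 lam = min (lam * (θ0 + θ1)) (A0 * θ1) ∧
      lhat2 lam = max (lam * θ2) (lam - A0 * θ1) ∧
      lhat1 lam + lhat2 lam = lam) ∧
    (θ1 = θ2 →
      (∀ lam ∈ Set.Ioo 0 (A0 * (θ1 + θ2)), lhat2 lam < lhat1 lam) ∧
      lhat1 0 = lhat2 0 ∧ lhat1 (A0 * (θ1 + θ2)) = lhat2 (A0 * (θ1 + θ2))) := by
  have hθ0lt1 : θ0 < 1 := by linarith
  have hθ12 : θ1 + θ2 = 1 - θ0 := by linarith
  have hθ011 : θ0 + θ1 < 1 := by linarith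
  have hAeq : A = fun t => if Int.fract t < θ0 then (0:ℝ) else A0 := by
    funext t
    by_cases h : Int.fract t < θ0
    · rw [hAstop t h, if_pos h]
    · push_neg at h; rw [hAon t h, if_neg (not_lt.2 h)]
  -- Part 1
  have h₁ : (∫ t in (0:ℝ)..1, A t) = A0 * (θ1 + θ2) := by
    rw [hAeq, W_formula θ0 A0 hθ0 hθ0lt1.le (by norm_num : (0:ℝ) ≤ 1)]
    rw [Int.fract_one, Int.fract_zero, Int.floor_one, Int.floor_zero]
    rw [max_eq_right (by linarith : (0:ℝ) - θ0 ≤ 0)]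
    push_cast
    rw [hθ12]
    ring
  -- Part 2
  have h₂ : (∫ t in (0:ℝ)..1, Set.indicator I1 A t) = A0 * θ1 := by
    have heq : Set.EqOn (Set.indicator I1 A)
        (fun t => if θ0 ≤ t ∧ t < θ0 + θ1 then A0 else 0) (Set.uIcc 0 1) := by
      intro t ht
      dsimp only
      rw [Set.uIcc_of_le (by norm_num : (0:ℝ) ≤ 1)] at ht
      rcases eq_or_lt_of_le ht.2 with h1 | h1
      · have : t = 1 := h1
        subst this
        rw [Set.indicator_of_notMem (by rw [hI1]; simp [Int.fract_one]; intro h; linarith)]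
        rw [if_neg (by rintro ⟨-, h2⟩; linarith)]
      · have hfr : Int.fract t = t := Int.fract_eq_self.2 ⟨ht.1, h1⟩
        by_cases hmem : θ0 ≤ t ∧ t < θ0 + θ1
        · rw [Set.indicator_of_mem (by
            rw [hI1]
            show θ0 ≤ Int.fract t ∧ Int.fract t < θ0 + θ1
            rw [hfr]; exact hmem)]
          rw [if_pos hmem, hAon t (by rw [hfr]; exact hmem.1)]
        · rw [Set.indicator_of_notMem (by rw [hI1, Set.mem_setOf_eq, hfr]; exact hmem)]
          rw [if_neg hmem]
    rw [intervalIntegral.integral_congr heq,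
      integral_step hθ0.le (by linarith) (by linarith)]
    ring
  -- Part 3
  have h₃ : (∫ t in (0:ℝ)..1, Set.indicator I2 A t) = A0 * θ2 := by
    have heq : Set.EqOn (Set.indicator I2 A)
        (fun t => if θ0 + θ1 ≤ t ∧ t < 1 then A0 else 0) (Set.uIcc 0 1) := by
      intro t ht
      dsimp only
      rw [Set.uIcc_of_le (by norm_num : (0:ℝ) ≤ 1)] at ht
      rcases eq_or_lt_of_le ht.2 with h1 | h1
      · have : t = 1 := h1
        subst this
        rw [Set.indicator_of_notMem (by rw [hI2]; simp [Int.fract_one]; linarith)]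
        rw [if_neg (by rintro ⟨-, h2⟩; linarith)]
      · have hfr : Int.fract t = t := Int.fract_eq_self.2 ⟨ht.1, h1⟩
        by_cases hmem : θ0 + θ1 ≤ t
        · rw [Set.indicator_of_mem (by
            rw [hI2]
            show θ0 + θ1 ≤ Int.fract t
            rw [hfr]; exact hmem)]
          rw [if_pos ⟨hmem, h1⟩, hAon t (by rw [hfr]; linarith)]
        · rw [Set.indicator_of_notMem (by rw [hI2, Set.mem_setOf_eq, hfr]; exact hmem)]
          rw [if_neg (by rintro ⟨h2, -⟩; exact hmem h2)]
    rw [intervalIntegral.integral_congr heq,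
      integral_step (by linarith : (0:ℝ) ≤ θ0 + θ1) (by linarith) le_rfl]
    have : 1 - (θ0 + θ1) = θ2 := by linarith
    rw [this]
  -- Part 4
  have hmain : ∀ lam ∈ Set.Icc 0 (A0 * (θ1 + θ2)),
      lhat1 lam = min (lam * (θ0 + θ1)) (A0 * θ1) ∧
      lhat2 lam = max (lam * θ2) (lam - A0 * θ1) ∧
      lhat1 lam + lhat2 lam = lam := by
    rintro lam ⟨hl0, hlub⟩
    have hlub' : lam ≤ A0 * (1 - θ0) := by rwa [hθ12] at hlub
    have hAlam : 0 < A0 - lam := by nlinarith [mul_pos hA0 hθ0]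
    set τ := A0 * θ0 / (A0 - lam) with hτd
    have hτθ0 : θ0 ≤ τ := by
      rw [hτd, le_div_iff₀ hAlam]
      nlinarith [mul_nonneg hl0 hθ0.le]
    have hτ1 : τ ≤ 1 := by
      rw [hτd, div_le_one hAlam]
      linarith
    have hτiff : ∀ s : ℝ, s < τ ↔ (A0 - lam) * s < A0 * θ0 := by
      intro s
      rw [hτd, lt_div_iff₀ hAlam, mul_comm]
    have hτeq : A0 * (τ - θ0) = lam * τ := by
      rw [hτd]
      field_simp
      ring
    -- value of F on (0,1)
    have hFval : ∀ t ∈ Set.Ioo (0:ℝ) 1,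
        F lam t = if t < θ0 then 0 else if t < τ then A0 else lam := by
      rintro t ⟨ht0, ht1⟩
      have hfr : Int.fract t = t := Int.fract_eq_self.2 ⟨ht0.le, ht1⟩
      have hW0 : (∫ s in (0:ℝ)..t, A s)
          = A0 * max (t - θ0) 0 := by
        rw [hAeq, W_formula θ0 A0 hθ0 hθ0lt1.le ht0.le, hfr,
          Int.floor_eq_zero_iff.2 ⟨ht0.le, ht1⟩, Int.fract_zero, Int.floor_zero]
        rw [max_eq_right (by linarith : (0:ℝ) - θ0 ≤ 0)]
        push_cast
        ring
      by_cases h1 : t < θ0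
      · rw [if_pos h1]
        rcases eq_or_lt_of_le hl0 with hl | hl
        · rw [← hl]
          apply hF1
          intro t₁ ht₁
          rw [zero_mul]
          apply intervalIntegral.integral_nonneg ht₁.le
          intro s _
          rw [hAeq]
          dsimp only
          split_ifs
          · exact le_rfl
          · exact hA0.le
        · rw [hF2 lam t ?_, hAstop t (by rwa [hfr])]
          intro hcon
          have hc := hcon 0 ht0
          rw [hW0, max_eq_right (by linarith : t - θ0 ≤ 0)] at hc
          nlinarith [mul_pos hl ht0]
      · push_neg at h1
        rw [if_neg (not_lt.2 h1)]
        by_cases h2 : t < τ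
        · rw [if_pos h2, hF2 lam t ?_, hAon t (by rw [hfr]; exact h1)]
          intro hcon
          have hc := hcon 0 ht0
          rw [hW0, max_eq_left (by linarith : (0:ℝ) ≤ t - θ0)] at hc
          rw [hτiff] at h2
          nlinarith [hc, h2]
        · push_neg at h2
          rw [if_neg (not_lt.2 h2)]
          apply hF1
          apply cond_holds θ0 A0 lam hθ0 hθ0lt1 hA0 hl0 hlub' A hAeq ht0.le ht1
          rw [max_eq_left (by linarith : (0:ℝ) ≤ t - θ0)]
          have hkey : A0 * θ0 ≤ (A0 - lam) * t := by
            nlinarith [hτeq, mul_nonneg hAlam.le (sub_nonneg.2 h2)]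
          nlinarith [hkey]
    -- lhat1 value
    set m := min τ (θ0 + θ1) with hmd
    have hm1 : θ0 ≤ m := le_min hτθ0 (by linarith)
    have hm2 : m ≤ θ0 + θ1 := min_le_right _ _
    have hv1 : lhat1 lam = A0 * (m - θ0) + lam * ((θ0 + θ1) - m) := by
      rw [hlh1]
      have heq : Set.EqOn (Set.indicator I1 (F lam))
          (fun t => (if θ0 ≤ t ∧ t < m then A0 else 0)
            + (if m ≤ t ∧ t < θ0 + θ1 then lam else 0)) (Set.uIcc 0 1) := by
        intro t ht
        dsimp only
        rw [Set.uIcc_of_le (by norm_num : (0:ℝ) ≤ 1)] at ht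
        rcases eq_or_lt_of_le ht.2 with h1 | h1
        · have : t = 1 := h1
          subst this
          rw [Set.indicator_of_notMem (by rw [hI1]; simp [Int.fract_one]; intro h; linarith)]
          rw [if_neg (by rintro ⟨-, h2⟩; linarith), if_neg (by rintro ⟨-, h2⟩; linarith)]
          norm_num
        · have hfr : Int.fract t = t := Int.fract_eq_self.2 ⟨ht.1, h1⟩
          by_cases hmem : θ0 ≤ t ∧ t < θ0 + θ1
          · rw [Set.indicator_of_mem (by
              rw [hI1]
              show θ0 ≤ Int.fract t ∧ Int.fract t < θ0 + θ1
              rw [hfr]; exact hmem)]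
            rw [hFval t ⟨lt_of_lt_of_le hθ0 hmem.1, h1⟩, if_neg (not_lt.2 hmem.1)]
            by_cases hc : t < m
            · rw [if_pos (lt_of_lt_of_le hc (min_le_left _ _)), if_pos ⟨hmem.1, hc⟩,
                if_neg (by rintro ⟨h3, -⟩; exact absurd hc (not_lt.2 h3))]
              ring
            · push_neg at hc
              have hτt : τ ≤ t := by
                by_contra h
                push_neg at h
                exact absurd (lt_min h hmem.2) (not_lt.2 hc)
              rw [if_neg (not_lt.2 hτt),
                if_neg (by rintro ⟨-, h3⟩; exact absurd h3 (not_lt.2 hc)), if_pos ⟨hc, hmem.2⟩]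
              ring
          · push_neg at hmem
            rw [Set.indicator_of_notMem (by
              rw [hI1]
              show ¬(θ0 ≤ Int.fract t ∧ Int.fract t < θ0 + θ1)
              rw [hfr]
              rintro ⟨ha, hb⟩
              exact absurd (hmem ha) (not_le.2 hb))]
            have c1 : ¬(θ0 ≤ t ∧ t < m) := by
              rintro ⟨ha, hb⟩
              have := hmem ha
              have := lt_of_lt_of_le hb hm2
              linarith
            have c2 : ¬(m ≤ t ∧ t < θ0 + θ1) := by
              rintro ⟨ha, hb⟩
              have := hmem (le_trans hm1 ha)
              linarith
            rw [if_neg c1, if_neg c2]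
            norm_num
      rw [intervalIntegral.integral_congr heq,
        intervalIntegral.integral_add (step_intInt _ _ _ _ _) (step_intInt _ _ _ _ _),
        integral_step hθ0.le hm1 (by linarith : m ≤ 1),
        integral_step (by linarith : (0:ℝ) ≤ m) hm2 hθ011.le]
    -- lhat2 value
    set M := max τ (θ0 + θ1) with hMd
    have hM1 : θ0 + θ1 ≤ M := le_max_right _ _
    have hM2 : M ≤ 1 := max_le hτ1 hθ011.le
    have hv2 : lhat2 lam = A0 * (M - (θ0 + θ1)) + lam * (1 - M) := by
      rw [hlh2]
      have heq : Set.EqOn (Set.indicator I2 (F lam))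
          (fun t => (if θ0 + θ1 ≤ t ∧ t < M then A0 else 0)
            + (if M ≤ t ∧ t < 1 then lam else 0)) (Set.uIcc 0 1) := by
        intro t ht
        dsimp only
        rw [Set.uIcc_of_le (by norm_num : (0:ℝ) ≤ 1)] at ht
        rcases eq_or_lt_of_le ht.2 with h1 | h1
        · have : t = 1 := h1
          subst this
          rw [Set.indicator_of_notMem (by rw [hI2]; simp [Int.fract_one]; linarith)]
          rw [if_neg (by rintro ⟨-, h2⟩; linarith), if_neg (by rintro ⟨-, h2⟩; linarith)]
          norm_num
        · have hfr : Int.fract t = t := Int.fract_eq_self.2 ⟨ht.1, h1⟩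
          by_cases hmem : θ0 + θ1 ≤ t
          · rw [Set.indicator_of_mem (by
              rw [hI2]
              show θ0 + θ1 ≤ Int.fract t
              rw [hfr]; exact hmem)]
            rw [hFval t ⟨by linarith, h1⟩, if_neg (by push_neg; linarith)]
            by_cases hc : t < M
            · have hτt : t < τ := by
                by_contra h
                push_neg at h
                exact absurd (max_le h hmem) (not_le.2 hc)
              rw [if_pos hτt, if_pos ⟨hmem, hc⟩,
                if_neg (by rintro ⟨h3, -⟩; exact absurd hc (not_lt.2 h3))]
              ring
            · push_neg at hc
              rw [if_neg (not_lt.2 (le_trans (le_max_left _ _) hc)),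
                if_neg (by rintro ⟨-, h3⟩; exact absurd h3 (not_lt.2 hc)), if_pos ⟨hc, h1⟩]
              ring
          · rw [Set.indicator_of_notMem (by
              rw [hI2]
              show ¬(θ0 + θ1 ≤ Int.fract t)
              rw [hfr]; exact hmem)]
            push_neg at hmem
            rw [if_neg (by rintro ⟨ha, -⟩; linarith), if_neg (by rintro ⟨ha, -⟩; linarith)]
            norm_num
      rw [intervalIntegral.integral_congr heq,
        intervalIntegral.integral_add (step_intInt _ _ _ _ _) (step_intInt _ _ _ _ _),
        integral_step (by linarith : (0:ℝ) ≤ θ0 + θ1) hM1 hM2,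
        integral_step (by linarith : (0:ℝ) ≤ M) hM2 le_rfl]
    have hsum' : lam * (θ0 + θ1) + lam * θ2 = lam := by linear_combination lam * hsum
    have e1 : lhat1 lam = min (lam * (θ0 + θ1)) (A0 * θ1) := by
      rcases le_total τ (θ0 + θ1) with h | h
      · have hmm : m = τ := min_eq_left h
        have h' : A0 * θ0 ≤ (θ0 + θ1) * (A0 - lam) := by
          rw [hτd, div_le_iff₀ hAlam] at h
          linarith
        have hcase : lam * (θ0 + θ1) ≤ A0 * θ1 := by nlinarith [h']
        rw [hv1, hmm, min_eq_left hcase]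
        linear_combination hτeq
      · have hmm : m = θ0 + θ1 := min_eq_right h
        have h' : (θ0 + θ1) * (A0 - lam) ≤ A0 * θ0 := by
          rw [hτd, le_div_iff₀ hAlam] at h
          linarith
        have hcase : A0 * θ1 ≤ lam * (θ0 + θ1) := by nlinarith [h']
        rw [hv1, hmm, min_eq_right hcase]
        ring
    have e2 : lhat2 lam = max (lam * θ2) (lam - A0 * θ1) := by
      rcases le_total τ (θ0 + θ1) with h | h
      · have hMM : M = θ0 + θ1 := max_eq_right h
        have h' : A0 * θ0 ≤ (θ0 + θ1) * (A0 - lam) := by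
          rw [hτd, div_le_iff₀ hAlam] at h
          linarith
        have hcase : lam * (θ0 + θ1) ≤ A0 * θ1 := by nlinarith [h']
        rw [hv2, hMM, max_eq_left (by linarith)]
        linear_combination (-lam) * hsum
      · have hMM : M = τ := max_eq_left h
        have h' : (θ0 + θ1) * (A0 - lam) ≤ A0 * θ0 := by
          rw [hτd, le_div_iff₀ hAlam] at h
          linarith
        have hcase : A0 * θ1 ≤ lam * (θ0 + θ1) := by nlinarith [h']
        rw [hv2, hMM, max_eq_right (by linarith)]
        linear_combination hτeq
    refine ⟨e1, e2, ?_⟩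
    rw [e1, e2]
    rcases le_total (lam * (θ0 + θ1)) (A0 * θ1) with h | h
    · rw [min_eq_left h, max_eq_left (by linarith)]
      linarith
    · rw [min_eq_right h, max_eq_right (by linarith)]
      ring
  refine ⟨h₁, h₂, h₃, hmain, ?_⟩
  intro h12
  subst h12
  refine ⟨?_, ?_, ?_⟩
  · rintro lam ⟨hl0, hlub⟩
    obtain ⟨e1, e2, -⟩ := hmain lam ⟨hl0.le, hlub.le⟩
    rw [e1, e2]
    have hlA0 : lam < A0 := by nlinarith [mul_pos hA0 hθ0]
    apply max_lt
    · apply lt_min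
      · nlinarith [mul_pos hl0 hθ0]
      · nlinarith [mul_pos (sub_pos.2 hlA0) hθ1]
    · apply lt_min
      · nlinarith [mul_pos (sub_pos.2 hlA0) hθ1]
      · nlinarith [hlub]
  · obtain ⟨e1, e2, -⟩ := hmain 0 ⟨le_rfl, by positivity⟩
    rw [e1, e2, zero_mul, zero_mul, zero_sub]
    rw [min_eq_left (by positivity), max_eq_left (neg_nonpos.2 (by positivity))]
  · obtain ⟨e1, e2, -⟩ := hmain (A0 * (θ1 + θ1)) ⟨by positivity, le_rfl⟩
    rw [e1, e2]
    have hkey : 0 < A0 * θ1 * θ0 := by positivity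
    rw [min_eq_right (by nlinarith), max_eq_right (by nlinarith)]
    ring
end

section
/- Let f : [a,b] → ℝ be C¹ with f' > 0, concave, and ψ : ℝ → ℝ Lipschitz, 1-periodic with ψ'(t) ∈ [−f(b), −f(a)] a.e. Define ξ(s,y) = max_{p∈[a,b]}(−py + sf(p)) and w(t,x) = sup_{t₁ ≤ t}(ψ(t₁) − ξ(t−t₁, x)) for x ≥ 0. Then w is 1-periodic in t, the supremum is attained (it is a maximum) whenever f(b) > 0, w is globally Lipschitz continuous on ℝ × [0,∞), and w(t,0) = ψ(t) for all t ∈ ℝ. -/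
open MeasureTheory Filter Set Topology intervalIntegral

lemma ftc_lower {ψ : ℝ → ℝ} {K : NNReal} (hlip : LipschitzWith K ψ) {c : ℝ}
    (hd : ∀ᵐ x : ℝ, HasDerivAt ψ (deriv ψ x) x ∧ c ≤ deriv ψ x) :
    ∀ v u : ℝ, v ≤ u → c * (u - v) ≤ ψ u - ψ v := by
  intro v u hvu
  set φ := deriv ψ with hφ
  have hψc : Continuous ψ := hlip.continuous
  have hψint : ∀ p q : ℝ, IntervalIntegrable ψ volume p q := fun p q =>
    hψc.intervalIntegrable p q
  -- interval integrability of φ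
  have hφbd : ∀ᵐ x : ℝ, ‖φ x‖ ≤ K := by
    filter_upwards [hd] with x hx
    have hs := hasDerivAt_iff_tendsto_slope.mp hx.1
    have : ∀ y, |slope ψ x y| ≤ (K : ℝ) := by
      intro y
      rcases eq_or_ne y x with rfl | hy
      · simp [slope_def_field]
      · rw [slope_def_field, abs_div]
        rw [div_le_iff₀ (abs_pos.mpr (sub_ne_zero.mpr hy))]
        have := hlip.dist_le_mul y x
        simpa [Real.dist_eq] using this
    have habs : Tendsto (fun y => |slope ψ x y|) (𝓝[≠] x) (𝓝 |φ x|) := hs.abs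
    exact le_of_tendsto habs (Eventually.of_forall fun y => this y)
  have hφint : IntervalIntegrable φ volume v u := by
    rw [intervalIntegrable_iff]
    refine Integrable.mono' (g := fun _ => (K : ℝ)) ?_ ?_ ?_
    · exact integrableOn_const measure_Ioc_lt_top.ne
    · exact ((measurable_deriv ψ).aestronglyMeasurable).restrict
    · exact ae_restrict_of_ae hφbd
  set h : ℕ → ℝ := fun n => 1 / (n + 1) with hh
  have hpos : ∀ n, 0 < h n := fun n => by positivity
  have hh0 : Tendsto h atTop (𝓝 0) := tendsto_one_div_add_atTop_nhds_zero_nat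
  set F : ℕ → ℝ → ℝ := fun n x => (ψ (x + h n) - ψ x) / h n with hF
  -- DCT
  have hDCT : Tendsto (fun n => ∫ x in v..u, F n x) atTop (𝓝 (∫ x in v..u, φ x)) := by
    apply intervalIntegral.tendsto_integral_filter_of_dominated_convergence
      (bound := fun _ => (K : ℝ))
    · refine Eventually.of_forall fun n => Continuous.aestronglyMeasurable ?_ |>.restrict
      exact ((hψc.comp (continuous_id.add continuous_const)).sub hψc).div_const _
    · refine Eventually.of_forall fun n => Eventually.of_forall fun x _ => ?_
      have := hlip.dist_le_mul (x + h n) x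
      rw [Real.dist_eq, Real.dist_eq] at this
      simp only [hF, Real.norm_eq_abs, abs_div, abs_of_pos (hpos n)]
      rw [div_le_iff₀ (hpos n)]
      calc |ψ (x + h n) - ψ x| ≤ K * |x + h n - x| := this
        _ = K * h n := by rw [add_sub_cancel_left, abs_of_pos (hpos n)]
    · exact intervalIntegrable_const
    · filter_upwards [hd] with x hx _
      have hs := hasDerivAt_iff_tendsto_slope.mp hx.1
      have hg : Tendsto (fun n => x + h n) atTop (𝓝[≠] x) := by
        apply tendsto_nhdsWithin_of_tendsto_nhds_of_eventually_within
        · simpa using tendsto_const_nhds.add hh0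
        · exact Eventually.of_forall fun n => by
            simp [ne_eq]; positivity
      have := hs.comp hg
      convert this using 2 with n
      simp [Function.comp, hF, slope_def_field, add_sub_cancel_left]
  -- explicit form of the integrals
  have hId : ∀ n, ∫ x in v..u, F n x
      = ((∫ x in u..(u + h n), ψ x) - ∫ x in v..(v + h n), ψ x) / h n := by
    intro n
    have h1 : ∫ x in v..u, F n x
        = ((∫ x in v..u, ψ (x + h n)) - ∫ x in v..u, ψ x) / h n := by
      simp only [hF]
      rw [intervalIntegral.integral_div]
      congr 1
      exact intervalIntegral.integral_sub
        ((hψc.comp (continuous_id.add continuous_const)).intervalIntegrable v u) (hψint v u)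
    rw [h1, intervalIntegral.integral_comp_add_right]
    congr 1
    have e1 := intervalIntegral.integral_add_adjacent_intervals
      (hψint v (v + h n)) (hψint (v + h n) (u + h n))
    have e2 := intervalIntegral.integral_add_adjacent_intervals
      (hψint v u) (hψint u (u + h n))
    linarith
  -- endpoint estimate
  have hend : ∀ (p : ℝ) (n : ℕ), |(∫ x in p..(p + h n), ψ x) - h n * ψ p| ≤ K * h n * h n := by
    intro p n
    have hc : (∫ x in p..(p + h n), (ψ x - ψ p))
        = (∫ x in p..(p + h n), ψ x) - h n * ψ p := by
      rw [intervalIntegral.integral_sub (hψint _ _) intervalIntegrable_const,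
        intervalIntegral.integral_const]
      simp [smul_eq_mul]
      try ring_nf
    rw [← hc]
    have := intervalIntegral.norm_integral_le_of_norm_le_const (C := K * h n)
      (f := fun x => ψ x - ψ p) (a := p) (b := p + h n) ?_
    · simpa [Real.norm_eq_abs, abs_of_pos (hpos n), add_sub_cancel_left] using this
    · intro x hx
      rw [Set.uIoc_of_le (by linarith [hpos n])] at hx
      have h2 := hlip.dist_le_mul x p
      rw [Real.dist_eq, Real.dist_eq] at h2
      have h3 : |x - p| ≤ h n := by
        rw [abs_le]; constructor <;> linarith [hx.1, hx.2, hpos n]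
      calc ‖ψ x - ψ p‖ = |ψ x - ψ p| := rfl
        _ ≤ K * |x - p| := h2
        _ ≤ K * h n := by nlinarith [h3, NNReal.coe_nonneg K]
  have hlim2 : Tendsto (fun n => ∫ x in v..u, F n x) atTop (𝓝 (ψ u - ψ v)) := by
    have hb : ∀ n, ‖(∫ x in v..u, F n x) - (ψ u - ψ v)‖ ≤ 2 * K * h n := by
      intro n
      rw [hId n, Real.norm_eq_abs]
      have e1 := hend u n
      have e2 := hend v n
      have hne : h n ≠ 0 := (hpos n).ne'
      rw [div_sub' hne] at *
      · rw [abs_div, abs_of_pos (hpos n), div_le_iff₀ (hpos n)]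
        have : ((∫ x in u..(u + h n), ψ x) - ∫ x in v..(v + h n), ψ x) - h n * (ψ u - ψ v)
            = ((∫ x in u..(u + h n), ψ x) - h n * ψ u)
              - ((∫ x in v..(v + h n), ψ x) - h n * ψ v) := by ring
        calc |((∫ x in u..(u + h n), ψ x) - ∫ x in v..(v + h n), ψ x) - h n * (ψ u - ψ v)|
            ≤ |(∫ x in u..(u + h n), ψ x) - h n * ψ u|
              + |(∫ x in v..(v + h n), ψ x) - h n * ψ v| := by
              rw [this]; exact abs_sub _ _
          _ ≤ K * h n * h n + K * h n * h n := add_le_add e1 e2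
          _ = 2 * K * h n * h n := by ring
    have h0 : Tendsto (fun n => (∫ x in v..u, F n x) - (ψ u - ψ v)) atTop (𝓝 0) := by
      apply squeeze_zero_norm hb
      have h2K := hh0.const_mul (2 * (K : ℝ))
      rw [mul_zero] at h2K
      exact h2K
    have := h0.add_const (ψ u - ψ v)
    simpa using this
  have huniq : ∫ x in v..u, φ x = ψ u - ψ v := tendsto_nhds_unique hDCT hlim2
  have hmono : (∫ x in v..u, (fun _ => c) x) ≤ ∫ x in v..u, φ x :=
    intervalIntegral.integral_mono_ae hvu intervalIntegrable_const hφint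
      (hd.mono fun x hx => hx.2)
  rw [intervalIntegral.integral_const, huniq, smul_eq_mul] at hmono
  linarith [hmono]

/-- Properties of the explicit time-periodic solution
`w(t,x) = sup_{t₁ ≤ t}(ψ(t₁) − ξ(t−t₁,x))`: 1-periodicity in time, attainment of the
supremum, global Lipschitz continuity on `ℝ × [0,∞)`, and the boundary value `w(·,0) = ψ`. -/
theorem periodic_HJ_solution_properties
    (a b δ : ℝ) (hab : a < b) (hδ : 0 < δ) (f : ℝ → ℝ)
    (hf : ContDiffOn ℝ 2 f (Set.Icc a b))
    (hconc : ∀ p ∈ Set.Icc a b, iteratedDerivWithin 2 f (Set.Icc a b) p ≤ -δ)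
    (hmono : StrictMonoOn f (Set.Icc a b))
    (hfb : 0 < f b)
    (ψ : ℝ → ℝ) (ψ' : ℝ → ℝ)
    (hψlip : ∃ K : NNReal, LipschitzWith K ψ)
    (hψper : ∀ t, ψ (t + 1) = ψ t)
    (hψder : ∀ᵐ t : ℝ, HasDerivAt ψ (ψ' t) t ∧ ψ' t ∈ Set.Icc (-(f b)) (-(f a)))
    (ξ : ℝ → ℝ → ℝ)
    (hξ : ∀ s y, ξ s y = sSup ((fun p => -p * y + s * f p) '' Set.Icc a b))
    (w : ℝ → ℝ → ℝ)
    (hw : ∀ t x, w t x = sSup ((fun t₁ => ψ t₁ - ξ (t - t₁) x) '' Set.Iic t)) :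
    (∀ t x, w (t + 1) x = w t x) ∧
    (∀ t x : ℝ, 0 ≤ x → ∃ t₁ ≤ t, w t x = ψ t₁ - ξ (t - t₁) x) ∧
    (∃ K : NNReal, LipschitzOnWith K (fun q : ℝ × ℝ => w q.1 q.2)
      (Set.univ ×ˢ Set.Ici 0)) ∧
    (∀ t, w t 0 = ψ t) := by
  obtain ⟨K, hK⟩ := hψlip
  have ha : a ∈ Set.Icc a b := Set.left_mem_Icc.mpr hab.le
  have hbb : b ∈ Set.Icc a b := Set.right_mem_Icc.mpr hab.le
  have hfc : ContinuousOn f (Set.Icc a b) := hf.continuousOn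
  have hmon := hmono.monotoneOn
  -- attainment of ξ
  have hxi_attain : ∀ s y : ℝ, ∃ p ∈ Set.Icc a b,
      (∀ q ∈ Set.Icc a b, -q * y + s * f q ≤ -p * y + s * f p) ∧ ξ s y = -p * y + s * f p := by
    intro s y
    have hc : ContinuousOn (fun p => -p * y + s * f p) (Set.Icc a b) :=
      ((continuousOn_id.neg.mul continuousOn_const)).add (continuousOn_const.mul hfc)
    obtain ⟨p, hp, hmax⟩ := isCompact_Icc.exists_isMaxOn ⟨a, ha⟩ hc
    have hmax' : ∀ q ∈ Set.Icc a b, -q * y + s * f q ≤ -p * y + s * f p := fun q hq => hmax hq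
    refine ⟨p, hp, hmax', ?_⟩
    rw [hξ]
    apply le_antisymm
    · apply csSup_le ⟨_, Set.mem_image_of_mem _ ha⟩
      rintro r ⟨q, hq, rfl⟩; exact hmax' q hq
    · exact le_csSup ⟨-p * y + s * f p, by rintro r ⟨q, hq, rfl⟩; exact hmax' q hq⟩
        (Set.mem_image_of_mem _ hp)
  have hxi_le : ∀ s y q : ℝ, q ∈ Set.Icc a b → -q * y + s * f q ≤ ξ s y := by
    intro s y q hq
    obtain ⟨p, hp, hmax, heq⟩ := hxi_attain s y
    rw [heq]; exact hmax q hq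
  -- constants
  set C1 : ℝ := max |a| |b| with hC1def
  set C2 : ℝ := max |f a| |f b| with hC2def
  have habs : ∀ p ∈ Set.Icc a b, |p| ≤ C1 := fun p hp => abs_le_max_abs_abs hp.1 hp.2
  have habsf : ∀ p ∈ Set.Icc a b, |f p| ≤ C2 := fun p hp =>
    abs_le_max_abs_abs (hmon ha hp hp.1) (hmon hp hbb hp.2)
  have hC1 : 0 ≤ C1 := le_trans (abs_nonneg a) (le_max_left _ _)
  have hC2 : 0 ≤ C2 := le_trans (abs_nonneg (f a)) (le_max_left _ _)
  have hxi_lip : ∀ s s' y y' : ℝ, ξ s y ≤ ξ s' y' + C2 * |s - s'| + C1 * |y - y'| := by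
    intro s s' y y'
    obtain ⟨p, hp, _, heq⟩ := hxi_attain s y
    have h1 : -p * y' + s' * f p ≤ ξ s' y' := hxi_le s' y' p hp
    have h3 : -p * (y - y') ≤ C1 * |y - y'| :=
      calc -p * (y - y') ≤ |(-p) * (y - y')| := le_abs_self _
        _ = |p| * |y - y'| := by rw [abs_mul, abs_neg]
        _ ≤ C1 * |y - y'| := mul_le_mul_of_nonneg_right (habs p hp) (abs_nonneg _)
    have h4 : (s - s') * f p ≤ C2 * |s - s'| :=
      calc (s - s') * f p ≤ |(s - s') * f p| := le_abs_self _
        _ = |f p| * |s - s'| := by rw [abs_mul, mul_comm]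
        _ ≤ C2 * |s - s'| := mul_le_mul_of_nonneg_right (habsf p hp) (abs_nonneg _)
    have h5 : ξ s y = -p * y + s * f p := heq
    nlinarith [h1, h3, h4]
  have hxi0 : ∀ s : ℝ, 0 ≤ s → ξ s 0 = s * f b := by
    intro s hs
    obtain ⟨p, hp, hmax, heq⟩ := hxi_attain s 0
    apply le_antisymm
    · rw [heq]
      have : f p ≤ f b := hmon hp hbb hp.2
      nlinarith
    · have h := hxi_le s 0 b hbb
      nlinarith [h]
  -- bound on ψ
  set Cψ : ℝ := |ψ 0| + K with hCψdef
  have hper : Function.Periodic ψ 1 := hψper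
  have hψbdd : ∀ t : ℝ, |ψ t| ≤ Cψ := by
    intro t
    have h1 : ψ (t - ⌊t⌋) = ψ t := by
      have h := hper.sub_int_mul_eq (x := t) ⌊t⌋
      rwa [mul_one] at h
    have hf0 : (0 : ℝ) ≤ t - ⌊t⌋ := by linarith [Int.floor_le t]
    have hf1 : (t : ℝ) - ⌊t⌋ ≤ 1 := by linarith [Int.lt_floor_add_one t]
    have h2 := hK.dist_le_mul (t - ⌊t⌋) 0
    rw [Real.dist_eq, Real.dist_eq, sub_zero] at h2
    have h3 : |(t : ℝ) - ⌊t⌋| ≤ 1 := by rw [abs_of_nonneg hf0]; exact hf1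
    have h4 : |ψ (t - ⌊t⌋)| ≤ |ψ 0| + K * |(t : ℝ) - ⌊t⌋| := by
      calc |ψ (t - ⌊t⌋)| ≤ |ψ (t - ⌊t⌋) - ψ 0| + |ψ 0| := by
            have := abs_sub_abs_le_abs_sub (ψ (t - ⌊t⌋)) (ψ 0); linarith [abs_nonneg (ψ 0)]
        _ ≤ K * |(t : ℝ) - ⌊t⌋| + |ψ 0| := by linarith [h2]
        _ = |ψ 0| + K * |(t : ℝ) - ⌊t⌋| := by ring
    rw [← h1]
    have : (K : ℝ) * |(t : ℝ) - ⌊t⌋| ≤ K := by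
      nlinarith [NNReal.coe_nonneg K, h3, abs_nonneg ((t : ℝ) - ⌊t⌋)]
    simp only [hCψdef]
    linarith
  -- facts about the defining set of w
  have hWne : ∀ t x : ℝ, ((fun t₁ => ψ t₁ - ξ (t - t₁) x) '' Set.Iic t).Nonempty :=
    fun t x => ⟨_, Set.mem_image_of_mem _ (Set.mem_Iic.mpr le_rfl)⟩
  have hWub : ∀ t x : ℝ, ∀ r ∈ (fun t₁ => ψ t₁ - ξ (t - t₁) x) '' Set.Iic t,
      r ≤ Cψ + b * x := by
    rintro t x r ⟨t₁, ht₁, rfl⟩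
    have h1 : -b * x + (t - t₁) * f b ≤ ξ (t - t₁) x := hxi_le _ _ b hbb
    have h2 : 0 ≤ (t - t₁) * f b :=
      mul_nonneg (sub_nonneg.mpr (Set.mem_Iic.mp ht₁)) hfb.le
    have h3 := le_of_abs_le (hψbdd t₁)
    simp only
    linarith
  have hWbdd : ∀ t x : ℝ, BddAbove ((fun t₁ => ψ t₁ - ξ (t - t₁) x) '' Set.Iic t) :=
    fun t x => ⟨Cψ + b * x, fun r hr => hWub t x r hr⟩
  -- Part 1: periodicity
  have part1 : ∀ t x, w (t + 1) x = w t x := by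
    intro t x
    rw [hw, hw]
    congr 1
    ext r
    simp only [Set.mem_image, Set.mem_Iic]
    constructor
    · rintro ⟨t₁, ht₁, rfl⟩
      refine ⟨t₁ - 1, by linarith, ?_⟩
      have e1 : ψ (t₁ - 1) = ψ t₁ := by
        have h := hψper (t₁ - 1)
        have e0 : t₁ - 1 + 1 = t₁ := by ring
        rw [e0] at h
        exact h.symm
      rw [e1]
      congr 2
      ring
    · rintro ⟨t₁, ht₁, rfl⟩
      refine ⟨t₁ + 1, by linarith, ?_⟩
      rw [hψper t₁]
      congr 2
      ring
  -- continuity of ξ in s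
  have hxicont : ∀ x : ℝ, Continuous fun s => ξ s x := by
    intro x
    have hlip : LipschitzWith C2.toNNReal fun s => ξ s x := by
      apply LipschitzWith.of_dist_le_mul
      intro s s'
      rw [Real.dist_eq, Real.dist_eq, Real.coe_toNNReal _ hC2]
      have l1 := hxi_lip s s' x x
      have l2 := hxi_lip s' s x x
      rw [sub_self, abs_zero] at l1 l2
      rw [abs_sub_le_iff]
      constructor
      · linarith
      · rw [abs_sub_comm]; linarith
    exact hlip.continuous
  -- Part 2: attainment
  have part2 : ∀ t x : ℝ, 0 ≤ x → ∃ t₁ ≤ t, w t x = ψ t₁ - ξ (t - t₁) x := by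
    intro t x hx
    set g : ℝ → ℝ := fun t₁ => ψ t₁ - ξ (t - t₁) x with hgdef
    have hgc : Continuous g :=
      hK.continuous.sub ((hxicont x).comp (continuous_const.sub continuous_id))
    set M : ℝ := max 0 ((2 * Cψ + (b - a) * x) / f b) with hMdef
    have hM0 : 0 ≤ M := le_max_left _ _
    have hMb : 2 * Cψ + (b - a) * x ≤ M * f b := by
      have h := le_max_right 0 ((2 * Cψ + (b - a) * x) / f b)
      calc 2 * Cψ + (b - a) * x = (2 * Cψ + (b - a) * x) / f b * f b := by
            field_simp
        _ ≤ M * f b := mul_le_mul_of_nonneg_right h hfb.le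
    have hgt : ∀ t₁, t₁ ≤ t - M → g t₁ ≤ g t := by
      intro t₁ ht₁
      have h1 : -b * x + (t - t₁) * f b ≤ ξ (t - t₁) x := hxi_le _ _ b hbb
      have h2 : M * f b ≤ (t - t₁) * f b :=
        mul_le_mul_of_nonneg_right (by linarith) hfb.le
      have h3 : ξ 0 x ≤ -a * x := by
        obtain ⟨p, hp, _, heq⟩ := hxi_attain 0 x
        rw [heq]
        have : a * x ≤ p * x := mul_le_mul_of_nonneg_right hp.1 hx
        nlinarith
      have h4 := abs_le.mp (hψbdd t₁)
      have h5 := abs_le.mp (hψbdd t)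
      show ψ t₁ - ξ (t - t₁) x ≤ ψ t - ξ (t - t) x
      rw [sub_self]
      linarith
    obtain ⟨t₁, ht₁, hmax⟩ := isCompact_Icc.exists_isMaxOn (s := Set.Icc (t - M) t)
      ⟨t, by constructor <;> linarith⟩ hgc.continuousOn
    refine ⟨t₁, ht₁.2, ?_⟩
    rw [hw]
    apply le_antisymm
    · apply csSup_le (hWne t x)
      rintro r ⟨t₂, ht₂, rfl⟩
      have ht₂' : t₂ ≤ t := Set.mem_Iic.mp ht₂
      by_cases hc : t - M ≤ t₂
      · exact hmax (⟨hc, ht₂'⟩ : t₂ ∈ Set.Icc (t - M) t)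
      · push_neg at hc
        have hgt2 := hgt t₂ (by linarith)
        have h2 : g t ≤ g t₁ := hmax (⟨by linarith, le_rfl⟩ : t ∈ Set.Icc (t - M) t)
        calc ψ t₂ - ξ (t - t₂) x = g t₂ := rfl
          _ ≤ g t := hgt2
          _ ≤ g t₁ := h2
    · exact le_csSup (hWbdd t x) (Set.mem_image_of_mem _ ht₁.2)
  -- one-sided Lipschitz estimate for w
  have hkey : ∀ t x t' x' : ℝ, w t x ≤ w t' x' + ((K : ℝ) * |t - t'| + C1 * |x - x'|) := by
    intro t x t' x'
    rw [hw t x]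
    apply csSup_le (hWne t x)
    rintro r ⟨t₁, ht₁, rfl⟩
    have ht₁' : t₁ ≤ t := Set.mem_Iic.mp ht₁
    have hd := hK.dist_le_mul t₁ (t₁ + (t' - t))
    rw [Real.dist_eq, Real.dist_eq] at hd
    have e : t₁ - (t₁ + (t' - t)) = t - t' := by ring
    rw [e] at hd
    have h1 : ψ t₁ ≤ ψ (t₁ + (t' - t)) + (K : ℝ) * |t - t'| := by
      have := le_trans (le_abs_self _) hd
      linarith
    have h2 : ξ (t - t₁) x' ≤ ξ (t - t₁) x + C1 * |x' - x| := by
      have := hxi_lip (t - t₁) (t - t₁) x' x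
      rw [sub_self, abs_zero] at this
      linarith
    have hmem : ψ (t₁ + (t' - t)) - ξ (t' - (t₁ + (t' - t))) x' ∈
        (fun s₁ => ψ s₁ - ξ (t' - s₁) x') '' Set.Iic t' :=
      Set.mem_image_of_mem _ (Set.mem_Iic.mpr (by linarith))
    have h3 := le_csSup (hWbdd t' x') hmem
    have e2 : t' - (t₁ + (t' - t)) = t - t₁ := by ring
    rw [e2] at h3
    rw [hw t' x']
    have habs' : |x' - x| = |x - x'| := abs_sub_comm _ _
    rw [habs'] at h2
    show ψ t₁ - ξ (t - t₁) x ≤ _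
    linarith
  have part3 : ∃ Kw : NNReal, LipschitzOnWith Kw (fun q : ℝ × ℝ => w q.1 q.2)
      (Set.univ ×ˢ Set.Ici 0) := by
    refine ⟨K + C1.toNNReal, ?_⟩
    rw [lipschitzOnWith_iff_dist_le_mul]
    rintro ⟨t, x⟩ _ ⟨t', x'⟩ _
    have hKw : ((K + C1.toNNReal : NNReal) : ℝ) = (K : ℝ) + C1 := by
      push_cast
      rw [Real.coe_toNNReal _ hC1]
    rw [Prod.dist_eq, Real.dist_eq, hKw]
    set D : ℝ := max (dist t t') (dist x x') with hDdef
    have hD0 : 0 ≤ D := le_trans dist_nonneg (le_max_left _ _)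
    have hd1 : |t - t'| ≤ D := by
      rw [← Real.dist_eq]; exact le_max_left _ _
    have hd2 : |x - x'| ≤ D := by
      rw [← Real.dist_eq]; exact le_max_right _ _
    have k1 := hkey t x t' x'
    have k2 := hkey t' x' t x
    rw [abs_sub_comm t' t, abs_sub_comm x' x] at k2
    rw [abs_sub_le_iff]
    have hb1 : (K : ℝ) * |t - t'| ≤ (K : ℝ) * D :=
      mul_le_mul_of_nonneg_left hd1 (NNReal.coe_nonneg K)
    have hb2 : C1 * |x - x'| ≤ C1 * D := mul_le_mul_of_nonneg_left hd2 hC1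
    constructor <;> · simp only; nlinarith [k1, k2, hb1, hb2]
  -- Part 4: boundary value
  have part4 : ∀ t, w t 0 = ψ t := by
    have hψd : ∀ᵐ x : ℝ, HasDerivAt ψ (deriv ψ x) x ∧ -(f b) ≤ deriv ψ x := by
      filter_upwards [hψder] with x hx
      have hdx : deriv ψ x = ψ' x := hx.1.deriv
      rw [hdx]
      exact ⟨hx.1, hx.2.1⟩
    have hftc := ftc_lower hK hψd
    intro t
    rw [hw]
    apply le_antisymm
    · apply csSup_le (hWne t 0)
      rintro r ⟨t₁, ht₁, rfl⟩
      have ht₁' : t₁ ≤ t := Set.mem_Iic.mp ht₁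
      simp only
      rw [hxi0 (t - t₁) (sub_nonneg.mpr ht₁')]
      have := hftc t₁ t ht₁'
      linarith
    · have hmem : ψ t - ξ (t - t) 0 ∈ (fun t₁ => ψ t₁ - ξ (t - t₁) 0) '' Set.Iic t :=
        Set.mem_image_of_mem _ (Set.mem_Iic.mpr le_rfl)
      have h0 : ξ (t - t) 0 = 0 := by
        rw [sub_self, hxi0 0 le_rfl, zero_mul]
      have h3 := le_csSup (hWbdd t 0) hmem
      rw [h0, sub_zero] at h3
      exact h3
  exact ⟨part1, part2, part3, part4⟩
end

section
/- (Concave λ̂¹ from decreasing A.) Let A : ℝ → [0,∞) be C¹, 1-periodic, decreasing on [t₀,t₁] and increasing on [t₁,t₀+1], with 0 < t₁ − t₀ < 1. Let λ̄⁰ = ∫₀¹ A and t̄₀ ∈ [t₀,t₁] with A(t̄₀) = λ̄⁰; assume A' < 0 on [t̄₀, t₁), I¹ = [t̄₀, t₁] mod 1, and normalize t̄₀ = 0. Then the homogenized flux λ̂¹ is C¹ and concave on [0, λ̄⁰], with derivative (λ̂¹)'(λ) = (A|_{[0,t₁]})⁻¹(λ) ∈ [0,1) for λ ∈ (A(t₁),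 A(0)], and (λ̂¹)'(λ) = t₁ = |I¹| for λ ∈ [0, A(t₁)); in particular λ̂¹ is linear on [0, A(t₁)] and strictly concave (C²) on (A(t₁), λ̄⁰]. -/
open MeasureTheory

/-- Concave homogenized flux `λ̂¹` obtained from a unimodal `C¹` limiter `A` (decreasing then
increasing), with `t̄₀` normalized to `0`: `λ̂¹` is `C¹` and concave on `[0, λ̄⁰]`, with
derivative `t₁ = |I¹|` on `[0, A(t₁))` and `(A|_{[0,t₁]})⁻¹(λ) ∈ [0,1)` on `(A(t₁), A(0)]`,
linear on `[0, A(t₁)]`, strictly concave on `(A(t₁), λ̄⁰]`, and `(λ̂¹)'(λ̄⁰) = 0`. -/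
theorem concave_hat_lambda
    (t0 t1 : ℝ) (ht0 : t0 ≤ 0) (ht1 : 0 < t1) (ht01 : t0 < t1) (htper : t1 < t0 + 1)
    (A : ℝ → ℝ)
    (hA : ContDiff ℝ 1 A) (hAnn : ∀ t, 0 ≤ A t) (hAper : ∀ t, A (t + 1) = A t)
    (hAdec : AntitoneOn A (Set.Icc t0 t1)) (hAinc : MonotoneOn A (Set.Icc t1 (t0 + 1)))
    (hA0 : A 0 = ∫ t in (0:ℝ)..1, A t)
    (hAder : ∀ t ∈ Set.Ico (0:ℝ) t1, deriv A t < 0)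
    (I1 : Set ℝ) (hI1 : I1 = {t : ℝ | ∃ k : ℤ, t - k ∈ Set.Icc 0 t1})
    (F : ℝ → ℝ → ℝ)
    (hF1 : ∀ μ t, (∀ t₁ < t, μ * (t - t₁) ≤ ∫ s in t₁..t, A s) → F μ t = μ)
    (hF2 : ∀ μ t, ¬ (∀ t₁ < t, μ * (t - t₁) ≤ ∫ s in t₁..t, A s) → F μ t = A t)
    (lhat1 : ℝ → ℝ)
    (hlh1 : ∀ lam, lhat1 lam = ∫ t in (0:ℝ)..1, Set.indicator I1 (F lam) t) :
    ConcaveOn ℝ (Set.Icc 0 (A 0)) lhat1 ∧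
    (∃ d : ℝ → ℝ, ContinuousOn d (Set.Icc 0 (A 0)) ∧
      ∀ lam ∈ Set.Icc 0 (A 0), HasDerivWithinAt lhat1 (d lam) (Set.Icc 0 (A 0)) lam) ∧
    (∀ lam ∈ Set.Ico 0 (A t1),
      HasDerivWithinAt lhat1 t1 (Set.Icc 0 (A 0)) lam) ∧
    (∀ lam ∈ Set.Ioc (A t1) (A 0), ∃ s : ℝ,
      s ∈ Set.Icc 0 t1 ∧ s < 1 ∧ A s = lam ∧
      HasDerivWithinAt lhat1 s (Set.Icc 0 (A 0)) lam) ∧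
    StrictConcaveOn ℝ (Set.Ioc (A t1) (A 0)) lhat1 ∧
    HasDerivWithinAt lhat1 0 (Set.Icc 0 (A 0)) (A 0) := by
  have hAc : Continuous A := hA.continuous
  have hAi : ∀ a b : ℝ, IntervalIntegrable A volume a b := fun a b =>
    hAc.intervalIntegrable a b
  have ht11 : t1 < 1 := by linarith
  have hsub : Set.Icc (0:ℝ) t1 ⊆ Set.Icc t0 t1 := Set.Icc_subset_Icc ht0 le_rfl
  have hAanti : AntitoneOn A (Set.Icc 0 t1) := hAdec.mono hsub
  have h0mem : (0:ℝ) ∈ Set.Icc (0:ℝ) t1 := ⟨le_rfl, ht1.le⟩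
  have ht1mem : t1 ∈ Set.Icc (0:ℝ) t1 := ⟨ht1.le, le_rfl⟩
  have hAsa : StrictAntiOn A (Set.Icc 0 t1) := by
    apply strictAntiOn_of_deriv_neg (convex_Icc 0 t1) hAc.continuousOn
    intro x hx
    rw [interior_Icc] at hx
    exact hAder x ⟨hx.1.le, hx.2⟩
  have hAt1lt : A t1 < A 0 := hAsa h0mem ht1mem ht1
  have hAt1le : A t1 ≤ A 0 := hAt1lt.le
  have hper : Function.Periodic A 1 := hAper
  have hint1 : ∀ a : ℝ, (∫ s in a..(a+1), A s) = A 0 := by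
    intro a
    rw [hA0]
    simpa using hper.intervalIntegral_add_eq a 0
  have hAleA0 : ∀ s ∈ Set.Icc (0:ℝ) t1, A s ≤ A 0 := fun s hs => hAanti h0mem hs hs.1
  have hAgeA0 : ∀ s : ℝ, t0 + 1 ≤ s → s ≤ 1 → A 0 ≤ A s := by
    intro s h1 h2
    have he : A s = A (s - 1) := by
      have := hAper (s - 1)
      simpa using this
    rw [he]
    exact hAdec ⟨by linarith, by linarith⟩ ⟨ht0, ht1.le⟩ (by linarith)
  have hsplit01 : ∀ u : ℝ, (∫ s in (0:ℝ)..u, A s) + ∫ s in u..1, A s = A 0 := by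
    intro u
    rw [intervalIntegral.integral_add_adjacent_intervals (hAi 0 u) (hAi u 1), ← hA0]
  -- Key lemma: the averages of `A` over right subintervals of `[0,1]` are at least `A 0`.
  have hK' : ∀ u ∈ Set.Icc (0:ℝ) 1, (1 - u) * A 0 ≤ ∫ s in u..1, A s := by
    intro u hu
    rcases le_total u t1 with h | h
    · have h1 : (∫ s in (0:ℝ)..u, A s) ≤ u * A 0 := by
        calc (∫ s in (0:ℝ)..u, A s) ≤ ∫ s in (0:ℝ)..u, A 0 :=
              intervalIntegral.integral_mono_on hu.1 (hAi 0 u) intervalIntegrable_const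
                (fun s hs => hAleA0 s ⟨hs.1, hs.2.trans h⟩)
          _ = u * A 0 := by rw [intervalIntegral.integral_const, smul_eq_mul]; try ring
      linarith [hsplit01 u]
    · rcases le_total u (t0 + 1) with h2 | h2
      · rcases le_total (A u) (A 0) with h3 | h3
        · have e : (∫ s in (0:ℝ)..u, A s)
              = (∫ s in (0:ℝ)..t1, A s) + ∫ s in t1..u, A s :=
            (intervalIntegral.integral_add_adjacent_intervals (hAi 0 t1) (hAi t1 u)).symm
          have b1 : (∫ s in (0:ℝ)..t1, A s) ≤ t1 * A 0 := by
            calc (∫ s in (0:ℝ)..t1, A s) ≤ ∫ s in (0:ℝ)..t1, A 0 :=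
                  intervalIntegral.integral_mono_on ht1.le (hAi 0 t1) intervalIntegrable_const
                    (fun s hs => hAleA0 s hs)
              _ = t1 * A 0 := by rw [intervalIntegral.integral_const, smul_eq_mul]; try ring
          have b2 : (∫ s in t1..u, A s) ≤ (u - t1) * A 0 := by
            calc (∫ s in t1..u, A s) ≤ ∫ s in t1..u, A 0 :=
                  intervalIntegral.integral_mono_on h (hAi t1 u) intervalIntegrable_const
                    (fun s hs => (hAinc ⟨hs.1, hs.2.trans h2⟩ ⟨h, h2⟩ hs.2).trans h3)
              _ = (u - t1) * A 0 := by rw [intervalIntegral.integral_const, smul_eq_mul]; try ring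
          linarith [hsplit01 u]
        · have e : (∫ s in u..1, A s)
              = (∫ s in u..(t0+1), A s) + ∫ s in (t0+1)..1, A s :=
            (intervalIntegral.integral_add_adjacent_intervals (hAi u (t0+1)) (hAi (t0+1) 1)).symm
          have b1 : (t0 + 1 - u) * A 0 ≤ ∫ s in u..(t0+1), A s := by
            calc (t0 + 1 - u) * A 0 = ∫ s in u..(t0+1), A 0 := by
                  rw [intervalIntegral.integral_const, smul_eq_mul]; try ring
              _ ≤ ∫ s in u..(t0+1), A s :=
                  intervalIntegral.integral_mono_on h2 intervalIntegrable_const (hAi u (t0+1))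
                    (fun s hs => h3.trans (hAinc ⟨h, h2⟩ ⟨h.trans hs.1, hs.2⟩ hs.1))
          have b2 : (1 - (t0 + 1)) * A 0 ≤ ∫ s in (t0+1)..1, A s := by
            calc (1 - (t0 + 1)) * A 0 = ∫ s in (t0+1)..1, A 0 := by
                  rw [intervalIntegral.integral_const, smul_eq_mul]; try ring
              _ ≤ ∫ s in (t0+1)..1, A s :=
                  intervalIntegral.integral_mono_on (by linarith) intervalIntegrable_const
                    (hAi (t0+1) 1) (fun s hs => hAgeA0 s hs.1 hs.2)
          linarith
      · calc (1 - u) * A 0 = ∫ s in u..1, A 0 := by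
              rw [intervalIntegral.integral_const, smul_eq_mul]; try ring
          _ ≤ ∫ s in u..1, A s :=
              intervalIntegral.integral_mono_on hu.2 intervalIntegrable_const (hAi u 1)
                (fun s hs => hAgeA0 s (h2.trans hs.1) hs.2)
  -- Lemma B: all backward averages at points of `[0,t1]` where `A t ≥ lam` are at least `lam`.
  have hB : ∀ lam : ℝ, lam ≤ A 0 → ∀ t ∈ Set.Icc 0 t1, lam ≤ A t →
      ∀ t₁ < t, lam * (t - t₁) ≤ ∫ s in t₁..t, A s := by
    intro lam hlam t ht hlA
    have hAget : ∀ s ∈ Set.Icc (0:ℝ) t, lam ≤ A s := fun s hs =>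
      hlA.trans (hAanti ⟨hs.1, hs.2.trans ht.2⟩ ht hs.2)
    have hbase : ∀ t₁, t - 1 ≤ t₁ → t₁ < t → lam * (t - t₁) ≤ ∫ s in t₁..t, A s := by
      intro t₁ hge hlt
      rcases le_or_gt 0 t₁ with h0 | h0
      · have hptw : ∀ s ∈ Set.Icc t₁ t, lam ≤ A s := fun s hs =>
          hAget s ⟨h0.trans hs.1, hs.2⟩
        calc lam * (t - t₁) = ∫ s in t₁..t, lam := by
              rw [intervalIntegral.integral_const, smul_eq_mul]; try ring
          _ ≤ ∫ s in t₁..t, A s :=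
              intervalIntegral.integral_mono_on hlt.le intervalIntegrable_const (hAi t₁ t) hptw
      · have hsplit : (∫ s in t₁..t, A s)
            = (∫ s in t₁..(0:ℝ), A s) + ∫ s in (0:ℝ)..t, A s :=
          (intervalIntegral.integral_add_adjacent_intervals (hAi t₁ 0) (hAi 0 t)).symm
        have hshift : (∫ s in t₁..(0:ℝ), A s) = ∫ s in (t₁+1)..1, A s := by
          have h := intervalIntegral.integral_comp_add_right (a := t₁) (b := 0) (f := A) 1
          simp only [hAper] at h
          rw [show (0:ℝ) + 1 = 1 by norm_num] at h
          exact h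
        have hu : t₁ + 1 ∈ Set.Icc (0:ℝ) 1 := ⟨by linarith [ht.1], by linarith⟩
        have hK1 : (1 - (t₁+1)) * A 0 ≤ ∫ s in (t₁+1)..1, A s := hK' _ hu
        have h2 : lam * t ≤ ∫ s in (0:ℝ)..t, A s := by
          calc lam * t = ∫ s in (0:ℝ)..t, lam := by
                rw [intervalIntegral.integral_const, smul_eq_mul]; try ring
            _ ≤ ∫ s in (0:ℝ)..t, A s :=
                intervalIntegral.integral_mono_on ht.1 intervalIntegrable_const (hAi 0 t) hAget
        have h3 : (-t₁) * lam ≤ (1 - (t₁+1)) * A 0 := by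
          have := mul_le_mul_of_nonneg_left hlam (by linarith : (0:ℝ) ≤ -t₁)
          nlinarith
        have e : lam * (t - t₁) = lam * t + (-t₁) * lam := by ring
        rw [hsplit, hshift, e]
        linarith
    have hind : ∀ n : ℕ, ∀ t₁, t - t₁ ≤ (n : ℝ) + 1 → t₁ < t →
        lam * (t - t₁) ≤ ∫ s in t₁..t, A s := by
      intro n
      induction n with
      | zero =>
        intro t₁ h1 h2
        refine hbase t₁ ?_ h2
        push_cast at h1
        linarith
      | succ n ih =>
        intro t₁ h1 h2
        rcases le_or_gt (t - t₁) ((n : ℝ) + 1) with hc | hc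
        · exact ih t₁ hc h2
        · have hn0 : (0:ℝ) ≤ (n : ℝ) := Nat.cast_nonneg n
          have hlt1 : t₁ + 1 < t := by linarith
          have key := ih (t₁+1) (by push_cast at h1 ⊢; linarith) hlt1
          have hsp : (∫ s in t₁..t, A s)
              = (∫ s in t₁..(t₁+1), A s) + ∫ s in (t₁+1)..t, A s :=
            (intervalIntegral.integral_add_adjacent_intervals (hAi t₁ (t₁+1)) (hAi (t₁+1) t)).symm
          have hA0' := hint1 t₁
          have e : lam * (t - t₁) = lam + lam * (t - (t₁+1)) := by ring
          rw [hsp, hA0', e]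
          linarith
    intro t₁ hlt
    exact hind ⌈t - t₁⌉₊ t₁ (by linarith [Nat.le_ceil (t - t₁)]) hlt
  -- Lemma C
  have hC : ∀ lam t : ℝ, A t < lam → F lam t = A t := by
    intro lam t hAt
    apply hF2
    intro hcon
    have hεpos : (0:ℝ) < (lam - A t)/2 := by linarith
    obtain ⟨δ, hδpos, hδ⟩ := Metric.continuousAt_iff.1 hAc.continuousAt ((lam - A t)/2) hεpos
    have hlt : t - δ/2 < t := by linarith
    have hbound : ∀ s ∈ Set.Icc (t - δ/2) t, A s ≤ A t + (lam - A t)/2 := by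
      intro s hs
      have hd : dist s t < δ := by
        rw [Real.dist_eq, abs_lt]
        constructor
        · linarith [hs.1]
        · linarith [hs.2]
      have := hδ hd
      rw [Real.dist_eq, abs_lt] at this
      linarith [this.1, this.2]
    have h1 := hcon (t - δ/2) hlt
    have h2 : (∫ s in (t - δ/2)..t, A s) ≤ (δ/2) * (A t + (lam - A t)/2) := by
      calc (∫ s in (t - δ/2)..t, A s) ≤ ∫ s in (t - δ/2)..t, (A t + (lam - A t)/2) :=
            intervalIntegral.integral_mono_on hlt.le (hAi _ _) intervalIntegrable_const hbound
        _ = (δ/2) * (A t + (lam - A t)/2) := by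
            rw [intervalIntegral.integral_const, smul_eq_mul]; try ring
    have e : t - (t - δ/2) = δ/2 := by ring
    rw [e] at h1
    nlinarith
  -- the explicit formula for F on [0, t1]
  have hFmin : ∀ lam : ℝ, lam ≤ A 0 → ∀ t ∈ Set.Icc (0:ℝ) t1, F lam t = min lam (A t) := by
    intro lam hlam t ht
    rcases le_or_gt lam (A t) with h | h
    · rw [hF1 lam t (hB lam hlam t ht h), min_eq_left h]
    · rw [hC lam t h, min_eq_right h.le]
  -- the auxiliary function Φ
  set Phi : ℝ → ℝ := fun lam => ∫ t in (0:ℝ)..t1, min lam (A t) with hPhidef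
  have hmc : ∀ lam : ℝ, Continuous fun t => min lam (A t) := fun lam => continuous_const.min hAc
  have hmi : ∀ (lam : ℝ) (a b : ℝ), IntervalIntegrable (fun t => min lam (A t)) volume a b :=
    fun lam a b => (hmc lam).intervalIntegrable a b
  -- lhat1 = Phi on (-∞, A 0]
  have hlP : ∀ lam : ℝ, lam ≤ A 0 → lhat1 lam = Phi lam := by
    intro lam hlam
    rw [hlh1]
    have step1 : (∫ t in (0:ℝ)..1, Set.indicator I1 (F lam) t)
        = ∫ t in (0:ℝ)..1, Set.indicator (Set.Icc 0 t1) (fun t => min lam (A t)) t := by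
      apply intervalIntegral.integral_congr_ae
      have h1 : ∀ᵐ x : ℝ, x ∉ ({1} : Set ℝ) :=
        measure_eq_zero_iff_ae_notMem.mp Real.volume_singleton
      filter_upwards [h1] with x hx hxI
      rw [Set.uIoc_of_le (by norm_num : (0:ℝ) ≤ 1)] at hxI
      have hx1 : x < 1 := lt_of_le_of_ne hxI.2 (by simpa using hx)
      by_cases hmem : x ∈ Set.Icc (0:ℝ) t1
      · have hxI1 : x ∈ I1 := by
          rw [hI1]
          exact ⟨0, by simpa using hmem⟩
        rw [Set.indicator_of_mem hxI1, Set.indicator_of_mem hmem]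
        exact hFmin lam hlam x hmem
      · rw [Set.indicator_of_notMem hmem, Set.indicator_of_notMem]
        intro hxI1
        rw [hI1] at hxI1
        obtain ⟨k, hk⟩ := hxI1
        have hk1 : (k:ℝ) < 1 := by linarith [hk.1]
        have hk2 : (-1:ℝ) < (k:ℝ) := by linarith [hk.2, hxI.1]
        have hk0 : k = 0 := by
          have h1' : k < 1 := by exact_mod_cast hk1
          have h2' : -1 < k := by exact_mod_cast hk2
          omega
        apply hmem
        rw [hk0] at hk
        simpa using hk
    rw [step1, intervalIntegral.integral_of_le (by norm_num : (0:ℝ) ≤ 1),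
      MeasureTheory.setIntegral_indicator measurableSet_Icc]
    have hset : Set.Ioc (0:ℝ) 1 ∩ Set.Icc 0 t1 = Set.Ioc 0 t1 := by
      ext x
      simp only [Set.mem_inter_iff, Set.mem_Ioc, Set.mem_Icc]
      constructor
      · rintro ⟨⟨ha, _⟩, _, hb⟩; exact ⟨ha, hb⟩
      · rintro ⟨ha, hb⟩; exact ⟨⟨ha, hb.trans ht11.le⟩, ha.le, hb⟩
    rw [hset, ← intervalIntegral.integral_of_le ht1.le]
  -- the inverse function S
  have hclamp : ∀ lam : ℝ, ∃ x, x ∈ Set.Icc (0:ℝ) t1 ∧ A x = max (A t1) (min lam (A 0)) := by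
    intro lam
    have hmem : max (A t1) (min lam (A 0)) ∈ Set.Icc (A t1) (A 0) :=
      ⟨le_max_left _ _, max_le hAt1le (min_le_right _ _)⟩
    obtain ⟨x, hx, hxe⟩ := intermediate_value_Icc' ht1.le hAc.continuousOn hmem
    exact ⟨x, hx, hxe⟩
  choose S hSmem hSval using hclamp
  have hinjA : Set.InjOn A (Set.Icc 0 t1) := hAsa.injOn
  have hSlow : ∀ lam : ℝ, lam ≤ A t1 → S lam = t1 := by
    intro lam h
    apply hinjA (hSmem lam) ht1mem
    rw [hSval lam, min_eq_left (h.trans hAt1le), max_eq_left h]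
  have hSeq : ∀ lam : ℝ, A t1 ≤ lam → lam ≤ A 0 → A (S lam) = lam := by
    intro lam h1 h2
    rw [hSval lam, min_eq_left h2, max_eq_right h1]
  have hSA0 : S (A 0) = 0 := by
    apply hinjA (hSmem _) h0mem
    rw [hSeq (A 0) hAt1le le_rfl]
  have hSanti : ∀ x y : ℝ, x ≤ y → S y ≤ S x := by
    intro x y hxy
    by_contra hcon
    push_neg at hcon
    have h1 : A (S y) < A (S x) := hAsa (hSmem x) (hSmem y) hcon
    rw [hSval x, hSval y] at h1
    have h2 : max (A t1) (min x (A 0)) ≤ max (A t1) (min y (A 0)) :=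
      max_le_max le_rfl (min_le_min hxy le_rfl)
    linarith
  have hS_ge : ∀ lam : ℝ, lam ≤ A 0 → ∀ x ∈ Set.Icc (0:ℝ) (S lam), lam ≤ A x := by
    intro lam hlam x hx
    have hx' : x ∈ Set.Icc (0:ℝ) t1 := ⟨hx.1, hx.2.trans (hSmem lam).2⟩
    rcases le_or_gt lam (A t1) with h | h
    · exact h.trans (hAanti hx' ht1mem hx'.2)
    · have h2 := hAanti hx' (hSmem lam) hx.2
      rw [hSeq lam h.le hlam] at h2
      exact h2
  have hS_le : ∀ lam : ℝ, lam ≤ A 0 → ∀ x : ℝ, S lam < x → x ≤ t1 → A x ≤ lam := by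
    intro lam hlam x h1 h2
    have hAt1lam : A t1 ≤ lam := by
      by_contra hc
      push_neg at hc
      rw [hSlow lam hc.le] at h1
      linarith
    have hx' : x ∈ Set.Icc (0:ℝ) t1 := ⟨(hSmem lam).1.trans h1.le, h2⟩
    have h3 := hAanti (hSmem lam) hx' h1.le
    rw [hSeq lam hAt1lam hlam] at h3
    exact h3
  -- the key two-sided secant estimate
  have hL : ∀ x y : ℝ, x ≤ y → y ≤ A 0 →
      (y - x) * S y ≤ Phi y - Phi x ∧ Phi y - Phi x ≤ (y - x) * S x := by
    intro x y hxy hy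
    have hd : Phi y - Phi x = ∫ t in (0:ℝ)..t1, (min y (A t) - min x (A t)) := by
      rw [hPhidef]
      rw [intervalIntegral.integral_sub (hmi y 0 t1) (hmi x 0 t1)]
    have hDc : Continuous (fun t => min y (A t) - min x (A t)) := (hmc y).sub (hmc x)
    have hDi : ∀ a b : ℝ, IntervalIntegrable (fun t => min y (A t) - min x (A t)) volume a b :=
      fun a b => hDc.intervalIntegrable a b
    have hD0 : ∀ t : ℝ, 0 ≤ min y (A t) - min x (A t) := fun t => by
      have := min_le_min hxy (le_refl (A t))
      linarith
    have hDle : ∀ t : ℝ, min y (A t) - min x (A t) ≤ y - x := by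
      intro t
      rcases le_total x (A t) with h | h
      · have h1 : min y (A t) ≤ y := min_le_left _ _
        have h2 : min x (A t) = x := min_eq_left h
        linarith
      · have h1 : min y (A t) ≤ A t := min_le_right _ _
        have h2 : min x (A t) = A t := min_eq_right h
        linarith
    constructor
    · have hsp : (∫ t in (0:ℝ)..t1, (min y (A t) - min x (A t)))
          = (∫ t in (0:ℝ)..(S y), (min y (A t) - min x (A t)))
            + ∫ t in (S y)..t1, (min y (A t) - min x (A t)) :=
        (intervalIntegral.integral_add_adjacent_intervals (hDi _ _) (hDi _ _)).symm
      have h1 : (∫ t in (0:ℝ)..(S y), (min y (A t) - min x (A t))) = (S y) * (y - x) := by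
        have he : Set.EqOn (fun t => min y (A t) - min x (A t)) (fun _ => y - x)
            (Set.uIcc (0:ℝ) (S y)) := by
          intro t ht
          rw [Set.uIcc_of_le (hSmem y).1] at ht
          have hge := hS_ge y hy t ht
          have h2 : min y (A t) = y := min_eq_left hge
          have h3 : min x (A t) = x := min_eq_left (hxy.trans hge)
          simp only [h2, h3]
        rw [intervalIntegral.integral_congr he, intervalIntegral.integral_const, smul_eq_mul]
        ring
      have h2 : 0 ≤ ∫ t in (S y)..t1, (min y (A t) - min x (A t)) :=
        intervalIntegral.integral_nonneg (hSmem y).2 (fun u _ => hD0 u)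
      rw [hd, hsp, h1, mul_comm]
      linarith
    · have hsp : (∫ t in (0:ℝ)..t1, (min y (A t) - min x (A t)))
          = (∫ t in (0:ℝ)..(S x), (min y (A t) - min x (A t)))
            + ∫ t in (S x)..t1, (min y (A t) - min x (A t)) :=
        (intervalIntegral.integral_add_adjacent_intervals (hDi _ _) (hDi _ _)).symm
      have h1 : (∫ t in (0:ℝ)..(S x), (min y (A t) - min x (A t))) ≤ (S x) * (y - x) := by
        calc (∫ t in (0:ℝ)..(S x), (min y (A t) - min x (A t)))
            ≤ ∫ _t in (0:ℝ)..(S x), (y - x) :=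
              intervalIntegral.integral_mono_on (hSmem x).1 (hDi _ _) intervalIntegrable_const
                (fun t _ => hDle t)
          _ = (S x) * (y - x) := by rw [intervalIntegral.integral_const, smul_eq_mul]; try ring
      have h2 : (∫ t in (S x)..t1, (min y (A t) - min x (A t))) = 0 := by
        have hae : ∀ᵐ t ∂(volume : Measure ℝ), t ∈ Set.uIoc (S x) t1 →
            (min y (A t) - min x (A t)) = (0:ℝ) := by
          apply MeasureTheory.ae_of_all
          intro t ht
          rw [Set.uIoc_of_le (hSmem x).2] at ht
          have hle := hS_le x (hxy.trans hy) t ht.1 ht.2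
          have h3 : min x (A t) = A t := min_eq_right hle
          have h4 : min y (A t) = A t := min_eq_right (hle.trans hxy)
          rw [h3, h4]
          ring
        rw [intervalIntegral.integral_congr_ae hae]
        simp
      have hcomm : S x * (y - x) = (y - x) * S x := mul_comm _ _
      rw [hd, hsp, h2]
      linarith
  -- continuity of S
  have hScont : ContinuousOn S (Set.Icc 0 (A 0)) := by
    haveI : CompactSpace (Set.Icc (0:ℝ) t1) := isCompact_iff_compactSpace.mp isCompact_Icc
    have hmapsto : ∀ x : Set.Icc (0:ℝ) t1, A x ∈ Set.Icc (A t1) (A 0) := fun x =>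
      ⟨hAanti x.2 ht1mem x.2.2, hAanti h0mem x.2 x.2.1⟩
    have hebij : Function.Bijective
        (fun x : Set.Icc (0:ℝ) t1 => (⟨A x, hmapsto x⟩ : Set.Icc (A t1) (A 0))) := by
      constructor
      · intro a b hab
        have h1 : A a = A b := congrArg Subtype.val hab
        exact Subtype.ext (hinjA a.2 b.2 h1)
      · intro yy
        exact ⟨⟨S yy, hSmem yy⟩, Subtype.ext (hSeq yy yy.2.1 yy.2.2)⟩
    have hEc : Continuous (Equiv.ofBijective _ hebij) :=
      Continuous.subtype_mk (hAc.comp continuous_subtype_val) _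
    set H := Continuous.homeoOfEquivCompactToT2 hEc with hH
    have hSrestr : ContinuousOn S (Set.Icc (A t1) (A 0)) := by
      rw [continuousOn_iff_continuous_restrict]
      have hre : Set.restrict (Set.Icc (A t1) (A 0)) S
          = fun y => ((H.symm y : Set.Icc (0:ℝ) t1) : ℝ) := by
        funext y
        have h1 : H (H.symm y) = y := H.apply_symm_apply y
        have h2 : A ((H.symm y : Set.Icc (0:ℝ) t1) : ℝ) = y := congrArg Subtype.val h1
        exact hinjA (hSmem y) (H.symm y).2 (by rw [hSeq y y.2.1 y.2.2, h2])
      change Continuous (Set.restrict (Set.Icc (A t1) (A 0)) S)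
      rw [hre]
      exact continuous_subtype_val.comp H.symm.continuous
    have hSconst : ContinuousOn S (Set.Icc 0 (A t1)) := by
      apply ContinuousOn.congr (continuousOn_const (c := t1))
      intro x hx
      exact hSlow x hx.2
    have hunion : Set.Icc (0:ℝ) (A 0) = Set.Icc 0 (A t1) ∪ Set.Icc (A t1) (A 0) :=
      (Set.Icc_union_Icc_eq_Icc (hAnn t1) hAt1le).symm
    rw [hunion]
    intro x hx
    have hcw : ∀ (s : Set ℝ), IsClosed s → ContinuousOn S s → ContinuousWithinAt S s x := by
      intro s hs hcont
      by_cases hxs : x ∈ s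
      · exact hcont x hxs
      · exact continuousWithinAt_of_notMem_closure (by rwa [hs.closure_eq])
    exact (hcw _ isClosed_Icc hSconst).union (hcw _ isClosed_Icc hSrestr)
  -- the derivative of Phi
  have hPderiv : ∀ lam ∈ Set.Icc (0:ℝ) (A 0),
      HasDerivWithinAt Phi (S lam) (Set.Icc 0 (A 0)) lam := by
    intro lam hlam
    rw [hasDerivWithinAt_iff_tendsto_slope]
    have hbound : ∀ y ∈ Set.Icc (0:ℝ) (A 0) \ {lam},
        |slope Phi lam y - S lam| ≤ |S y - S lam| := by
      intro y hy
      have hy1 := hy.1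
      have hyne : y ≠ lam := hy.2
      rw [slope_def_field]
      rcases lt_or_gt_of_ne hyne with h | h
      · obtain ⟨l1, l2⟩ := hL y lam h.le hlam.2
        have hpos : (0:ℝ) < lam - y := by linarith
        have hne1 : lam - y ≠ 0 := ne_of_gt hpos
        have hne2 : y - lam ≠ 0 := by intro hc; apply hne1; linarith
        have hrw : (Phi y - Phi lam) / (y - lam) = (Phi lam - Phi y) / (lam - y) := by
          field_simp
          ring
        rw [hrw]
        have hs1 : S lam ≤ (Phi lam - Phi y) / (lam - y) := by
          rw [le_div_iff₀ hpos, mul_comm]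
          exact l1
        have hs2 : (Phi lam - Phi y) / (lam - y) ≤ S y := by
          rw [div_le_iff₀ hpos, mul_comm]
          exact l2
        have hS : S lam ≤ S y := hSanti y lam h.le
        rw [abs_of_nonneg (by linarith), abs_of_nonneg (by linarith)]
        linarith
      · obtain ⟨l1, l2⟩ := hL lam y h.le hy1.2
        have hpos : (0:ℝ) < y - lam := by linarith
        have hs1 : S y ≤ (Phi y - Phi lam) / (y - lam) := by
          rw [le_div_iff₀ hpos, mul_comm]
          exact l1
        have hs2 : (Phi y - Phi lam) / (y - lam) ≤ S lam := by
          rw [div_le_iff₀ hpos, mul_comm]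
          exact l2
        have hS : S y ≤ S lam := hSanti lam y h.le
        rw [abs_of_nonpos (by linarith), abs_of_nonpos (by linarith)]
        linarith
    have hScw : Filter.Tendsto S (nhdsWithin lam (Set.Icc (0:ℝ) (A 0) \ {lam}))
        (nhds (S lam)) := (hScont lam hlam).mono Set.diff_subset
    rw [tendsto_iff_dist_tendsto_zero]
    apply squeeze_zero' (Filter.Eventually.of_forall (fun y => dist_nonneg))
      ?_ (tendsto_iff_dist_tendsto_zero.1 hScw)
    filter_upwards [self_mem_nhdsWithin] with y hy
    rw [Real.dist_eq, Real.dist_eq]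
    exact hbound y hy
  -- transfer to lhat1
  have hlhd : ∀ lam ∈ Set.Icc (0:ℝ) (A 0),
      HasDerivWithinAt lhat1 (S lam) (Set.Icc 0 (A 0)) lam := by
    intro lam hlam
    exact (hPderiv lam hlam).congr (fun y hy => hlP y hy.2) (hlP lam hlam.2)
  refine ⟨?_, ⟨S, hScont, hlhd⟩, ?_, ?_, ?_, ?_⟩
  · -- concavity
    rw [concaveOn_iff_slope_anti_adjacent]
    refine ⟨convex_Icc _ _, ?_⟩
    intro x y z hx hz hxy hyz
    have hy : y ∈ Set.Icc (0:ℝ) (A 0) := ⟨hx.1.trans hxy.le, hyz.le.trans hz.2⟩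
    rw [hlP x (hxy.le.trans hy.2), hlP y hy.2, hlP z hz.2]
    obtain ⟨l1, _⟩ := hL x y hxy.le hy.2
    obtain ⟨_, l2⟩ := hL y z hyz.le hz.2
    have h1 : (Phi z - Phi y) / (z - y) ≤ S y := by
      rw [div_le_iff₀ (by linarith), mul_comm]
      exact l2
    have h2 : S y ≤ (Phi y - Phi x) / (y - x) := by
      rw [le_div_iff₀ (by linarith), mul_comm]
      exact l1
    linarith
  · -- derivative t1 on [0, A t1)
    intro lam hlam
    have h1 : lam ∈ Set.Icc (0:ℝ) (A 0) := ⟨hlam.1, hlam.2.le.trans hAt1le⟩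
    have h2 := hlhd lam h1
    rwa [hSlow lam hlam.2.le] at h2
  · -- derivative S lam on (A t1, A 0]
    intro lam hlam
    have h1 : lam ∈ Set.Icc (0:ℝ) (A 0) := ⟨(hAnn t1).trans hlam.1.le, hlam.2⟩
    exact ⟨S lam, hSmem lam, lt_of_le_of_lt (hSmem lam).2 ht11,
      hSeq lam hlam.1.le hlam.2, hlhd lam h1⟩
  · -- strict concavity
    rw [strictConcaveOn_iff_slope_strict_anti_adjacent]
    refine ⟨convex_Ioc _ _, ?_⟩
    intro x y z hx hz hxy hyz
    have hy : y ∈ Set.Ioc (A t1) (A 0) := ⟨hx.1.trans hxy, hyz.le.trans hz.2⟩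
    have hym : y < (y + z)/2 := by linarith
    have hmz : (y + z)/2 < z := by linarith
    have hm' : (y + z)/2 ∈ Set.Ioc (A t1) (A 0) := ⟨hy.1.trans hym, hmz.le.trans hz.2⟩
    have hSm : S ((y + z)/2) < S y := by
      have hle : S ((y + z)/2) ≤ S y := hSanti y _ hym.le
      rcases hle.lt_or_eq with h | h
      · exact h
      · exfalso
        have e1 : A (S ((y + z)/2)) = (y + z)/2 := hSeq _ hm'.1.le hm'.2
        have e2 : A (S y) = y := hSeq y hy.1.le hy.2
        rw [h, e2] at e1
        linarith
    obtain ⟨l1, _⟩ := hL x y hxy.le hy.2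
    obtain ⟨_, l2⟩ := hL y ((y + z)/2) hym.le hm'.2
    obtain ⟨_, l3⟩ := hL ((y + z)/2) z hmz.le hz.2
    have hzm : (0:ℝ) < z - (y + z)/2 := by linarith
    have hmul : (z - (y + z)/2) * S ((y + z)/2) < (z - (y + z)/2) * S y :=
      mul_lt_mul_of_pos_left hSm hzm
    have hexpand : (z - (y + z)/2) * S y + ((y + z)/2 - y) * S y = (z - y) * S y := by ring
    have key : Phi z - Phi y < (z - y) * S y := by linarith
    rw [hlP x ((hxy.le.trans hyz.le).trans hz.2), hlP y hy.2, hlP z hz.2]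
    have h1 : (Phi z - Phi y) / (z - y) < S y := by
      rw [div_lt_iff₀ (by linarith), mul_comm]
      exact key
    have h2 : S y ≤ (Phi y - Phi x) / (y - x) := by
      rw [le_div_iff₀ (by linarith), mul_comm]
      exact l1
    linarith
  · -- derivative 0 at A 0
    have h1 : A 0 ∈ Set.Icc (0:ℝ) (A 0) := ⟨hAnn 0, le_rfl⟩
    have h2 := hlhd (A 0) h1
    rwa [hSA0] at h2
end

section
/- Under the hypotheses on the fluxes and flux limiter, the set E_Λ̄ (consisting of: (i) the curve {(p⁰, p̂¹_{p⁰}, p̂²_{p⁰}) : p⁰ ∈ [a⁰,b⁰], f⁰(p⁰) ≤ λ̄⁰}; (ii) the point (u⁰₋(λ̄¹), u¹₊(λ̄¹), c²); (iii) the point (u⁰₋(λ̄²), c¹, u²₊(λ̄²)); (iv) the point (c⁰, c¹, c²)) is a subset of the homogenized germ G_Λ̄, and it generates G_Λ̄: if U ∈ Q satisfies D(U, Ū) ≥ 0 for all Ū ∈ E_Λ̄, then U ∈ G_Λ̄. -/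
open MeasureTheory

/-- Kruzhkov entropy flux `q^g(c̄,c) = sign(c − c̄)(g(c) − g(c̄))`. -/
noncomputable def entropyFlux (g : ℝ → ℝ) (cbar c : ℝ) : ℝ :=
  Real.sign (c - cbar) * (g c - g cbar)

section
open Set
open scoped Classical

namespace CharGerm

section Acore
variable (A : ℝ → ℝ) (C lam lam0 : ℝ)

noncomputable def gfun (t : ℝ) : ℝ := (∫ s in (0:ℝ)..t, A s) - lam * t
noncomputable def hfun (t : ℝ) : ℝ := sSup ((gfun A lam) '' Iic t)

variable (hAm : Measurable A) (hA0 : ∀ t, 0 ≤ A t) (hAC : ∀ t, A t ≤ C)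
  (hAper : ∀ t, A (t + 1) = A t) (hlam0 : lam0 = ∫ t in (0:ℝ)..1, A t)
  (hl1 : 0 ≤ lam) (hl2 : lam ≤ lam0)

-- interval integrability of a bounded measurable function
lemma bdd_intervalIntegrable (hAm : Measurable A) (hA0 : ∀ t, 0 ≤ A t) (hAC : ∀ t, A t ≤ C)
    (a b : ℝ) : IntervalIntegrable A volume a b := by
  have : ∀ t, ‖A t‖ ≤ C := by
    intro t; rw [Real.norm_eq_abs, abs_of_nonneg (hA0 t)]; exact hAC t
  constructor <;>
  · apply MeasureTheory.Integrable.mono' (g := fun _ => C)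
    · exact integrable_const C
    · exact hAm.aestronglyMeasurable.restrict
    · exact Filter.Eventually.of_forall fun t => this t

lemma per_int_eq (hAm : Measurable A) (hA0 : ∀ t, 0 ≤ A t) (hAC : ∀ t, A t ≤ C)
    (hAper : ∀ t, A (t + 1) = A t) (hlam0 : lam0 = ∫ t in (0:ℝ)..1, A t) (s : ℝ) :
    (∫ t in s..(s+1), A t) = lam0 := by
  have hper : Function.Periodic A 1 := hAper
  rw [hlam0]
  have := hper.intervalIntegral_add_eq s 0
  simpa using this

lemma per_int_nat (hAm : Measurable A) (hA0 : ∀ t, 0 ≤ A t) (hAC : ∀ t, A t ≤ C)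
    (hAper : ∀ t, A (t + 1) = A t) (hlam0 : lam0 = ∫ t in (0:ℝ)..1, A t) (s : ℝ) (n : ℕ) :
    (∫ t in s..(s+n), A t) = n * lam0 := by
  induction n with
  | zero => simp
  | succ n ih =>
    have h1 : (∫ t in s..(s+n), A t) + (∫ t in (s+n)..(s+n+1), A t) = ∫ t in s..(s+(n+1):ℝ), A t := by
      have := intervalIntegral.integral_add_adjacent_intervals
        (bdd_intervalIntegrable A C hAm hA0 hAC s (s+n))
        (bdd_intervalIntegrable A C hAm hA0 hAC (s+n) (s+n+1))
      rw [this]; congr 1; push_cast; ring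
    have h2 : s + ((n:ℝ) + 1) = s + (n+1:ℕ) := by push_cast; ring
    rw [h2] at h1
    rw [← h1, ih, per_int_eq A C lam0 hAm hA0 hAC hAper hlam0]
    push_cast; ring


include hAm hA0 hAC in
lemma gfun_diff (s t : ℝ) : gfun A lam t - gfun A lam s = (∫ x in s..t, A x) - lam * (t - s) := by
  unfold gfun
  have := intervalIntegral.integral_add_adjacent_intervals
    (bdd_intervalIntegrable A C hAm hA0 hAC 0 s) (bdd_intervalIntegrable A C hAm hA0 hAC s t)
  have h2 : (∫ x in s..t, A x) = (∫ x in (0:ℝ)..t, A x) - ∫ x in (0:ℝ)..s, A x := by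
    rw [← this]; ring
  rw [h2]; ring

include hAm hA0 hAC hAper hlam0 in
lemma gfun_shift (s : ℝ) (n : ℕ) : gfun A lam (s + n) = gfun A lam s + n * (lam0 - lam) := by
  have := gfun_diff A C lam hAm hA0 hAC s (s + n)
  rw [per_int_nat A C lam0 hAm hA0 hAC hAper hlam0 s n] at this
  have h := this
  nlinarith [h]

include hAm hA0 hAC hAper hlam0 hl1 hl2 in
lemma gfun_le (s t : ℝ) (hst : s ≤ t) : gfun A lam s ≤ gfun A lam t + lam := by
  set n : ℕ := ⌊t - s⌋.toNat with hn
  have h0 : (0:ℝ) ≤ t - s := by linarith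
  have hfloor : (⌊t - s⌋ : ℝ) ≤ t - s := Int.floor_le _
  have hfloor2 : t - s < ⌊t - s⌋ + 1 := Int.lt_floor_add_one _
  have hnn : (0:ℤ) ≤ ⌊t - s⌋ := Int.floor_nonneg.2 h0
  have hcast' : (n : ℝ) = (⌊t - s⌋ : ℝ) := by
    rw [hn]; exact_mod_cast congrArg (fun z : ℤ => (z:ℝ)) (Int.toNat_of_nonneg hnn)
  have h1 : s + n ≤ t := by rw [hcast']; linarith
  have h2 : t - (s + n) < 1 := by rw [hcast']; linarith
  have hsh := gfun_shift A C lam lam0 hAm hA0 hAC hAper hlam0 s n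
  have hd := gfun_diff A C lam hAm hA0 hAC (s + n) t
  have hint : (0:ℝ) ≤ ∫ x in (s+n)..t, A x := by
    apply intervalIntegral.integral_nonneg h1
    intro u _; exact hA0 u
  have : gfun A lam t - gfun A lam (s+n) ≥ - lam := by
    rw [hd]
    have : lam * (t - (s+n)) ≤ lam := by nlinarith
    linarith
  nlinarith [hsh, this, mul_nonneg (Nat.cast_nonneg n : (0:ℝ) ≤ n) (by linarith : (0:ℝ) ≤ lam0 - lam)]

include hAm hA0 hAC hAper hlam0 hl1 hl2 in
lemma hfun_bddAbove (t : ℝ) : BddAbove ((gfun A lam) '' Iic t) := by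
  refine ⟨gfun A lam t + lam, ?_⟩
  rintro x ⟨s, hs, rfl⟩
  exact gfun_le A C lam lam0 hAm hA0 hAC hAper hlam0 hl1 hl2 s t hs

include hAm hA0 hAC hAper hlam0 hl1 hl2 in
lemma le_hfun (s t : ℝ) (hst : s ≤ t) : gfun A lam s ≤ hfun A lam t :=
  le_csSup (hfun_bddAbove A C lam lam0 hAm hA0 hAC hAper hlam0 hl1 hl2 t) ⟨s, hst, rfl⟩

lemma hfun_le (t y : ℝ) (h : ∀ s ≤ t, gfun A lam s ≤ y) : hfun A lam t ≤ y := by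
  apply csSup_le (by exact ⟨gfun A lam t, t, le_refl t, rfl⟩)
  rintro x ⟨s, hs, rfl⟩; exact h s hs

include hAm hA0 hAC hAper hlam0 hl1 hl2 in
lemma hfun_mono {s t : ℝ} (hst : s ≤ t) : hfun A lam s ≤ hfun A lam t := by
  apply hfun_le
  intro u hu
  exact le_hfun A C lam lam0 hAm hA0 hAC hAper hlam0 hl1 hl2 u t (le_trans hu hst)

include hAm hA0 hAC hAper hlam0 hl1 hl2 in
lemma hfun_shift (t : ℝ) : hfun A lam (t + 1) = hfun A lam t + (lam0 - lam) := by
  have key : ∀ s : ℝ, gfun A lam (s + 1) = gfun A lam s + (lam0 - lam) := by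
    intro s
    have := gfun_shift A C lam lam0 hAm hA0 hAC hAper hlam0 s 1
    simpa using this
  apply le_antisymm
  · apply hfun_le
    intro s hs
    have h1 : gfun A lam s = gfun A lam (s - 1) + (lam0 - lam) := by
      have h2 := key (s - 1); rw [sub_add_cancel] at h2; linarith
    rw [h1]
    have := le_hfun A C lam lam0 hAm hA0 hAC hAper hlam0 hl1 hl2 (s-1) t (by linarith)
    linarith
  · have : hfun A lam t ≤ hfun A lam (t+1) - (lam0 - lam) := by
      apply hfun_le
      intro s hs
      have := le_hfun A C lam lam0 hAm hA0 hAC hAper hlam0 hl1 hl2 (s+1) (t+1) (by linarith)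
      rw [key s] at this; linarith
    linarith


include hAm hA0 hAC in
lemma cond_iff (t : ℝ) :
    (∀ t₁ < t, lam * (t - t₁) ≤ ∫ x in t₁..t, A x) ↔ ∀ s < t, gfun A lam s ≤ gfun A lam t := by
  constructor
  · intro h s hs
    have := gfun_diff A C lam hAm hA0 hAC s t
    have h2 := h s hs
    linarith
  · intro h t₁ ht₁
    have := gfun_diff A C lam hAm hA0 hAC t₁ t
    have h2 := h t₁ ht₁
    linarith

include hAm hA0 hAC in
lemma gfun_affine (u v : ℝ) (huv : u ≤ v) (hconst : ∀ t ∈ Ico u v, A t = A u) :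
    ∀ s ∈ Icc u v, gfun A lam s = gfun A lam u + (A u - lam) * (s - u) := by
  intro s hs
  have hd := gfun_diff A C lam hAm hA0 hAC u s
  have hint : (∫ x in u..s, A x) = A u * (s - u) := by
    have hae : ∀ᵐ x ∂volume, x ∈ Set.uIoc u s → A x = A u := by
      have hnull : volume ({v} : Set ℝ) = 0 := measure_singleton v
      filter_upwards [measure_eq_zero_iff_ae_notMem.mp hnull] with x hx hmem
      rw [Set.uIoc_of_le hs.1] at hmem
      have hxv : x ≠ v := hx
      have : x ∈ Ico u v := ⟨le_of_lt hmem.1, lt_of_le_of_ne (le_trans hmem.2 hs.2) hxv⟩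
      exact hconst x this
    have := intervalIntegral.integral_congr_ae (f := A) (g := fun _ => A u) (a := u) (b := s) hae
    rw [this]
    simp [smul_eq_mul]
    ring
  rw [hint] at hd
  linarith

include hAm hA0 hAC hAper hlam0 hl1 hl2 in
lemma hfun_step (u v : ℝ) (huv : u ≤ v) (hconst : ∀ t ∈ Ico u v, A t = A u) :
    hfun A lam v = max (hfun A lam u) (gfun A lam v) := by
  have haff := gfun_affine A C lam hAm hA0 hAC u v huv hconst
  apply le_antisymm
  · apply hfun_le
    intro s hs
    rcases le_or_gt s u with h | h
    · exact le_trans (le_hfun A C lam lam0 hAm hA0 hAC hAper hlam0 hl1 hl2 s u h) (le_max_left _ _)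
    · have h1 := haff s ⟨le_of_lt h, hs⟩
      have h2 := haff v ⟨huv, le_refl v⟩
      have h3 := le_hfun A C lam lam0 hAm hA0 hAC hAper hlam0 hl1 hl2 u u (le_refl u)
      rcases le_or_gt 0 (A u - lam) with hm | hm
      · have : gfun A lam s ≤ gfun A lam v := by nlinarith
        exact le_trans this (le_max_right _ _)
      · have : gfun A lam s ≤ gfun A lam u := by nlinarith
        exact le_trans (le_trans this h3) (le_max_left _ _)
  · apply max_le
    · exact hfun_mono A C lam lam0 hAm hA0 hAC hAper hlam0 hl1 hl2 huv
    · exact le_hfun A C lam lam0 hAm hA0 hAC hAper hlam0 hl1 hl2 v v (le_refl v)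

include hAm hA0 hAC hAper hlam0 hl1 hl2 in
lemma piece (u v : ℝ) (huv : u < v) (hconst : ∀ t ∈ Ico u v, A t = A u)
    (F : ℝ → ℝ → ℝ)
    (hF1 : ∀ μ t, (∀ t₁ < t, μ * (t - t₁) ≤ ∫ s in t₁..t, A s) → F μ t = μ)
    (hF2 : ∀ μ t, ¬ (∀ t₁ < t, μ * (t - t₁) ≤ ∫ s in t₁..t, A s) → F μ t = A t) :
    ∃ y ∈ Icc u v, (∀ t ∈ Ioo u y, F lam t = A u) ∧
      (∀ t ∈ Ioo y v, F lam t = lam ∧ lam ≤ A u) ∧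
      (A u - lam) * (v - y) = hfun A lam v - hfun A lam u := by
  have haff := gfun_affine A C lam hAm hA0 hAC u v (le_of_lt huv) hconst
  have hstep := hfun_step A C lam lam0 hAm hA0 hAC hAper hlam0 hl1 hl2 u v (le_of_lt huv) hconst
  have hgu_hu : gfun A lam u ≤ hfun A lam u :=
    le_hfun A C lam lam0 hAm hA0 hAC hAper hlam0 hl1 hl2 u u (le_refl u)
  set m := A u - lam with hm
  -- characterization of the condition for t ∈ Ioo u v
  have hchar : ∀ t ∈ Ioo u v,
      ((∀ t₁ < t, lam * (t - t₁) ≤ ∫ x in t₁..t, A x) ↔ (hfun A lam u ≤ gfun A lam t ∧ 0 ≤ m)) := by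
    intro t ht
    rw [cond_iff A C lam hAm hA0 hAC]
    constructor
    · intro h
      constructor
      · apply hfun_le
        intro s hs
        exact h s (lt_of_le_of_lt hs ht.1)
      · set s := (u + t)/2 with hs
        have hs1 : u < s := by rw [hs]; linarith [ht.1]
        have hs2 : s < t := by rw [hs]; linarith [ht.1]
        have h1 := haff s ⟨le_of_lt hs1, by linarith [ht.2]⟩
        have h2 := haff t ⟨le_of_lt ht.1, le_of_lt ht.2⟩
        have h3 := h s hs2
        nlinarith
    · rintro ⟨h1, h2⟩ s hs
      rcases le_or_gt s u with h | h
      · exact le_trans (le_trans (le_hfun A C lam lam0 hAm hA0 hAC hAper hlam0 hl1 hl2 s u h) h1)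
          (le_refl _)
      · have ha := haff s ⟨le_of_lt h, by linarith [ht.2]⟩
        have hb := haff t ⟨le_of_lt ht.1, le_of_lt ht.2⟩
        nlinarith
  rcases le_or_gt m 0 with hm0 | hm0
  · -- nonpositive slope: F = A u on the whole piece
    refine ⟨v, ⟨le_of_lt huv, le_refl v⟩, ?_, ?_, ?_⟩
    · intro t ht
      by_cases hc : ∀ t₁ < t, lam * (t - t₁) ≤ ∫ x in t₁..t, A x
      · have h0m := ((hchar t ht).1 hc).2
        have : m = 0 := le_antisymm hm0 h0m
        rw [hF1 lam t hc]
        rw [hm] at this; linarith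
      · rw [hF2 lam t hc]
        exact hconst t ⟨le_of_lt ht.1, ht.2⟩
    · intro t ht; exact absurd ht.2 (not_lt.2 (le_of_lt ht.1))
    · have hgv := haff v ⟨le_of_lt huv, le_refl v⟩
      have : gfun A lam v ≤ hfun A lam u := by nlinarith
      rw [hstep, max_eq_left this]; ring
  · -- positive slope
    set y0 := u + (hfun A lam u - gfun A lam u)/m with hy0
    have hy0u : u ≤ y0 := by
      rw [hy0]
      have : 0 ≤ (hfun A lam u - gfun A lam u)/m := div_nonneg (by linarith) (le_of_lt hm0)
      linarith
    have hgy0 : ∀ s, gfun A lam u + m * (s - u) = hfun A lam u + m * (s - y0) := by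
      intro s
      rw [hy0]
      field_simp
      ring
    refine ⟨min v y0, ⟨le_min (le_of_lt huv) hy0u, min_le_left _ _⟩, ?_, ?_, ?_⟩
    · intro t ht
      have htv : t < v := lt_of_lt_of_le ht.2 (min_le_left _ _)
      have hty0 : t < y0 := lt_of_lt_of_le ht.2 (min_le_right _ _)
      have hgt : gfun A lam t < hfun A lam u := by
        have := haff t ⟨le_of_lt ht.1, le_of_lt htv⟩
        have h2 := hgy0 t
        nlinarith
      have hc : ¬ (∀ t₁ < t, lam * (t - t₁) ≤ ∫ x in t₁..t, A x) := by
        rw [hchar t ⟨ht.1, htv⟩]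
        intro ⟨h1, _⟩; linarith
      rw [hF2 lam t hc]
      exact hconst t ⟨le_of_lt ht.1, htv⟩
    · intro t ht
      have hyt : min v y0 < t := ht.1
      have htv : t < v := ht.2
      rcases le_or_gt v y0 with hvy | hvy
      · exfalso
        rw [min_eq_left hvy] at hyt
        exact absurd htv (not_lt.2 (le_of_lt hyt))
      · rw [min_eq_right (le_of_lt hvy)] at hyt
        have hut : u < t := lt_of_le_of_lt hy0u hyt
        have hgt : hfun A lam u ≤ gfun A lam t := by
          have := haff t ⟨le_of_lt hut, le_of_lt htv⟩
          have h2 := hgy0 t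
          nlinarith
        have hc : (∀ t₁ < t, lam * (t - t₁) ≤ ∫ x in t₁..t, A x) := by
          rw [hchar t ⟨hut, htv⟩]
          exact ⟨hgt, le_of_lt hm0⟩
        exact ⟨hF1 lam t hc, by rw [hm] at hm0; linarith⟩
    · have hgv := haff v ⟨le_of_lt huv, le_refl v⟩
      rcases le_or_gt v y0 with hvy | hvy
      · rw [min_eq_left hvy]
        have : gfun A lam v ≤ hfun A lam u := by
          have h2 := hgy0 v
          nlinarith
        rw [hstep, max_eq_left this]; ring
      · rw [min_eq_right (le_of_lt hvy)]
        have : hfun A lam u ≤ gfun A lam v := by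
          have h2 := hgy0 v
          nlinarith
        rw [hstep, max_eq_right this]
        have h2 := hgy0 v
        nlinarith

omit hAm hA0 hAC hAper hlam0 hl1 hl2

lemma meas_bdd_intInt (σ : ℝ → ℝ) (hm : Measurable σ) (hb : ∀ t, 0 ≤ σ t ∧ σ t ≤ C)
    (a b : ℝ) : IntervalIntegrable σ volume a b := by
  have : ∀ t, ‖σ t‖ ≤ C := by
    intro t; rw [Real.norm_eq_abs, abs_of_nonneg (hb t).1]; exact (hb t).2
  constructor <;>
  · apply MeasureTheory.Integrable.mono' (g := fun _ => C)
    · exact integrable_const C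
    · exact hm.aestronglyMeasurable.restrict
    · exact Filter.Eventually.of_forall fun t => this t

lemma chunk (hAm : Measurable A) (hA0 : ∀ t, 0 ≤ A t) (hAC : ∀ t, A t ≤ C)
    (hAper : ∀ t, A (t + 1) = A t) (hlam0 : lam0 = ∫ t in (0:ℝ)..1, A t)
    (hl1 : 0 ≤ lam) (hl2 : lam ≤ lam0) (hlC : lam ≤ C) (hC0 : 0 ≤ C)
    (T : Finset ℝ)
    (hT : ∀ u w, 0 ≤ u → u < w → w ≤ 1 → (∀ x ∈ T, ¬(u < x ∧ x < w)) →
      ∀ t ∈ Ico u w, A t = A u)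
    (F : ℝ → ℝ → ℝ)
    (hF1 : ∀ μ t, (∀ t₁ < t, μ * (t - t₁) ≤ ∫ s in t₁..t, A s) → F μ t = μ)
    (hF2 : ∀ μ t, ¬ (∀ t₁ < t, μ * (t - t₁) ≤ ∫ s in t₁..t, A s) → F μ t = A t) :
    ∀ u w, 0 ≤ u → u ≤ w → w ≤ 1 →
    ∃ (σ : ℝ → ℝ) (bad : Finset ℝ), Measurable σ ∧
      (∀ t ∈ Ioo u w, t ∉ bad → F lam t = σ t ∧ σ t ≤ A t) ∧
      (∀ t, 0 ≤ σ t ∧ σ t ≤ C) ∧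
      (∫ t in u..w, σ t) = (∫ t in u..w, A t) - (hfun A lam w - hfun A lam u) := by
  suffices H : ∀ n : ℕ, ∀ u w, (T.filter (fun x => u < x ∧ x < w)).card ≤ n →
      0 ≤ u → u ≤ w → w ≤ 1 →
      ∃ (σ : ℝ → ℝ) (bad : Finset ℝ), Measurable σ ∧
      (∀ t ∈ Ioo u w, t ∉ bad → F lam t = σ t ∧ σ t ≤ A t) ∧
      (∀ t, 0 ≤ σ t ∧ σ t ≤ C) ∧
      (∫ t in u..w, σ t) = (∫ t in u..w, A t) - (hfun A lam w - hfun A lam u) by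
    intro u w h1 h2 h3
    exact H _ u w (le_refl _) h1 h2 h3
  intro n
  induction n with
  | zero =>
    intro u w hcard h0u huw hw1
    rcases eq_or_lt_of_le huw with rfl | huw'
    · exact ⟨fun _ => 0, ∅, measurable_const, fun t ht _ => absurd ht.2 (not_lt.2 (le_of_lt ht.1)),
        fun t => ⟨le_refl 0, hC0⟩, by simp⟩
    · -- no breakpoints inside
      have hempty : ∀ x ∈ T, ¬(u < x ∧ x < w) := by
        intro x hx hcontra
        have : x ∈ T.filter (fun x => u < x ∧ x < w) := Finset.mem_filter.2 ⟨hx, hcontra⟩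
        rw [Finset.card_eq_zero.1 (Nat.le_zero.1 hcard)] at this
        exact absurd this (Finset.notMem_empty x)
      have hconst := hT u w h0u huw' hw1 hempty
      obtain ⟨y, hy, hFy1, hFy2, hid⟩ :=
        piece A C lam lam0 hAm hA0 hAC hAper hlam0 hl1 hl2 u w huw' hconst F hF1 hF2
      refine ⟨fun t => if t < y then A u else lam, {y}, ?_, ?_, ?_, ?_⟩
      · exact Measurable.ite measurableSet_Iio measurable_const measurable_const
      · intro t ht htb
        have hty : t ≠ y := by simpa using htb
        rcases lt_or_gt_of_ne hty with h | h
        · have h1 := hFy1 t ⟨ht.1, h⟩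
          simp only [if_pos h]
          exact ⟨h1, le_of_eq (hconst t ⟨le_of_lt ht.1, ht.2⟩).symm⟩
        · have h1 := hFy2 t ⟨h, ht.2⟩
          simp only [if_neg (not_lt.2 (le_of_lt h))]
          exact ⟨h1.1, by rw [hconst t ⟨le_of_lt ht.1, ht.2⟩]; exact h1.2⟩
      · intro t
        by_cases h : t < y
        · simp only [if_pos h]; exact ⟨hA0 u, hAC u⟩
        · simp only [if_neg h]; exact ⟨hl1, hlC⟩
      · -- integral computation
        have hyu : u ≤ y := hy.1
        have hyw : y ≤ w := hy.2
        have hσint : ∀ a b : ℝ, IntervalIntegrable (fun t => if t < y then A u else lam) volume a b := by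
          intro a b
          apply meas_bdd_intInt C
          · exact Measurable.ite measurableSet_Iio measurable_const measurable_const
          · intro t
            by_cases h : t < y
            · simp only [if_pos h]; exact ⟨hA0 u, hAC u⟩
            · simp only [if_neg h]; exact ⟨hl1, hlC⟩
        have hsplit := intervalIntegral.integral_add_adjacent_intervals (hσint u y) (hσint y w)
        have hI1 : (∫ t in u..y, (if t < y then A u else lam)) = A u * (y - u) := by
          have : (∫ t in u..y, (if t < y then A u else lam)) = ∫ t in u..y, A u := by
            apply intervalIntegral.integral_congr_ae
            have hnull : volume ({y} : Set ℝ) = 0 := measure_singleton y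
            filter_upwards [measure_eq_zero_iff_ae_notMem.mp hnull] with x hx hmem
            rw [Set.uIoc_of_le hyu] at hmem
            have : x < y := lt_of_le_of_ne hmem.2 hx
            simp [this]
          rw [this]; simp [smul_eq_mul]; ring
        have hI2 : (∫ t in y..w, (if t < y then A u else lam)) = lam * (w - y) := by
          have : (∫ t in y..w, (if t < y then A u else lam)) = ∫ t in y..w, lam := by
            apply intervalIntegral.integral_congr
            intro x hx
            rw [Set.uIcc_of_le hyw] at hx
            simp [not_lt.2 hx.1]
          rw [this]; simp [smul_eq_mul]; ring
        have hIA : (∫ t in u..w, A t) = A u * (w - u) := by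
          have h1 := gfun_affine A C lam hAm hA0 hAC u w (le_of_lt huw') hconst w ⟨le_of_lt huw', le_refl w⟩
          have h2 := gfun_diff A C lam hAm hA0 hAC u w
          nlinarith [h1, h2]
        rw [← hsplit, hI1, hI2, hIA, ← hid]
        ring
  | succ n ih =>
    intro u w hcard h0u huw hw1
    by_cases hempty : ∀ x ∈ T, ¬(u < x ∧ x < w)
    · -- no breakpoints: card is zero, use induction hypothesis with budget n
      have hc0 : (T.filter (fun x => u < x ∧ x < w)).card ≤ n := by
        have : T.filter (fun x => u < x ∧ x < w) = ∅ := by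
          apply Finset.filter_eq_empty_iff.2
          intro x hx; exact hempty x hx
        rw [this]; simp
      exact ih u w hc0 h0u huw hw1
    · push_neg at hempty
      obtain ⟨x, hxT, hux, hxw⟩ := hempty
      have hcard1 : (T.filter (fun z => u < z ∧ z < x)).card ≤ n := by
        have hsub : T.filter (fun z => u < z ∧ z < x) ⊆ (T.filter (fun z => u < z ∧ z < w)).erase x := by
          intro z hz
          rw [Finset.mem_filter] at hz
          apply Finset.mem_erase.2
          exact ⟨ne_of_lt hz.2.2, Finset.mem_filter.2 ⟨hz.1, hz.2.1, lt_trans hz.2.2 hxw⟩⟩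
        calc (T.filter (fun z => u < z ∧ z < x)).card
            ≤ ((T.filter (fun z => u < z ∧ z < w)).erase x).card := Finset.card_le_card hsub
          _ = (T.filter (fun z => u < z ∧ z < w)).card - 1 := by
              rw [Finset.card_erase_of_mem (Finset.mem_filter.2 ⟨hxT, hux, hxw⟩)]
          _ ≤ n := by omega
      have hcard2 : (T.filter (fun z => x < z ∧ z < w)).card ≤ n := by
        have hsub : T.filter (fun z => x < z ∧ z < w) ⊆ (T.filter (fun z => u < z ∧ z < w)).erase x := by
          intro z hz
          rw [Finset.mem_filter] at hz
          apply Finset.mem_erase.2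
          exact ⟨(ne_of_lt hz.2.1).symm, Finset.mem_filter.2 ⟨hz.1, lt_trans hux hz.2.1, hz.2.2⟩⟩
        calc (T.filter (fun z => x < z ∧ z < w)).card
            ≤ ((T.filter (fun z => u < z ∧ z < w)).erase x).card := Finset.card_le_card hsub
          _ = (T.filter (fun z => u < z ∧ z < w)).card - 1 := by
              rw [Finset.card_erase_of_mem (Finset.mem_filter.2 ⟨hxT, hux, hxw⟩)]
          _ ≤ n := by omega
      obtain ⟨σ₁, bad₁, hm1, hFσ1, hb1, hint1⟩ :=
        ih u x hcard1 h0u (le_of_lt hux) (le_of_lt (lt_of_lt_of_le hxw hw1))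
      obtain ⟨σ₂, bad₂, hm2, hFσ2, hb2, hint2⟩ :=
        ih x w hcard2 (le_trans h0u (le_of_lt hux)) (le_of_lt hxw) hw1
      refine ⟨fun t => if t < x then σ₁ t else σ₂ t, bad₁ ∪ bad₂ ∪ {x}, ?_, ?_, ?_, ?_⟩
      · exact Measurable.ite measurableSet_Iio hm1 hm2
      · intro t ht htb
        simp only [Finset.mem_union, Finset.mem_singleton, not_or] at htb
        rcases lt_trichotomy t x with h | h | h
        · simp only [if_pos h]
          exact hFσ1 t ⟨ht.1, h⟩ htb.1.1
        · exact absurd h htb.2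
        · simp only [if_neg (not_lt.2 (le_of_lt h))]
          exact hFσ2 t ⟨h, ht.2⟩ htb.1.2
      · intro t
        by_cases h : t < x
        · simp only [if_pos h]; exact hb1 t
        · simp only [if_neg h]; exact hb2 t
      · have hσmeas : Measurable (fun t => if t < x then σ₁ t else σ₂ t) :=
          Measurable.ite measurableSet_Iio hm1 hm2
        have hσbd : ∀ t, 0 ≤ (if t < x then σ₁ t else σ₂ t) ∧ (if t < x then σ₁ t else σ₂ t) ≤ C := by
          intro t
          by_cases h : t < x
          · simp only [if_pos h]; exact hb1 t
          · simp only [if_neg h]; exact hb2 t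
        have hσint : ∀ a b : ℝ, IntervalIntegrable (fun t => if t < x then σ₁ t else σ₂ t) volume a b :=
          fun a b => meas_bdd_intInt C _ hσmeas hσbd a b
        have hsplit := intervalIntegral.integral_add_adjacent_intervals (hσint u x) (hσint x w)
        have hJ1 : (∫ t in u..x, (if t < x then σ₁ t else σ₂ t)) = ∫ t in u..x, σ₁ t := by
          apply intervalIntegral.integral_congr_ae
          have hnull : volume ({x} : Set ℝ) = 0 := measure_singleton x
          filter_upwards [measure_eq_zero_iff_ae_notMem.mp hnull] with z hz hmem
          rw [Set.uIoc_of_le (le_of_lt hux)] at hmem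
          have : z < x := lt_of_le_of_ne hmem.2 hz
          simp [this]
        have hJ2 : (∫ t in x..w, (if t < x then σ₁ t else σ₂ t)) = ∫ t in x..w, σ₂ t := by
          apply intervalIntegral.integral_congr_ae
          apply Filter.Eventually.of_forall
          intro z hz
          rw [Set.uIoc_of_le (le_of_lt hxw)] at hz
          simp [not_lt.2 (le_of_lt hz.1)]
        have hAsplit := intervalIntegral.integral_add_adjacent_intervals
          (bdd_intervalIntegrable A C hAm hA0 hAC u x) (bdd_intervalIntegrable A C hAm hA0 hAC x w)
        rw [← hsplit, hJ1, hJ2, hint1, hint2, ← hAsplit]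
        ring

end Acore

section K
variable (A : ℝ → ℝ) (C lam lam0 lam1 lam2 : ℝ)

/-- Main properties of the homogenized fluxes for `0 ≤ lam ≤ lam0`. -/
lemma Kmain (hAm : Measurable A) (hA0 : ∀ t, 0 ≤ A t) (hAC : ∀ t, A t ≤ C)
    (hAper : ∀ t, A (t + 1) = A t) (hlam0 : lam0 = ∫ t in (0:ℝ)..1, A t)
    (hl1 : 0 ≤ lam) (hl2 : lam ≤ lam0) (hlC : lam ≤ C) (hC0 : 0 ≤ C)
    (T : Finset ℝ)
    (hT : ∀ u w, 0 ≤ u → u < w → w ≤ 1 → (∀ x ∈ T, ¬(u < x ∧ x < w)) →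
      ∀ t ∈ Ico u w, A t = A u)
    (F : ℝ → ℝ → ℝ)
    (hF1 : ∀ μ t, (∀ t₁ < t, μ * (t - t₁) ≤ ∫ s in t₁..t, A s) → F μ t = μ)
    (hF2 : ∀ μ t, ¬ (∀ t₁ < t, μ * (t - t₁) ≤ ∫ s in t₁..t, A s) → F μ t = A t)
    (I1 I2 : Set ℝ) (hI1m : MeasurableSet I1) (hI2m : MeasurableSet I2)
    (hUnion : I1 ∪ I2 = Set.univ) (hDisj : I1 ∩ I2 = ∅)
    (hlam1 : lam1 = ∫ t in (0:ℝ)..1, Set.indicator I1 A t)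
    (hlam2 : lam2 = ∫ t in (0:ℝ)..1, Set.indicator I2 A t)
    (lh1 lh2 : ℝ)
    (hlh1 : lh1 = ∫ t in (0:ℝ)..1, Set.indicator I1 (F lam) t)
    (hlh2 : lh2 = ∫ t in (0:ℝ)..1, Set.indicator I2 (F lam) t) :
    lh1 + lh2 = lam ∧ 0 ≤ lh1 ∧ lh1 ≤ lam1 ∧ 0 ≤ lh2 ∧ lh2 ≤ lam2 := by
  obtain ⟨σ, bad, hσm, hσF, hσb, hσint⟩ :=
    chunk A C lam lam0 hAm hA0 hAC hAper hlam0 hl1 hl2 hlC hC0 T hT F hF1 hF2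
      0 1 (le_refl 0) (by norm_num) (le_refl 1)
  -- the exceptional null set
  set N : Set ℝ := (↑bad : Set ℝ) ∪ {1} with hN
  have hNnull : volume N = 0 := by
    apply measure_union_null
    · exact (Set.Finite.measure_zero (bad.finite_toSet) volume)
    · exact measure_singleton 1
  have hae : ∀ᵐ t ∂volume, t ∉ N := measure_eq_zero_iff_ae_notMem.mp hNnull
  have hkey : ∀ t, t ∉ N → t ∈ Set.Ioc (0:ℝ) 1 → F lam t = σ t ∧ σ t ≤ A t := by
    intro t htN htm
    have ht1 : t ≠ 1 := by
      intro h; apply htN; rw [hN]; right; simp [h]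
    have htb : t ∉ bad := by
      intro h; apply htN; rw [hN]; left; exact_mod_cast h
    exact hσF t ⟨htm.1, lt_of_le_of_ne htm.2 ht1⟩ htb
  -- rewrite lhat's as integrals of indicator σ
  have hcong1 : lh1 = ∫ t in (0:ℝ)..1, Set.indicator I1 σ t := by
    rw [hlh1]
    apply intervalIntegral.integral_congr_ae
    filter_upwards [hae] with t htN htm
    rw [Set.uIoc_of_le (by norm_num : (0:ℝ) ≤ 1)] at htm
    have := (hkey t htN htm).1
    by_cases h : t ∈ I1
    · rw [Set.indicator_of_mem h, Set.indicator_of_mem h, this]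
    · rw [Set.indicator_of_notMem h, Set.indicator_of_notMem h]
  have hcong2 : lh2 = ∫ t in (0:ℝ)..1, Set.indicator I2 σ t := by
    rw [hlh2]
    apply intervalIntegral.integral_congr_ae
    filter_upwards [hae] with t htN htm
    rw [Set.uIoc_of_le (by norm_num : (0:ℝ) ≤ 1)] at htm
    have := (hkey t htN htm).1
    by_cases h : t ∈ I2
    · rw [Set.indicator_of_mem h, Set.indicator_of_mem h, this]
    · rw [Set.indicator_of_notMem h, Set.indicator_of_notMem h]
  -- integrability facts
  have hind1 : ∀ a b : ℝ, IntervalIntegrable (Set.indicator I1 σ) volume a b := by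
    intro a b
    apply meas_bdd_intInt C
    · exact hσm.indicator hI1m
    · intro t
      by_cases h : t ∈ I1
      · rw [Set.indicator_of_mem h]; exact hσb t
      · rw [Set.indicator_of_notMem h]; exact ⟨le_refl 0, hC0⟩
  have hind2 : ∀ a b : ℝ, IntervalIntegrable (Set.indicator I2 σ) volume a b := by
    intro a b
    apply meas_bdd_intInt C
    · exact hσm.indicator hI2m
    · intro t
      by_cases h : t ∈ I2
      · rw [Set.indicator_of_mem h]; exact hσb t
      · rw [Set.indicator_of_notMem h]; exact ⟨le_refl 0, hC0⟩
  have hindA1 : ∀ a b : ℝ, IntervalIntegrable (Set.indicator I1 A) volume a b := by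
    intro a b
    apply meas_bdd_intInt C
    · exact hAm.indicator hI1m
    · intro t
      by_cases h : t ∈ I1
      · rw [Set.indicator_of_mem h]; exact ⟨hA0 t, hAC t⟩
      · rw [Set.indicator_of_notMem h]; exact ⟨le_refl 0, hC0⟩
  have hindA2 : ∀ a b : ℝ, IntervalIntegrable (Set.indicator I2 A) volume a b := by
    intro a b
    apply meas_bdd_intInt C
    · exact hAm.indicator hI2m
    · intro t
      by_cases h : t ∈ I2
      · rw [Set.indicator_of_mem h]; exact ⟨hA0 t, hAC t⟩
      · rw [Set.indicator_of_notMem h]; exact ⟨le_refl 0, hC0⟩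
  -- sum property
  have hsumpt : ∀ t, Set.indicator I1 σ t + Set.indicator I2 σ t = σ t := by
    intro t
    have ht : t ∈ I1 ∪ I2 := by rw [hUnion]; trivial
    rcases ht with h | h
    · have h2 : t ∉ I2 := by
        intro h2; have : t ∈ I1 ∩ I2 := ⟨h, h2⟩; rw [hDisj] at this; exact this
      rw [Set.indicator_of_mem h, Set.indicator_of_notMem h2]; ring
    · have h1 : t ∉ I1 := by
        intro h1; have : t ∈ I1 ∩ I2 := ⟨h1, h⟩; rw [hDisj] at this; exact this
      rw [Set.indicator_of_notMem h1, Set.indicator_of_mem h]; ring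
  have hsum : lh1 + lh2 = ∫ t in (0:ℝ)..1, σ t := by
    rw [hcong1, hcong2]
    rw [← intervalIntegral.integral_add (hind1 0 1) (hind2 0 1)]
    apply intervalIntegral.integral_congr
    intro t _; exact hsumpt t
  have hI01 : (∫ t in (0:ℝ)..1, A t) = lam0 := hlam0.symm
  have hσval : (∫ t in (0:ℝ)..1, σ t) = lam := by
    rw [hσint, hI01]
    have := hfun_shift A C lam lam0 hAm hA0 hAC hAper hlam0 hl1 hl2 0
    rw [zero_add] at this
    rw [this]; ring
  refine ⟨by rw [hsum, hσval], ?_, ?_, ?_, ?_⟩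
  · rw [hcong1]
    apply intervalIntegral.integral_nonneg (by norm_num)
    intro t _
    by_cases h : t ∈ I1
    · rw [Set.indicator_of_mem h]; exact (hσb t).1
    · rw [Set.indicator_of_notMem h]
  · rw [hcong1, hlam1]
    apply intervalIntegral.integral_mono_ae_restrict (by norm_num : (0:ℝ) ≤ 1) (hind1 0 1) (hindA1 0 1)
    have h1 : ∀ᵐ t ∂(volume.restrict (Set.Icc (0:ℝ) 1)), t ∉ N :=
      Filter.Eventually.filter_mono (ae_mono Measure.restrict_le_self) hae
    have h2 : ∀ᵐ t ∂(volume.restrict (Set.Icc (0:ℝ) 1)), t ∈ Set.Icc (0:ℝ) 1 :=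
      ae_restrict_mem measurableSet_Icc
    have h0 : ∀ᵐ t ∂(volume.restrict (Set.Icc (0:ℝ) 1)), t ≠ 0 := by
      apply Filter.Eventually.filter_mono (ae_mono Measure.restrict_le_self)
      exact measure_eq_zero_iff_ae_notMem.mp (measure_singleton 0)
    filter_upwards [h1, h2, h0] with t htN htm ht0
    have htm' : t ∈ Set.Ioc (0:ℝ) 1 := ⟨lt_of_le_of_ne htm.1 (Ne.symm ht0), htm.2⟩
    have := (hkey t htN htm').2
    by_cases h : t ∈ I1
    · rw [Set.indicator_of_mem h, Set.indicator_of_mem h]; exact this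
    · rw [Set.indicator_of_notMem h, Set.indicator_of_notMem h]
  · rw [hcong2]
    apply intervalIntegral.integral_nonneg (by norm_num)
    intro t _
    by_cases h : t ∈ I2
    · rw [Set.indicator_of_mem h]; exact (hσb t).1
    · rw [Set.indicator_of_notMem h]
  · rw [hcong2, hlam2]
    apply intervalIntegral.integral_mono_ae_restrict (by norm_num : (0:ℝ) ≤ 1) (hind2 0 1) (hindA2 0 1)
    have h1 : ∀ᵐ t ∂(volume.restrict (Set.Icc (0:ℝ) 1)), t ∉ N :=
      Filter.Eventually.filter_mono (ae_mono Measure.restrict_le_self) hae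
    have h2 : ∀ᵐ t ∂(volume.restrict (Set.Icc (0:ℝ) 1)), t ∈ Set.Icc (0:ℝ) 1 :=
      ae_restrict_mem measurableSet_Icc
    have h0 : ∀ᵐ t ∂(volume.restrict (Set.Icc (0:ℝ) 1)), t ≠ 0 := by
      apply Filter.Eventually.filter_mono (ae_mono Measure.restrict_le_self)
      exact measure_eq_zero_iff_ae_notMem.mp (measure_singleton 0)
    filter_upwards [h1, h2, h0] with t htN htm ht0
    have htm' : t ∈ Set.Ioc (0:ℝ) 1 := ⟨lt_of_le_of_ne htm.1 (Ne.symm ht0), htm.2⟩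
    have := (hkey t htN htm').2
    by_cases h : t ∈ I2
    · rw [Set.indicator_of_mem h, Set.indicator_of_mem h]; exact this
    · rw [Set.indicator_of_notMem h, Set.indicator_of_notMem h]

/-- Above the mean, the junction flux is just `A` and the homogenized fluxes equal the limiters. -/
lemma Kabove (hAm : Measurable A) (hA0 : ∀ t, 0 ≤ A t) (hAC : ∀ t, A t ≤ C)
    (hAper : ∀ t, A (t + 1) = A t) (hlam0 : lam0 = ∫ t in (0:ℝ)..1, A t)
    (hl : lam0 < lam)
    (F : ℝ → ℝ → ℝ)
    (hF2 : ∀ μ t, ¬ (∀ t₁ < t, μ * (t - t₁) ≤ ∫ s in t₁..t, A s) → F μ t = A t)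
    (I1 I2 : Set ℝ)
    (hlam1 : lam1 = ∫ t in (0:ℝ)..1, Set.indicator I1 A t)
    (hlam2 : lam2 = ∫ t in (0:ℝ)..1, Set.indicator I2 A t)
    (lh1 lh2 : ℝ)
    (hlh1 : lh1 = ∫ t in (0:ℝ)..1, Set.indicator I1 (F lam) t)
    (hlh2 : lh2 = ∫ t in (0:ℝ)..1, Set.indicator I2 (F lam) t) :
    lh1 = lam1 ∧ lh2 = lam2 := by
  have hFA : ∀ t, F lam t = A t := by
    intro t
    apply hF2
    intro h
    have h2 := h (t - 1) (by linarith)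
    have h3 := per_int_eq A C lam0 hAm hA0 hAC hAper hlam0 (t-1)
    rw [sub_add_cancel] at h3
    rw [h3] at h2
    have : lam * (t - (t-1)) = lam := by ring
    rw [this] at h2
    linarith
  constructor
  · rw [hlh1, hlam1]
    apply intervalIntegral.integral_congr
    intro t _
    by_cases h : t ∈ I1
    · rw [Set.indicator_of_mem h, Set.indicator_of_mem h, hFA t]
    · rw [Set.indicator_of_notMem h, Set.indicator_of_notMem h]
  · rw [hlh2, hlam2]
    apply intervalIntegral.integral_congr
    intro t _
    by_cases h : t ∈ I2
    · rw [Set.indicator_of_mem h, Set.indicator_of_mem h, hFA t]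
    · rw [Set.indicator_of_notMem h, Set.indicator_of_notMem h]

end K


/-- A 1-periodic function equals its composition with `Int.fract`. -/
lemma per_fract {A : ℝ → ℝ} (h : ∀ t, A (t + 1) = A t) (t : ℝ) : A (Int.fract t) = A t := by
  have hper : Function.Periodic A 1 := h
  have h1 : Int.fract t = t - (⌊t⌋ : ℤ) * 1 := by rw [Int.fract]; ring
  rw [h1]
  exact Function.Periodic.sub_int_mul_eq hper ⌊t⌋

lemma per_mem_fract {I : Set ℝ} (h : ∀ t, t + 1 ∈ I ↔ t ∈ I) (t : ℝ) :
    Int.fract t ∈ I ↔ t ∈ I := by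
  set χ : ℝ → ℝ := fun s => if s ∈ I then (1:ℝ) else 0 with hχ
  have hχper : ∀ s, χ (s + 1) = χ s := by
    intro s
    by_cases hs : s ∈ I
    · simp [hχ, hs, (h s).2 hs]
    · have : s + 1 ∉ I := fun hc => hs ((h s).1 hc)
      simp [hχ, hs, this]
  have hth := per_fract hχper t
  constructor
  · intro h2
    by_contra h1
    simp [hχ, h1, h2] at hth
  · intro h1
    by_contra h2
    simp [hχ, h1, h2] at hth

/-- Measurability of a periodic set given a nice trace on `[0,1)`. -/
lemma I_measurable {I : Set ℝ} (hper : ∀ t, t + 1 ∈ I ↔ t ∈ I)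
    (hloc : ∃ S : Finset (ℝ × ℝ), I ∩ Set.Ico 0 1 = ⋃ p ∈ S, Set.Ico p.1 p.2) :
    MeasurableSet I := by
  obtain ⟨S, hS⟩ := hloc
  have hItrace : MeasurableSet (I ∩ Set.Ico 0 1) := by
    rw [hS]
    apply Set.Finite.measurableSet_biUnion (S.finite_toSet)
    intro p _
    exact measurableSet_Ico
  have hIeq : I = Int.fract ⁻¹' (I ∩ Set.Ico 0 1) := by
    ext t
    simp only [Set.mem_preimage, Set.mem_inter_iff, Set.mem_Ico]
    constructor
    · intro ht
      exact ⟨(per_mem_fract hper t).2 ht, Int.fract_nonneg t, Int.fract_lt_one t⟩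
    · intro ⟨h1, _⟩
      exact (per_mem_fract hper t).1 h1
  rw [hIeq]
  exact measurable_fract hItrace

/-- Measurability of the piecewise constant periodic limiter. -/
lemma A_measurable {A : ℝ → ℝ} (hAper : ∀ t, A (t + 1) = A t)
    (hApc : ∃ S : Finset (ℝ × ℝ), (Set.Ico (0:ℝ) 1 ⊆ ⋃ p ∈ S, Set.Ico p.1 p.2) ∧
      ∀ p ∈ S, ∃ cst, ∀ t ∈ Set.Ico p.1 p.2, A t = cst) :
    Measurable A := by
  obtain ⟨S, hcover, hconst⟩ := hApc
  choose! cst hcst using hconst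
  intro s hs
  have htrace : ∀ s' : Set ℝ, MeasurableSet {x : ℝ | x ∈ Set.Ico (0:ℝ) 1 ∧ A x ∈ s'} := by
    intro s'
    have heq : {x : ℝ | x ∈ Set.Ico (0:ℝ) 1 ∧ A x ∈ s'} =
        ⋃ p ∈ (↑S : Set (ℝ × ℝ)), (if cst p ∈ s' then Set.Ico p.1 p.2 ∩ Set.Ico 0 1 else ∅) := by
      ext x
      simp only [Set.mem_setOf_eq, Set.mem_iUnion, Finset.mem_coe]
      constructor
      · rintro ⟨hx01, hxs⟩
        obtain ⟨U, ⟨p, rfl⟩, hU⟩ := hcover hx01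
        simp only [Set.mem_iUnion] at hU
        obtain ⟨hp, hxp⟩ := hU
        refine ⟨p, hp, ?_⟩
        have : A x = cst p := hcst p hp x hxp
        rw [if_pos (this ▸ hxs)]
        exact ⟨hxp, hx01⟩
      · rintro ⟨p, hp, hx⟩
        by_cases h : cst p ∈ s'
        · rw [if_pos h] at hx
          exact ⟨hx.2, by rw [hcst p hp x hx.1]; exact h⟩
        · rw [if_neg h] at hx
          exact absurd hx (Set.notMem_empty x)
    rw [heq]
    apply Set.Finite.measurableSet_biUnion (S.finite_toSet)
    intro p _
    by_cases h : cst p ∈ s'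
    · rw [if_pos h]; exact measurableSet_Ico.inter measurableSet_Ico
    · rw [if_neg h]; exact MeasurableSet.empty
  have hAeq : A ⁻¹' s = Int.fract ⁻¹' {x : ℝ | x ∈ Set.Ico (0:ℝ) 1 ∧ A x ∈ s} := by
    ext t
    simp only [Set.mem_preimage, Set.mem_setOf_eq]
    constructor
    · intro ht
      exact ⟨⟨Int.fract_nonneg t, Int.fract_lt_one t⟩, by rw [per_fract hAper t]; exact ht⟩
    · intro ⟨_, h⟩
      rw [per_fract hAper t] at h
      exact h
  rw [hAeq]
  exact measurable_fract (htrace s)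

/-- The breakpoint finset. -/
lemma exists_T {A : ℝ → ℝ}
    (hApc : ∃ S : Finset (ℝ × ℝ), (Set.Ico (0:ℝ) 1 ⊆ ⋃ p ∈ S, Set.Ico p.1 p.2) ∧
      ∀ p ∈ S, ∃ cst, ∀ t ∈ Set.Ico p.1 p.2, A t = cst) :
    ∃ T : Finset ℝ, ∀ u w, 0 ≤ u → u < w → w ≤ 1 → (∀ x ∈ T, ¬(u < x ∧ x < w)) →
      ∀ t ∈ Set.Ico u w, A t = A u := by
  obtain ⟨S, hcover, hconst⟩ := hApc
  refine ⟨S.image (fun p => max 0 (min p.2 1)), ?_⟩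
  intro u w h0u huw hw1 hno t ht
  have hu01 : u ∈ Set.Ico (0:ℝ) 1 := ⟨h0u, lt_of_lt_of_le huw hw1⟩
  obtain ⟨U, ⟨p, rfl⟩, hU⟩ := hcover hu01
  simp only [Set.mem_iUnion] at hU
  obtain ⟨hp, hup⟩ := hU
  obtain ⟨cst, hcst⟩ := hconst p hp
  have hwp2 : w ≤ p.2 := by
    by_contra hcon
    push_neg at hcon
    have hx : max 0 (min p.2 1) = p.2 := by
      rw [min_eq_left (le_of_lt (lt_of_lt_of_le hcon hw1)), max_eq_right (le_trans h0u (le_of_lt hup.2))]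
    apply hno (max 0 (min p.2 1)) (Finset.mem_image_of_mem _ hp)
    rw [hx]
    exact ⟨hup.2, hcon⟩
  have htp : t ∈ Set.Ico p.1 p.2 := ⟨le_trans hup.1 ht.1, lt_of_lt_of_le ht.2 hwp2⟩
  rw [hcst t htp, hcst u hup]


/-- Nonnegativity of a unimodal flux. -/
lemma uni_nonneg {f : ℝ → ℝ} {a b c : ℝ} (hab : a < b) (hbc : b < c)
    (hinc : StrictMonoOn f (Icc a b)) (hdec : StrictAntiOn f (Icc b c))
    (hfa : f a = 0) (hfc : f c = 0) : ∀ p ∈ Icc a c, 0 ≤ f p := by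
  intro p hp
  rcases le_total p b with h | h
  · rcases eq_or_lt_of_le hp.1 with rfl | hlt
    · rw [hfa]
    · have := hinc ⟨le_refl a, le_of_lt hab⟩ ⟨hp.1, h⟩ hlt
      linarith
  · rcases eq_or_lt_of_le hp.2 with rfl | hlt
    · rw [hfc]
    · have := hdec ⟨h, hp.2⟩ ⟨le_of_lt hbc, le_refl c⟩ hlt
      linarith

lemma uni_peak_pos {f : ℝ → ℝ} {a b : ℝ} (hab : a < b)
    (hinc : StrictMonoOn f (Icc a b)) (hfa : f a = 0) : 0 < f b := by
  have := hinc ⟨le_refl a, le_of_lt hab⟩ ⟨le_of_lt hab, le_refl b⟩ hab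
  linarith

lemma uni_le_peak {f : ℝ → ℝ} {a b : ℝ} (hinc : StrictMonoOn f (Icc a b)) :
    ∀ p ∈ Icc a b, f p ≤ f b := by
  intro p hp
  exact hinc.monotoneOn hp ⟨le_trans hp.1 hp.2, le_refl b⟩ hp.2

lemma ef_at_top {f : ℝ → ℝ} {u c : ℝ} (h : u ≤ c) (hfc : f c = 0) :
    Real.sign (c - u) * (f c - f u) = - f u := by
  rcases eq_or_lt_of_le h with rfl | h
  · simp [hfc]
  · rw [Real.sign_of_pos (by linarith), hfc]; ring

lemma ef_at_bot {f : ℝ → ℝ} {u a : ℝ} (h : a ≤ u) (hfa : f a = 0) :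
    Real.sign (a - u) * (f a - f u) = f u := by
  rcases eq_or_lt_of_le h with rfl | h
  · simp [hfa]
  · rw [Real.sign_of_neg (by linarith), hfa]; ring

end CharGerm

/-- The characteristic subgerm `E_Λ̄` is contained in the homogenized germ `G_Λ̄`
and generates it: if `U ∈ Q` dissipates against every element of `E_Λ̄`, then `U ∈ G_Λ̄`. -/
theorem characteristic_subgerm_generates
    (a0 b0 c0 a1 b1 c1 a2 b2 c2 δ : ℝ) (hδ : 0 < δ)
    (f0 f1 f2 : ℝ → ℝ)
    (h0ab : a0 < b0) (h0bc : b0 < c0) (h1ab : a1 < b1) (h1bc : b1 < c1)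
    (h2ab : a2 < b2) (h2bc : b2 < c2)
    -- fluxes C², uniformly concave, unimodal, vanishing at the endpoints
    (hf0reg : ContDiffOn ℝ 2 f0 (Set.Icc a0 c0))
    (hf1reg : ContDiffOn ℝ 2 f1 (Set.Icc a1 c1))
    (hf2reg : ContDiffOn ℝ 2 f2 (Set.Icc a2 c2))
    (hf0conc : ∀ p ∈ Set.Icc a0 c0, iteratedDerivWithin 2 f0 (Set.Icc a0 c0) p ≤ -δ)
    (hf1conc : ∀ p ∈ Set.Icc a1 c1, iteratedDerivWithin 2 f1 (Set.Icc a1 c1) p ≤ -δ)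
    (hf2conc : ∀ p ∈ Set.Icc a2 c2, iteratedDerivWithin 2 f2 (Set.Icc a2 c2) p ≤ -δ)
    (hf0inc : StrictMonoOn f0 (Set.Icc a0 b0)) (hf0dec : StrictAntiOn f0 (Set.Icc b0 c0))
    (hf1inc : StrictMonoOn f1 (Set.Icc a1 b1)) (hf1dec : StrictAntiOn f1 (Set.Icc b1 c1))
    (hf2inc : StrictMonoOn f2 (Set.Icc a2 b2)) (hf2dec : StrictAntiOn f2 (Set.Icc b2 c2))
    (hf0a : f0 a0 = 0) (hf0c : f0 c0 = 0)
    (hf1a : f1 a1 = 0) (hf1c : f1 c1 = 0)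
    (hf2a : f2 a2 = 0) (hf2c : f2 c2 = 0)
    -- the monotone envelopes f^{j,+}
    (fplus0 fplus1 fplus2 : ℝ → ℝ)
    (hfp0 : ∀ p, (p ≤ b0 → fplus0 p = f0 p) ∧ (b0 ≤ p → fplus0 p = f0 b0))
    (hfp1 : ∀ p, (p ≤ b1 → fplus1 p = f1 p) ∧ (b1 ≤ p → fplus1 p = f1 b1))
    (hfp2 : ∀ p, (p ≤ b2 → fplus2 p = f2 p) ∧ (b2 ≤ p → fplus2 p = f2 b2))
    -- roots of the monotone envelopes
    (u0m u1p u2p : ℝ → ℝ)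
    (hu0m : ∀ lam ∈ Set.Icc 0 (f0 b0), u0m lam ∈ Set.Icc b0 c0 ∧ f0 (u0m lam) = lam)
    (hu1p : ∀ lam ∈ Set.Icc 0 (f1 b1), u1p lam ∈ Set.Icc a1 b1 ∧ f1 (u1p lam) = lam)
    (hu2p : ∀ lam ∈ Set.Icc 0 (f2 b2), u2p lam ∈ Set.Icc a2 b2 ∧ f2 (u2p lam) = lam)
    -- the 1-periodic partition I¹, I², each locally a finite union of intervals
    (I1 I2 : Set ℝ)
    (hUnion : I1 ∪ I2 = Set.univ) (hDisj : I1 ∩ I2 = ∅)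
    (hper1 : ∀ t, t + 1 ∈ I1 ↔ t ∈ I1) (hper2 : ∀ t, t + 1 ∈ I2 ↔ t ∈ I2)
    (hloc1 : ∃ S : Finset (ℝ × ℝ), I1 ∩ Set.Ico 0 1 = ⋃ p ∈ S, Set.Ico p.1 p.2)
    (hloc2 : ∃ S : Finset (ℝ × ℝ), I2 ∩ Set.Ico 0 1 = ⋃ p ∈ S, Set.Ico p.1 p.2)
    -- the piecewise constant 1-periodic flux limiter A with the standing bounds
    (A : ℝ → ℝ) (hAper : ∀ t, A (t + 1) = A t)
    (hApc : ∃ S : Finset (ℝ × ℝ), (Set.Ico (0:ℝ) 1 ⊆ ⋃ p ∈ S, Set.Ico p.1 p.2) ∧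
      ∀ p ∈ S, ∃ cst, ∀ t ∈ Set.Ico p.1 p.2, A t = cst)
    (hAbd1 : ∀ t ∈ I1, A t ∈ Set.Icc 0 (min (f0 b0) (f1 b1)))
    (hAbd2 : ∀ t ∈ I2, A t ∈ Set.Icc 0 (min (f0 b0) (f2 b2)))
    -- the effective limiters
    (lam0 lam1 lam2 : ℝ)
    (hlam0 : lam0 = ∫ t in (0:ℝ)..1, A t)
    (hlam1 : lam1 = ∫ t in (0:ℝ)..1, Set.indicator I1 A t)
    (hlam2 : lam2 = ∫ t in (0:ℝ)..1, Set.indicator I2 A t)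
    -- the junction flux F_λ and the homogenized fluxes λ̂ᵏ
    (F : ℝ → ℝ → ℝ)
    (hF1 : ∀ μ t, (∀ t₁ < t, μ * (t - t₁) ≤ ∫ s in t₁..t, A s) → F μ t = μ)
    (hF2 : ∀ μ t, ¬ (∀ t₁ < t, μ * (t - t₁) ≤ ∫ s in t₁..t, A s) → F μ t = A t)
    (lhat1 lhat2 : ℝ → ℝ)
    (hlh1 : ∀ lam, lhat1 lam = ∫ t in (0:ℝ)..1, Set.indicator I1 (F lam) t)
    (hlh2 : ∀ lam, lhat2 lam = ∫ t in (0:ℝ)..1, Set.indicator I2 (F lam) t)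
    -- the homogenized germ G_Λ̄
    (G : Set (ℝ × ℝ × ℝ))
    (hG : G = {P : ℝ × ℝ × ℝ |
      P.1 ∈ Set.Icc a0 c0 ∧ P.2.1 ∈ Set.Icc a1 c1 ∧ P.2.2 ∈ Set.Icc a2 c2 ∧
      f0 P.1 ∈ Set.Icc 0 lam0 ∧ f1 P.2.1 ∈ Set.Icc 0 lam1 ∧ f2 P.2.2 ∈ Set.Icc 0 lam2 ∧
      f0 P.1 = f1 P.2.1 + f2 P.2.2 ∧
      lhat1 (fplus0 P.1) ≤ fplus1 P.2.1 ∧ lhat2 (fplus0 P.1) ≤ fplus2 P.2.2})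
    -- the characteristic subgerm E_Λ̄
    (E : Set (ℝ × ℝ × ℝ))
    (hE : E = {P : ℝ × ℝ × ℝ | ∃ p0, p0 ∈ Set.Icc a0 b0 ∧ f0 p0 ≤ lam0 ∧
          P = (p0, u1p (lhat1 (f0 p0)), u2p (lhat2 (f0 p0)))} ∪
        {(u0m lam1, u1p lam1, c2), (u0m lam2, c1, u2p lam2), (c0, c1, c2)}) :
    E ⊆ G ∧
    (∀ U : ℝ × ℝ × ℝ,
      U.1 ∈ Set.Icc a0 c0 → U.2.1 ∈ Set.Icc a1 c1 → U.2.2 ∈ Set.Icc a2 c2 →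
      (∀ Ub ∈ E,
        0 ≤ entropyFlux f0 U.1 Ub.1 -
            (entropyFlux f1 U.2.1 Ub.2.1 + entropyFlux f2 U.2.2 Ub.2.2)) →
      U ∈ G) := by
  -- ambient facts
  have hA0 : ∀ t, 0 ≤ A t := by
    intro t
    have ht : t ∈ I1 ∪ I2 := by rw [hUnion]; trivial
    rcases ht with h | h
    · exact (hAbd1 t h).1
    · exact (hAbd2 t h).1
  have hC1 : 0 < f0 b0 := CharGerm.uni_peak_pos h0ab hf0inc hf0a
  have hC1' : 0 < f1 b1 := CharGerm.uni_peak_pos h1ab hf1inc hf1a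
  have hC2' : 0 < f2 b2 := CharGerm.uni_peak_pos h2ab hf2inc hf2a
  have hAC : ∀ t, A t ≤ f0 b0 := by
    intro t
    have ht : t ∈ I1 ∪ I2 := by rw [hUnion]; trivial
    rcases ht with h | h
    · exact le_trans (hAbd1 t h).2 (min_le_left _ _)
    · exact le_trans (hAbd2 t h).2 (min_le_left _ _)
  have hAm := CharGerm.A_measurable hAper hApc
  have hI1m := CharGerm.I_measurable hper1 hloc1
  have hI2m := CharGerm.I_measurable hper2 hloc2
  obtain ⟨T, hT⟩ := CharGerm.exists_T hApc
  have hAint : ∀ a b : ℝ, IntervalIntegrable A volume a b :=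
    CharGerm.meas_bdd_intInt (f0 b0) A hAm (fun t => ⟨hA0 t, hAC t⟩)
  have hind1int : ∀ a b : ℝ, IntervalIntegrable (Set.indicator I1 A) volume a b := by
    apply CharGerm.meas_bdd_intInt (f0 b0) _ (hAm.indicator hI1m)
    intro t
    by_cases h : t ∈ I1
    · rw [Set.indicator_of_mem h]; exact ⟨hA0 t, hAC t⟩
    · rw [Set.indicator_of_notMem h]; exact ⟨le_refl 0, le_of_lt hC1⟩
  have hind2int : ∀ a b : ℝ, IntervalIntegrable (Set.indicator I2 A) volume a b := by
    apply CharGerm.meas_bdd_intInt (f0 b0) _ (hAm.indicator hI2m)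
    intro t
    by_cases h : t ∈ I2
    · rw [Set.indicator_of_mem h]; exact ⟨hA0 t, hAC t⟩
    · rw [Set.indicator_of_notMem h]; exact ⟨le_refl 0, le_of_lt hC1⟩
  have hlam00 : 0 ≤ lam0 := by
    rw [hlam0]
    exact intervalIntegral.integral_nonneg (by norm_num) (fun t _ => hA0 t)
  have hlam0C : lam0 ≤ f0 b0 := by
    rw [hlam0]
    calc (∫ t in (0:ℝ)..1, A t) ≤ ∫ _ in (0:ℝ)..1, f0 b0 := by
          apply intervalIntegral.integral_mono_on (by norm_num) (hAint 0 1)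
            (intervalIntegrable_const) (fun t _ => hAC t)
      _ = f0 b0 := by simp
  have hlamsum : lam1 + lam2 = lam0 := by
    rw [hlam0, hlam1, hlam2, ← intervalIntegral.integral_add (hind1int 0 1) (hind2int 0 1)]
    apply intervalIntegral.integral_congr
    intro t _
    have ht : t ∈ I1 ∪ I2 := by rw [hUnion]; trivial
    rcases ht with h | h
    · have h2 : t ∉ I2 := fun h2 => by
        have : t ∈ I1 ∩ I2 := ⟨h, h2⟩; rw [hDisj] at this; exact this
      simp [Set.indicator_of_mem h, Set.indicator_of_notMem h2]
    · have h1 : t ∉ I1 := fun h1 => by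
        have : t ∈ I1 ∩ I2 := ⟨h1, h⟩; rw [hDisj] at this; exact this
      simp [Set.indicator_of_notMem h1, Set.indicator_of_mem h]
  have hlam10 : 0 ≤ lam1 := by
    rw [hlam1]
    apply intervalIntegral.integral_nonneg (by norm_num)
    intro t _
    exact Set.indicator_nonneg (fun s _ => hA0 s) t
  have hlam20 : 0 ≤ lam2 := by
    rw [hlam2]
    apply intervalIntegral.integral_nonneg (by norm_num)
    intro t _
    exact Set.indicator_nonneg (fun s _ => hA0 s) t
  have hlam1f : lam1 ≤ f1 b1 := by
    rw [hlam1]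
    calc (∫ t in (0:ℝ)..1, Set.indicator I1 A t) ≤ ∫ _ in (0:ℝ)..1, f1 b1 := by
          apply intervalIntegral.integral_mono_on (by norm_num) (hind1int 0 1)
            (intervalIntegrable_const)
          intro t _
          by_cases h : t ∈ I1
          · rw [Set.indicator_of_mem h]
            exact le_trans (hAbd1 t h).2 (min_le_right _ _)
          · rw [Set.indicator_of_notMem h]; exact le_of_lt hC1'
      _ = f1 b1 := by simp
  have hlam2f : lam2 ≤ f2 b2 := by
    rw [hlam2]
    calc (∫ t in (0:ℝ)..1, Set.indicator I2 A t) ≤ ∫ _ in (0:ℝ)..1, f2 b2 := by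
          apply intervalIntegral.integral_mono_on (by norm_num) (hind2int 0 1)
            (intervalIntegrable_const)
          intro t _
          by_cases h : t ∈ I2
          · rw [Set.indicator_of_mem h]
            exact le_trans (hAbd2 t h).2 (min_le_right _ _)
          · rw [Set.indicator_of_notMem h]; exact le_of_lt hC2'
      _ = f2 b2 := by simp
  -- the K-properties of the homogenized fluxes
  have K : ∀ lam, 0 ≤ lam → lam ≤ lam0 →
      lhat1 lam + lhat2 lam = lam ∧ 0 ≤ lhat1 lam ∧ lhat1 lam ≤ lam1 ∧
      0 ≤ lhat2 lam ∧ lhat2 lam ≤ lam2 := by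
    intro lam h1 h2
    exact CharGerm.Kmain A (f0 b0) lam lam0 lam1 lam2 hAm hA0 hAC hAper hlam0 h1 h2
      (le_trans h2 hlam0C) (le_of_lt hC1) T hT F hF1 hF2 I1 I2 hI1m hI2m hUnion hDisj
      hlam1 hlam2 _ _ (hlh1 lam) (hlh2 lam)
  have Kab : ∀ lam, lam0 < lam → lhat1 lam = lam1 ∧ lhat2 lam = lam2 := by
    intro lam h
    exact CharGerm.Kabove A (f0 b0) lam lam0 lam1 lam2 hAm hA0 hAC hAper hlam0 h F hF2
      I1 I2 hlam1 hlam2 _ _ (hlh1 lam) (hlh2 lam)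
  -- uniform bounds on lhat
  have Kb : ∀ lam, 0 ≤ lam →
      0 ≤ lhat1 lam ∧ lhat1 lam ≤ lam1 ∧ 0 ≤ lhat2 lam ∧ lhat2 lam ≤ lam2 := by
    intro lam h1
    rcases le_or_gt lam lam0 with h2 | h2
    · obtain ⟨_, k1, k2, k3, k4⟩ := K lam h1 h2
      exact ⟨k1, k2, k3, k4⟩
    · obtain ⟨k1, k2⟩ := Kab lam h2
      rw [k1, k2]
      exact ⟨hlam10, le_refl _, hlam20, le_refl _⟩
  have Klam0 : lhat1 lam0 = lam1 ∧ lhat2 lam0 = lam2 := by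
    obtain ⟨hs, k1, k2, k3, k4⟩ := K lam0 hlam00 (le_refl _)
    constructor <;> linarith
  have K0 : lhat1 0 = 0 ∧ lhat2 0 = 0 := by
    obtain ⟨hs, k1, k2, k3, k4⟩ := K 0 (le_refl 0) hlam00
    constructor <;> linarith
  -- nonnegativity of the fluxes
  have hf0nn := CharGerm.uni_nonneg h0ab h0bc hf0inc hf0dec hf0a hf0c
  have hf1nn := CharGerm.uni_nonneg h1ab h1bc hf1inc hf1dec hf1a hf1c
  have hf2nn := CharGerm.uni_nonneg h2ab h2bc hf2inc hf2dec hf2a hf2c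
  have hlam1lam0 : lam1 ≤ lam0 := by linarith
  have hlam2lam0 : lam2 ≤ lam0 := by linarith
  constructor
  · -- Part 1 : E ⊆ G
    rw [hE, hG]
    rintro P hP
    rcases hP with hcurve | hrest
    · obtain ⟨p0, hp0, hle, rfl⟩ := hcurve
      set lam := f0 p0 with hlamdef
      have hlamnn : 0 ≤ lam := hf0nn p0 ⟨hp0.1, le_trans hp0.2 (le_of_lt h0bc)⟩
      obtain ⟨hsum, k1, k2, k3, k4⟩ := K lam hlamnn hle
      have hu1 := hu1p (lhat1 lam) ⟨k1, le_trans k2 hlam1f⟩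
      have hu2 := hu2p (lhat2 lam) ⟨k3, le_trans k4 hlam2f⟩
      refine ⟨⟨hp0.1, le_trans hp0.2 (le_of_lt h0bc)⟩,
        ⟨hu1.1.1, le_trans hu1.1.2 (le_of_lt h1bc)⟩,
        ⟨hu2.1.1, le_trans hu2.1.2 (le_of_lt h2bc)⟩,
        ⟨hlamnn, hle⟩, ?_, ?_, ?_, ?_, ?_⟩
      · rw [hu1.2]; exact ⟨k1, k2⟩
      · rw [hu2.2]; exact ⟨k3, k4⟩
      · rw [hu1.2, hu2.2, hsum]
      · rw [(hfp0 p0).1 hp0.2, (hfp1 _).1 hu1.1.2, hu1.2]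
      · rw [(hfp0 p0).1 hp0.2, (hfp2 _).1 hu2.1.2, hu2.2]
    · have hlam1mem : lam1 ∈ Set.Icc 0 (f0 b0) := ⟨hlam10, le_trans hlam1lam0 hlam0C⟩
      have hlam2mem : lam2 ∈ Set.Icc 0 (f0 b0) := ⟨hlam20, le_trans hlam2lam0 hlam0C⟩
      have hu01 := hu0m lam1 hlam1mem
      have hu02 := hu0m lam2 hlam2mem
      have hu11 := hu1p lam1 ⟨hlam10, hlam1f⟩
      have hu22 := hu2p lam2 ⟨hlam20, hlam2f⟩
      have hKb1 := Kb (f0 b0) (le_of_lt hC1)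
      rcases hrest with h | h | h
      · -- (u0m lam1, u1p lam1, c2)
        rw [h]
        refine ⟨⟨le_trans (le_of_lt h0ab) hu01.1.1, hu01.1.2⟩,
          ⟨hu11.1.1, le_trans hu11.1.2 (le_of_lt h1bc)⟩,
          ⟨le_trans (le_of_lt h2ab) (le_of_lt h2bc), le_refl c2⟩, ?_, ?_, ?_, ?_, ?_, ?_⟩
        · rw [hu01.2]; exact ⟨hlam10, hlam1lam0⟩
        · rw [hu11.2]; exact ⟨hlam10, le_refl _⟩
        · rw [hf2c]; exact ⟨le_refl 0, hlam20⟩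
        · rw [hu01.2, hu11.2, hf2c]; ring
        · rw [(hfp0 _).2 hu01.1.1, (hfp1 _).1 hu11.1.2, hu11.2]
          exact hKb1.2.1
        · rw [(hfp0 _).2 hu01.1.1, (hfp2 c2).2 (le_of_lt h2bc)]
          exact le_trans hKb1.2.2.2 hlam2f
      · -- (u0m lam2, c1, u2p lam2)
        rw [h]
        refine ⟨⟨le_trans (le_of_lt h0ab) hu02.1.1, hu02.1.2⟩,
          ⟨le_trans (le_of_lt h1ab) (le_of_lt h1bc), le_refl c1⟩,
          ⟨hu22.1.1, le_trans hu22.1.2 (le_of_lt h2bc)⟩, ?_, ?_, ?_, ?_, ?_, ?_⟩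
        · rw [hu02.2]; exact ⟨hlam20, hlam2lam0⟩
        · rw [hf1c]; exact ⟨le_refl 0, hlam10⟩
        · rw [hu22.2]; exact ⟨hlam20, le_refl _⟩
        · rw [hu02.2, hf1c, hu22.2]; ring
        · rw [(hfp0 _).2 hu02.1.1, (hfp1 c1).2 (le_of_lt h1bc)]
          exact le_trans hKb1.2.1 hlam1f
        · rw [(hfp0 _).2 hu02.1.1, (hfp2 _).1 hu22.1.2, hu22.2]
          exact hKb1.2.2.2
      · -- (c0, c1, c2)
        rw [h]
        refine ⟨⟨le_trans (le_of_lt h0ab) (le_of_lt h0bc), le_refl c0⟩,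
          ⟨le_trans (le_of_lt h1ab) (le_of_lt h1bc), le_refl c1⟩,
          ⟨le_trans (le_of_lt h2ab) (le_of_lt h2bc), le_refl c2⟩, ?_, ?_, ?_, ?_, ?_, ?_⟩
        · rw [hf0c]; exact ⟨le_refl 0, hlam00⟩
        · rw [hf1c]; exact ⟨le_refl 0, hlam10⟩
        · rw [hf2c]; exact ⟨le_refl 0, hlam20⟩
        · rw [hf0c, hf1c, hf2c]; ring
        · rw [(hfp0 c0).2 (le_of_lt h0bc), (hfp1 c1).2 (le_of_lt h1bc)]
          exact le_trans hKb1.2.1 hlam1f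
        · rw [(hfp0 c0).2 (le_of_lt h0bc), (hfp2 c2).2 (le_of_lt h2bc)]
          exact le_trans hKb1.2.2.2 hlam2f
  · -- Part 2
    intro U hU0 hU1 hU2 hdiss
    obtain ⟨u0, u1, u2⟩ := U
    simp only at hU0 hU1 hU2
    rw [hG]
    have hq0nn : 0 ≤ f0 u0 := hf0nn u0 hU0
    have hq1nn : 0 ≤ f1 u1 := hf1nn u1 hU1
    have hq2nn : 0 ≤ f2 u2 := hf2nn u2 hU2
    -- memberships in E
    have hmem4 : ((c0, c1, c2) : ℝ × ℝ × ℝ) ∈ E := by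
      rw [hE]; exact Set.mem_union_right _ (by simp)
    have hmemii : ((u0m lam1, u1p lam1, c2) : ℝ × ℝ × ℝ) ∈ E := by
      rw [hE]; exact Set.mem_union_right _ (by simp)
    have hmemiii : ((u0m lam2, c1, u2p lam2) : ℝ × ℝ × ℝ) ∈ E := by
      rw [hE]; exact Set.mem_union_right _ (by simp)
    have hcurvemem : ∀ p0, p0 ∈ Set.Icc a0 b0 → f0 p0 ≤ lam0 →
        ((p0, u1p (lhat1 (f0 p0)), u2p (lhat2 (f0 p0))) : ℝ × ℝ × ℝ) ∈ E := by
      intro p0 h1 h2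
      rw [hE]; exact Set.mem_union_left _ ⟨p0, h1, h2, rfl⟩
    -- Step A : q0 ≤ q1 + q2
    have hdA := hdiss (c0, c1, c2) hmem4
    simp only [entropyFlux] at hdA
    rw [CharGerm.ef_at_top hU0.2 hf0c, CharGerm.ef_at_top hU1.2 hf1c,
      CharGerm.ef_at_top hU2.2 hf2c] at hdA
    -- Step B : q0 ≥ q1 + q2
    have ha1 : u1p 0 = a1 := by
      have h := hu1p 0 ⟨le_refl 0, le_of_lt hC1'⟩
      apply hf1inc.injOn h.1 ⟨le_refl a1, le_of_lt h1ab⟩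
      rw [h.2, hf1a]
    have ha2 : u2p 0 = a2 := by
      have h := hu2p 0 ⟨le_refl 0, le_of_lt hC2'⟩
      apply hf2inc.injOn h.1 ⟨le_refl a2, le_of_lt h2ab⟩
      rw [h.2, hf2a]
    have hmemA : ((a0, a1, a2) : ℝ × ℝ × ℝ) ∈ E := by
      have h := hcurvemem a0 ⟨le_refl a0, le_of_lt h0ab⟩ (by rw [hf0a]; exact hlam00)
      rw [hf0a, K0.1, K0.2, ha1, ha2] at h
      exact h
    have hdB := hdiss (a0, a1, a2) hmemA
    simp only [entropyFlux] at hdB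
    rw [CharGerm.ef_at_bot hU0.1 hf0a, CharGerm.ef_at_bot hU1.1 hf1a,
      CharGerm.ef_at_bot hU2.1 hf2a] at hdB
    have hRH : f0 u0 = f1 u1 + f2 u2 := by linarith
    -- Step C : q1 ≤ lam1
    have hq1lam1 : f1 u1 ≤ lam1 := by
      by_contra hcon
      push_neg at hcon
      have hz1 := hu1p lam1 ⟨hlam10, hlam1f⟩
      have hz0 := hu0m lam1 ⟨hlam10, le_trans hlam1lam0 hlam0C⟩
      have hu1gt : u1p lam1 < u1 := by
        rcases le_or_gt u1 b1 with h | h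
        · by_contra hle
          push_neg at hle
          have := hf1inc.monotoneOn ⟨hU1.1, h⟩ hz1.1 hle
          rw [hz1.2] at this; linarith
        · exact lt_of_le_of_lt hz1.1.2 h
      have hdC := hdiss (u0m lam1, u1p lam1, c2) hmemii
      simp only [entropyFlux] at hdC
      rw [CharGerm.ef_at_top hU2.2 hf2c] at hdC
      have e1 : Real.sign (u1p lam1 - u1) * (f1 (u1p lam1) - f1 u1) = f1 u1 - lam1 := by
        rw [Real.sign_of_neg (by linarith), hz1.2]; ring
      rw [e1] at hdC
      rcases lt_trichotomy u0 (u0m lam1) with h | h | h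
      · have e0 : Real.sign (u0m lam1 - u0) * (f0 (u0m lam1) - f0 u0) = lam1 - f0 u0 := by
          rw [Real.sign_of_pos (by linarith), hz0.2]; ring
        rw [e0] at hdC
        linarith
      · have : f0 u0 = lam1 := by rw [h, hz0.2]
        linarith
      · have : f0 u0 < lam1 := by
          have h2 := hf0dec hz0.1 ⟨le_trans hz0.1.1 (le_of_lt h), hU0.2⟩ h
          rw [hz0.2] at h2; exact h2
        linarith
    -- Step C' : q2 ≤ lam2
    have hq2lam2 : f2 u2 ≤ lam2 := by
      by_contra hcon
      push_neg at hcon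
      have hz2 := hu2p lam2 ⟨hlam20, hlam2f⟩
      have hz0 := hu0m lam2 ⟨hlam20, le_trans hlam2lam0 hlam0C⟩
      have hu2gt : u2p lam2 < u2 := by
        rcases le_or_gt u2 b2 with h | h
        · by_contra hle
          push_neg at hle
          have := hf2inc.monotoneOn ⟨hU2.1, h⟩ hz2.1 hle
          rw [hz2.2] at this; linarith
        · exact lt_of_le_of_lt hz2.1.2 h
      have hdC := hdiss (u0m lam2, c1, u2p lam2) hmemiii
      simp only [entropyFlux] at hdC
      rw [CharGerm.ef_at_top hU1.2 hf1c] at hdC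
      have e2 : Real.sign (u2p lam2 - u2) * (f2 (u2p lam2) - f2 u2) = f2 u2 - lam2 := by
        rw [Real.sign_of_neg (by linarith), hz2.2]; ring
      rw [e2] at hdC
      rcases lt_trichotomy u0 (u0m lam2) with h | h | h
      · have e0 : Real.sign (u0m lam2 - u0) * (f0 (u0m lam2) - f0 u0) = lam2 - f0 u0 := by
          rw [Real.sign_of_pos (by linarith), hz0.2]; ring
        rw [e0] at hdC
        linarith
      · have : f0 u0 = lam2 := by rw [h, hz0.2]
        linarith
      · have : f0 u0 < lam2 := by
          have h2 := hf0dec hz0.1 ⟨le_trans hz0.1.1 (le_of_lt h), hU0.2⟩ h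
          rw [hz0.2] at h2; exact h2
        linarith
    have hq0lam0 : f0 u0 ≤ lam0 := by linarith
    -- fplus0 u0 facts
    have hμnn : 0 ≤ fplus0 u0 := by
      rcases le_total u0 b0 with h | h
      · rw [(hfp0 u0).1 h]; exact hq0nn
      · rw [(hfp0 u0).2 h]; exact le_of_lt hC1
    have hμC : fplus0 u0 ≤ f0 b0 := by
      rcases le_total u0 b0 with h | h
      · rw [(hfp0 u0).1 h]; exact CharGerm.uni_le_peak hf0inc u0 ⟨hU0.1, h⟩
      · rw [(hfp0 u0).2 h]
    -- Step E : first germ inequality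
    have germ1 : lhat1 (fplus0 u0) ≤ fplus1 u1 := by
      rcases le_or_gt b1 u1 with hb1 | hb1
      · rw [(hfp1 u1).2 hb1]
        exact le_trans (Kb _ hμnn).2.1 hlam1f
      · rw [(hfp1 u1).1 (le_of_lt hb1)]
        by_contra hcon
        push_neg at hcon
        rcases le_or_gt (fplus0 u0) lam0 with hμlam | hμlam
        · obtain ⟨hsum, k1, k2, k3, k4⟩ := K (fplus0 u0) hμnn hμlam
          have hz1 := hu1p (lhat1 (fplus0 u0)) ⟨k1, le_trans k2 hlam1f⟩
          have hz2 := hu2p (lhat2 (fplus0 u0)) ⟨k3, le_trans k4 hlam2f⟩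
          have hs1 : u1 < u1p (lhat1 (fplus0 u0)) := by
            by_contra hle
            push_neg at hle
            have := hf1inc.monotoneOn hz1.1 ⟨hU1.1, le_of_lt hb1⟩ hle
            rw [hz1.2] at this; linarith
          have e1 : Real.sign (u1p (lhat1 (fplus0 u0)) - u1) *
              (f1 (u1p (lhat1 (fplus0 u0))) - f1 u1) = lhat1 (fplus0 u0) - f1 u1 := by
            rw [Real.sign_of_pos (by linarith), hz1.2, one_mul]
          rcases le_total u0 b0 with hub | hub
          · -- test against the curve point at p0 = u0
            have hq0μ : f0 u0 = fplus0 u0 := ((hfp0 u0).1 hub).symm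
            have hmemc := hcurvemem u0 ⟨hU0.1, hub⟩ (by rw [hq0μ]; exact hμlam)
            have hdE := hdiss _ hmemc
            simp only [entropyFlux] at hdE
            rw [hq0μ] at hdE
            rw [e1] at hdE
            simp only [sub_self, Real.sign_zero, zero_mul] at hdE
            rcases lt_trichotomy u2 (u2p (lhat2 (fplus0 u0))) with h2 | h2 | h2
            · have hlt : f2 u2 < lhat2 (fplus0 u0) := by
                have := hf2inc ⟨hU2.1, le_trans (le_of_lt h2) hz2.1.2⟩ hz2.1 h2
                rw [hz2.2] at this; exact this
              linarith
            · have : f2 u2 = lhat2 (fplus0 u0) := by rw [h2, hz2.2]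
              linarith
            · have e2 : Real.sign (u2p (lhat2 (fplus0 u0)) - u2) *
                  (f2 (u2p (lhat2 (fplus0 u0))) - f2 u2) = f2 u2 - lhat2 (fplus0 u0) := by
                rw [Real.sign_of_neg (by linarith), hz2.2]; ring
              rw [e2] at hdE
              linarith
          · -- test against the curve point at p0 = b0
            have hq0μ : f0 b0 = fplus0 u0 := ((hfp0 u0).2 hub).symm
            have hq0le : f0 u0 ≤ f0 b0 := by
              rcases eq_or_lt_of_le hub with rfl | hlt
              · exact le_refl _
              · exact le_of_lt (hf0dec ⟨le_refl b0, le_of_lt h0bc⟩ ⟨le_of_lt hlt, hU0.2⟩ hlt)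
            have hmemc := hcurvemem b0 ⟨le_of_lt h0ab, le_refl b0⟩ (by rw [hq0μ]; exact hμlam)
            have hdE := hdiss _ hmemc
            simp only [entropyFlux] at hdE
            rw [hq0μ] at hdE
            rw [e1] at hdE
            have e0 : Real.sign (b0 - u0) * (fplus0 u0 - f0 u0) = f0 u0 - fplus0 u0 := by
              rcases eq_or_lt_of_le hub with rfl | hlt
              · rw [← hq0μ]; simp
              · rw [Real.sign_of_neg (by linarith)]; ring
            rw [e0] at hdE
            rcases lt_trichotomy u2 (u2p (lhat2 (fplus0 u0))) with h2 | h2 | h2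
            · have hlt : f2 u2 < lhat2 (fplus0 u0) := by
                have := hf2inc ⟨hU2.1, le_trans (le_of_lt h2) hz2.1.2⟩ hz2.1 h2
                rw [hz2.2] at this; exact this
              have e2 : Real.sign (u2p (lhat2 (fplus0 u0)) - u2) *
                  (f2 (u2p (lhat2 (fplus0 u0))) - f2 u2) = lhat2 (fplus0 u0) - f2 u2 := by
                rw [Real.sign_of_pos (by linarith), hz2.2, one_mul]
              rw [e2] at hdE
              rw [← hq0μ] at hdE hsum
              linarith
            · have h2' : f2 u2 = lhat2 (fplus0 u0) := by rw [h2, hz2.2]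
              have e2 : Real.sign (u2p (lhat2 (fplus0 u0)) - u2) *
                  (f2 (u2p (lhat2 (fplus0 u0))) - f2 u2) = 0 := by
                rw [h2]; simp
              rw [e2] at hdE
              linarith
            · have e2 : Real.sign (u2p (lhat2 (fplus0 u0)) - u2) *
                  (f2 (u2p (lhat2 (fplus0 u0))) - f2 u2) = f2 u2 - lhat2 (fplus0 u0) := by
                rw [Real.sign_of_neg (by linarith), hz2.2]; ring
              rw [e2] at hdE
              linarith
        · -- fplus0 u0 > lam0
          have hlhat1 : lhat1 (fplus0 u0) = lam1 := (Kab _ hμlam).1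
          rw [hlhat1] at hcon
          obtain ⟨p0, hp0mem, hp0val⟩ : ∃ p0 ∈ Set.Icc a0 b0, f0 p0 = lam0 := by
            have hcont : ContinuousOn f0 (Set.Icc a0 b0) :=
              (hf0reg.continuousOn).mono (Set.Icc_subset_Icc_right (le_of_lt h0bc))
            have hmem : lam0 ∈ Set.Icc (f0 a0) (f0 b0) := by
              rw [hf0a]; exact ⟨hlam00, hlam0C⟩
            obtain ⟨p0, hp0, hval⟩ := intermediate_value_Icc (le_of_lt h0ab) hcont hmem
            exact ⟨p0, hp0, hval⟩
          have hmemc := hcurvemem p0 hp0mem (le_of_eq hp0val)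
          have hdE := hdiss _ hmemc
          simp only [entropyFlux] at hdE
          rw [hp0val, Klam0.1, Klam0.2] at hdE
          have hz1 := hu1p lam1 ⟨hlam10, hlam1f⟩
          have hz2 := hu2p lam2 ⟨hlam20, hlam2f⟩
          -- u0 > p0
          have hp0u0 : p0 < u0 := by
            have hw : f0 (min u0 b0) = fplus0 u0 := by
              rcases le_total u0 b0 with h | h
              · rw [min_eq_left h, (hfp0 u0).1 h]
              · rw [min_eq_right h, (hfp0 u0).2 h]
            have hminmem : min u0 b0 ∈ Set.Icc a0 b0 :=
              ⟨le_min hU0.1 (le_of_lt h0ab), min_le_right _ _⟩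
            have : p0 < min u0 b0 := by
              by_contra hle
              push_neg at hle
              have := hf0inc.monotoneOn hminmem hp0mem hle
              rw [hw, hp0val] at this
              linarith
            exact lt_of_lt_of_le this (min_le_left _ _)
          have e0 : Real.sign (p0 - u0) * (lam0 - f0 u0) = f0 u0 - lam0 := by
            rw [Real.sign_of_neg (by linarith)]; ring
          rw [e0] at hdE
          have hs1 : u1 < u1p lam1 := by
            by_contra hle
            push_neg at hle
            have := hf1inc.monotoneOn hz1.1 ⟨hU1.1, le_of_lt hb1⟩ hle
            rw [hz1.2] at this; linarith
          have e1 : Real.sign (u1p lam1 - u1) * (f1 (u1p lam1) - f1 u1) = lam1 - f1 u1 := by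
            rw [Real.sign_of_pos (by linarith), hz1.2, one_mul]
          rw [e1] at hdE
          rcases lt_trichotomy u2 (u2p lam2) with h2 | h2 | h2
          · have hlt : f2 u2 < lam2 := by
              have := hf2inc ⟨hU2.1, le_trans (le_of_lt h2) hz2.1.2⟩ hz2.1 h2
              rw [hz2.2] at this; exact this
            have e2 : Real.sign (u2p lam2 - u2) * (f2 (u2p lam2) - f2 u2) = lam2 - f2 u2 := by
              rw [Real.sign_of_pos (by linarith), hz2.2, one_mul]
            rw [e2] at hdE
            linarith
          · have e2 : Real.sign (u2p lam2 - u2) * (f2 (u2p lam2) - f2 u2) = 0 := by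
              rw [h2]; simp
            rw [e2] at hdE
            have : f2 u2 = lam2 := by rw [h2, hz2.2]
            linarith
          · have e2 : Real.sign (u2p lam2 - u2) * (f2 (u2p lam2) - f2 u2) = f2 u2 - lam2 := by
              rw [Real.sign_of_neg (by linarith), hz2.2]; ring
            rw [e2] at hdE
            linarith
    -- Step F : second germ inequality (mirror of Step E)
    have germ2 : lhat2 (fplus0 u0) ≤ fplus2 u2 := by
      rcases le_or_gt b2 u2 with hb2 | hb2
      · rw [(hfp2 u2).2 hb2]
        exact le_trans (Kb _ hμnn).2.2.2 hlam2f
      · rw [(hfp2 u2).1 (le_of_lt hb2)]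
        by_contra hcon
        push_neg at hcon
        rcases le_or_gt (fplus0 u0) lam0 with hμlam | hμlam
        · obtain ⟨hsum, k1, k2, k3, k4⟩ := K (fplus0 u0) hμnn hμlam
          have hz1 := hu1p (lhat1 (fplus0 u0)) ⟨k1, le_trans k2 hlam1f⟩
          have hz2 := hu2p (lhat2 (fplus0 u0)) ⟨k3, le_trans k4 hlam2f⟩
          have hs2 : u2 < u2p (lhat2 (fplus0 u0)) := by
            by_contra hle
            push_neg at hle
            have := hf2inc.monotoneOn hz2.1 ⟨hU2.1, le_of_lt hb2⟩ hle
            rw [hz2.2] at this; linarith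
          have e2 : Real.sign (u2p (lhat2 (fplus0 u0)) - u2) *
              (f2 (u2p (lhat2 (fplus0 u0))) - f2 u2) = lhat2 (fplus0 u0) - f2 u2 := by
            rw [Real.sign_of_pos (by linarith), hz2.2, one_mul]
          rcases le_total u0 b0 with hub | hub
          · have hq0μ : f0 u0 = fplus0 u0 := ((hfp0 u0).1 hub).symm
            have hmemc := hcurvemem u0 ⟨hU0.1, hub⟩ (by rw [hq0μ]; exact hμlam)
            have hdE := hdiss _ hmemc
            simp only [entropyFlux] at hdE
            rw [hq0μ] at hdE
            rw [e2] at hdE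
            simp only [sub_self, Real.sign_zero, zero_mul] at hdE
            rcases lt_trichotomy u1 (u1p (lhat1 (fplus0 u0))) with h1 | h1 | h1
            · have hlt : f1 u1 < lhat1 (fplus0 u0) := by
                have := hf1inc ⟨hU1.1, le_trans (le_of_lt h1) hz1.1.2⟩ hz1.1 h1
                rw [hz1.2] at this; exact this
              linarith
            · have : f1 u1 = lhat1 (fplus0 u0) := by rw [h1, hz1.2]
              linarith
            · have e1 : Real.sign (u1p (lhat1 (fplus0 u0)) - u1) *
                  (f1 (u1p (lhat1 (fplus0 u0))) - f1 u1) = f1 u1 - lhat1 (fplus0 u0) := by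
                rw [Real.sign_of_neg (by linarith), hz1.2]; ring
              rw [e1] at hdE
              linarith
          · have hq0μ : f0 b0 = fplus0 u0 := ((hfp0 u0).2 hub).symm
            have hq0le : f0 u0 ≤ f0 b0 := by
              rcases eq_or_lt_of_le hub with rfl | hlt
              · exact le_refl _
              · exact le_of_lt (hf0dec ⟨le_refl b0, le_of_lt h0bc⟩ ⟨le_of_lt hlt, hU0.2⟩ hlt)
            have hmemc := hcurvemem b0 ⟨le_of_lt h0ab, le_refl b0⟩ (by rw [hq0μ]; exact hμlam)
            have hdE := hdiss _ hmemc
            simp only [entropyFlux] at hdE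
            rw [hq0μ] at hdE
            rw [e2] at hdE
            have e0 : Real.sign (b0 - u0) * (fplus0 u0 - f0 u0) = f0 u0 - fplus0 u0 := by
              rcases eq_or_lt_of_le hub with rfl | hlt
              · rw [← hq0μ]; simp
              · rw [Real.sign_of_neg (by linarith)]; ring
            rw [e0] at hdE
            rcases lt_trichotomy u1 (u1p (lhat1 (fplus0 u0))) with h1 | h1 | h1
            · have hlt : f1 u1 < lhat1 (fplus0 u0) := by
                have := hf1inc ⟨hU1.1, le_trans (le_of_lt h1) hz1.1.2⟩ hz1.1 h1
                rw [hz1.2] at this; exact this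
              have e1 : Real.sign (u1p (lhat1 (fplus0 u0)) - u1) *
                  (f1 (u1p (lhat1 (fplus0 u0))) - f1 u1) = lhat1 (fplus0 u0) - f1 u1 := by
                rw [Real.sign_of_pos (by linarith), hz1.2, one_mul]
              rw [e1] at hdE
              rw [← hq0μ] at hdE hsum
              linarith
            · have h1' : f1 u1 = lhat1 (fplus0 u0) := by rw [h1, hz1.2]
              have e1 : Real.sign (u1p (lhat1 (fplus0 u0)) - u1) *
                  (f1 (u1p (lhat1 (fplus0 u0))) - f1 u1) = 0 := by
                rw [h1]; simp
              rw [e1] at hdE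
              linarith
            · have e1 : Real.sign (u1p (lhat1 (fplus0 u0)) - u1) *
                  (f1 (u1p (lhat1 (fplus0 u0))) - f1 u1) = f1 u1 - lhat1 (fplus0 u0) := by
                rw [Real.sign_of_neg (by linarith), hz1.2]; ring
              rw [e1] at hdE
              linarith
        · have hlhat2 : lhat2 (fplus0 u0) = lam2 := (Kab _ hμlam).2
          rw [hlhat2] at hcon
          obtain ⟨p0, hp0mem, hp0val⟩ : ∃ p0 ∈ Set.Icc a0 b0, f0 p0 = lam0 := by
            have hcont : ContinuousOn f0 (Set.Icc a0 b0) :=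
              (hf0reg.continuousOn).mono (Set.Icc_subset_Icc_right (le_of_lt h0bc))
            have hmem : lam0 ∈ Set.Icc (f0 a0) (f0 b0) := by
              rw [hf0a]; exact ⟨hlam00, hlam0C⟩
            obtain ⟨p0, hp0, hval⟩ := intermediate_value_Icc (le_of_lt h0ab) hcont hmem
            exact ⟨p0, hp0, hval⟩
          have hmemc := hcurvemem p0 hp0mem (le_of_eq hp0val)
          have hdE := hdiss _ hmemc
          simp only [entropyFlux] at hdE
          rw [hp0val, Klam0.1, Klam0.2] at hdE
          have hz1 := hu1p lam1 ⟨hlam10, hlam1f⟩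
          have hz2 := hu2p lam2 ⟨hlam20, hlam2f⟩
          have hp0u0 : p0 < u0 := by
            have hw : f0 (min u0 b0) = fplus0 u0 := by
              rcases le_total u0 b0 with h | h
              · rw [min_eq_left h, (hfp0 u0).1 h]
              · rw [min_eq_right h, (hfp0 u0).2 h]
            have hminmem : min u0 b0 ∈ Set.Icc a0 b0 :=
              ⟨le_min hU0.1 (le_of_lt h0ab), min_le_right _ _⟩
            have : p0 < min u0 b0 := by
              by_contra hle
              push_neg at hle
              have := hf0inc.monotoneOn hminmem hp0mem hle
              rw [hw, hp0val] at this
              linarith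
            exact lt_of_lt_of_le this (min_le_left _ _)
          have e0 : Real.sign (p0 - u0) * (lam0 - f0 u0) = f0 u0 - lam0 := by
            rw [Real.sign_of_neg (by linarith)]; ring
          rw [e0] at hdE
          have hs2 : u2 < u2p lam2 := by
            by_contra hle
            push_neg at hle
            have := hf2inc.monotoneOn hz2.1 ⟨hU2.1, le_of_lt hb2⟩ hle
            rw [hz2.2] at this; linarith
          have e2 : Real.sign (u2p lam2 - u2) * (f2 (u2p lam2) - f2 u2) = lam2 - f2 u2 := by
            rw [Real.sign_of_pos (by linarith), hz2.2, one_mul]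
          rw [e2] at hdE
          rcases lt_trichotomy u1 (u1p lam1) with h1 | h1 | h1
          · have hlt : f1 u1 < lam1 := by
              have := hf1inc ⟨hU1.1, le_trans (le_of_lt h1) hz1.1.2⟩ hz1.1 h1
              rw [hz1.2] at this; exact this
            have e1 : Real.sign (u1p lam1 - u1) * (f1 (u1p lam1) - f1 u1) = lam1 - f1 u1 := by
              rw [Real.sign_of_pos (by linarith), hz1.2, one_mul]
            rw [e1] at hdE
            linarith
          · have e1 : Real.sign (u1p lam1 - u1) * (f1 (u1p lam1) - f1 u1) = 0 := by
              rw [h1]; simp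
            rw [e1] at hdE
            have : f1 u1 = lam1 := by rw [h1, hz1.2]
            linarith
          · have e1 : Real.sign (u1p lam1 - u1) * (f1 (u1p lam1) - f1 u1) = f1 u1 - lam1 := by
              rw [Real.sign_of_neg (by linarith), hz1.2]; ring
            rw [e1] at hdE
            linarith
    exact ⟨hU0, hU1, hU2, ⟨hq0nn, hq0lam0⟩, ⟨hq1nn, hq1lam1⟩, ⟨hq2nn, hq2lam2⟩, hRH, germ1, germ2⟩

end
end
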